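/- arXiv:1503.06365 — 8 statements merged into one kernel-verified Lean document; each statement's English description precedes it below -/
import Mathlib

section
/- If L is a regular language, then UF(L), the set of words in L* having unique factorization into elements of L, is also regular. -/
open Computability

/-- `l` is a factorization of `x` into elements of `L`. -/
def IsFactorization {α : Type*} (L : Language α) (x : List α) (l : List (List α)) : Prop :=
  (∀ w ∈ l, w ∈ L) ∧ l.flatten = x

/-- The set of words of `L∗` having a unique factorization into elements of `L`. -/
def UF {α : Type*} (L : Language α) : Language α :=
  {x | x ∈ L∗ ∧ ∀ l₁ l₂, IsFactorization L x l₁ → IsFactorization L x l₂ → l₁ = l₂}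

namespace UFP

variable {α : Type*} {σ : Type} (M : DFA α σ)

/-! ### Closure properties -/

lemma regular_compl {L : Language α} (h : L.IsRegular) :
    Language.IsRegular {x | x ∉ L} := by
  obtain ⟨σ, _, M, rfl⟩ := h
  exact ⟨σ, ‹_›, ⟨M.step, M.start, M.acceptᶜ⟩, by
    ext x; simp only [DFA.mem_accepts, DFA.eval, DFA.evalFrom, Set.mem_compl_iff]; rfl⟩

lemma regular_inter {L₁ L₂ : Language α} (h₁ : L₁.IsRegular) (h₂ : L₂.IsRegular) :
    Language.IsRegular {x | x ∈ L₁ ∧ x ∈ L₂} := by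
  obtain ⟨σ₁, _, M₁, rfl⟩ := h₁
  obtain ⟨σ₂, _, M₂, rfl⟩ := h₂
  refine ⟨σ₁ × σ₂, inferInstance,
    ⟨fun p a => (M₁.step p.1 a, M₂.step p.2 a), (M₁.start, M₂.start),
      {p | p.1 ∈ M₁.accept ∧ p.2 ∈ M₂.accept}⟩, ?_⟩
  have key : ∀ (x : List α) (s₁ : σ₁) (s₂ : σ₂),
      (DFA.mk (fun p a => (M₁.step p.1 a, M₂.step p.2 a)) (M₁.start, M₂.start)
        {p | p.1 ∈ M₁.accept ∧ p.2 ∈ M₂.accept}).evalFrom (s₁, s₂) x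
        = (M₁.evalFrom s₁ x, M₂.evalFrom s₂ x) := by
    intro x
    induction x with
    | nil => intro s₁ s₂; rfl
    | cons a x ih => intro s₁ s₂; exact ih _ _
  ext x
  simp only [DFA.mem_accepts, DFA.eval, key, Set.mem_setOf_eq]
  rfl

lemma regular_nfa {st : Type} [Fintype st] (N : NFA α st) : N.accepts.IsRegular :=
  ⟨Set st, inferInstance, N.toDFA, N.toDFA_correct⟩

lemma regular_empty : Language.IsRegular (0 : Language α) :=
  ⟨PUnit, inferInstance, ⟨fun _ _ => default, default, ∅⟩, by
    ext x; simp [DFA.mem_accepts, Language.notMem_zero]⟩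

/-! ### One-run bookkeeping -/

/-- the new one-run state after reading `a`, with cut decision `c`. -/
def nxt (p : σ × Bool) (a : α) (c : Bool) : σ × Bool :=
  cond c (M.start, true) (M.step p.1 a, false)

/-- the cut decision `c` is allowed from `p` on `a`. -/
def Allowed (p : σ × Bool) (a : α) (c : Bool) : Prop :=
  c = true → M.step p.1 a ∈ M.accept

/-- update of the factorization-in-progress. -/
def cutPair (c : Bool) (l : List (List α)) (s : List α) (a : α) :
    List (List α) × List α :=
  cond c (l ++ [s ++ [a]], []) (l, s ++ [a])

/-- `(l, s)` is a factorization-in-progress of `x` represented by state `p`. -/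
def Q (x : List α) (l : List (List α)) (s : List α) (p : σ × Bool) : Prop :=
  (∀ w ∈ l, w ∈ M.accepts) ∧ l.flatten ++ s = x ∧ p = (M.evalFrom M.start s, s.isEmpty)

variable {M}

lemma cutPair_inj {c₁ c₂ : Bool} {l₁ l₂ : List (List α)} {s₁ s₂ : List α} {a : α} :
    cutPair c₁ l₁ s₁ a = cutPair c₂ l₂ s₂ a ↔ c₁ = c₂ ∧ l₁ = l₂ ∧ s₁ = s₂ := by
  constructor
  · intro h
    cases c₁ <;> cases c₂ <;>
        simp only [cutPair, cond_true, cond_false, Prod.ext_iff] at h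
    · exact ⟨rfl, h.1, List.append_cancel_right h.2⟩
    · exact absurd h.2.symm (by simp)
    · exact absurd h.2 (by simp)
    · obtain ⟨h1, h2⟩ := List.append_inj' h.1 rfl
      simp only [List.cons.injEq, and_true] at h2
      exact ⟨rfl, h1, List.append_cancel_right h2⟩
  · rintro ⟨rfl, rfl, rfl⟩; rfl

lemma strip {u v x : List α} {a : α} (h : u ++ v = x ++ [a]) (hv : v ≠ []) :
    ∃ v', v = v' ++ [a] ∧ u ++ v' = x := by
  obtain ⟨v', b, rfl⟩ := (List.eq_nil_or_concat v).resolve_left hv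
  rw [List.concat_eq_append, ← List.append_assoc] at h
  obtain ⟨h1, h2⟩ := List.append_inj' h rfl
  simp only [List.cons.injEq] at h2
  exact ⟨v', by simp [h2.1], h1⟩

lemma Q_nil (h0 : [] ∉ M.accepts) {l : List (List α)} {s : List α} {p : σ × Bool} :
    Q M [] l s p ↔ l = [] ∧ s = [] ∧ p = (M.start, true) := by
  constructor
  · rintro ⟨h1, h2, h3⟩
    obtain ⟨hf, hs⟩ := List.append_eq_nil_iff.mp h2
    have hl : l = [] := by
      rcases l with _ | ⟨w, l⟩
      · rfl
      · exfalso
        have : w = [] := List.flatten_eq_nil_iff.mp hf w (by simp)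
        exact h0 (this ▸ h1 w (by simp))
    subst hl hs
    exact ⟨rfl, rfl, by simpa using h3⟩
  · rintro ⟨rfl, rfl, rfl⟩
    exact ⟨by simp, rfl, rfl⟩

lemma Q_step {x : List α} {l : List (List α)} {s : List α} {p : σ × Bool} {a : α} {c : Bool}
    (hQ : Q M x l s p) (hc : Allowed M p a c) :
    Q M (x ++ [a]) (cutPair c l s a).1 (cutPair c l s a).2 (nxt M p a c) := by
  obtain ⟨h1, h2, h3⟩ := hQ
  have hp1 : p.1 = M.evalFrom M.start s := by rw [h3]
  cases c with
  | false =>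
    refine ⟨h1, ?_, ?_⟩
    · show l.flatten ++ (s ++ [a]) = x ++ [a]
      rw [← List.append_assoc, h2]
    · show (M.step p.1 a, false) = (M.evalFrom M.start (s ++ [a]), (s ++ [a]).isEmpty)
      simp [hp1, DFA.evalFrom_append_singleton]
  | true =>
    have hmem : s ++ [a] ∈ M.accepts := by
      show M.evalFrom M.start (s ++ [a]) ∈ M.accept
      rw [DFA.evalFrom_append_singleton, ← hp1]; exact hc rfl
    refine ⟨?_, ?_, ?_⟩
    · intro w hw
      rcases (by simpa [cutPair] using hw : w ∈ l ∨ w = s ++ [a]) with hw | rfl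
      · exact h1 w hw
      · exact hmem
    · show (l ++ [s ++ [a]]).flatten ++ [] = x ++ [a]
      simp [← h2]
    · rfl

lemma Q_step_rev (h0 : [] ∉ M.accepts) {x : List α} {L : List (List α)} {S : List α}
    {P : σ × Bool} {a : α} (hQ : Q M (x ++ [a]) L S P) :
    ∃ c l s p, Q M x l s p ∧ Allowed M p a c ∧ nxt M p a c = P ∧ cutPair c l s a = (L, S) := by
  obtain ⟨h1, h2, h3⟩ := hQ
  by_cases hS : S = []
  · subst hS
    have hfl : L.flatten = x ++ [a] := by simpa using h2
    have hL : L ≠ [] := by rintro rfl; simp at hfl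
    obtain ⟨L', t, rfl⟩ := (List.eq_nil_or_concat L).resolve_left hL
    rw [List.concat_eq_append] at *
    have ht : t ∈ M.accepts := h1 t (by simp)
    have htne : t ≠ [] := by rintro rfl; exact h0 ht
    have hfl' : L'.flatten ++ t = x ++ [a] := by simpa using hfl
    obtain ⟨t', rfl, hx⟩ := strip hfl' htne
    refine ⟨true, L', t', (M.evalFrom M.start t', t'.isEmpty), ?_, ?_, ?_, ?_⟩
    · exact ⟨fun w hw => h1 w (by simp [hw]), hx, rfl⟩
    · intro _
      rw [← DFA.evalFrom_append_singleton]
      exact ht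
    · simp [nxt, h3]
    · simp [cutPair]
  · obtain ⟨s', rfl, hx⟩ := strip h2 hS
    refine ⟨false, L, s', (M.evalFrom M.start s', s'.isEmpty), ?_, ?_, ?_, ?_⟩
    · exact ⟨h1, hx, rfl⟩
    · simp [Allowed]
    · simp [nxt, h3, DFA.evalFrom_append_singleton]
    · rfl

/-! ### The two NFAs -/

variable (M)

/-- NFA recognizing `M.accepts∗` (when `[] ∉ M.accepts`). -/
def starNFA : NFA α (σ × Bool) where
  step p a := {q | ∃ c, Allowed M p a c ∧ q = nxt M p a c}
  start := {(M.start, true)}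
  accept := {p | p.2 = true}

/-- NFA recognizing words with two distinct factorizations (when `[] ∉ M.accepts`). -/
def ambNFA : NFA α ((σ × Bool) × (σ × Bool) × Bool) where
  step p a := {q | ∃ c₁ c₂, Allowed M p.1 a c₁ ∧ Allowed M p.2.1 a c₂ ∧
      q = (nxt M p.1 a c₁, nxt M p.2.1 a c₂, p.2.2 || (c₁ != c₂))}
  start := {((M.start, true), (M.start, true), false)}
  accept := {p | p.1.2 = true ∧ p.2.1.2 = true ∧ p.2.2 = true}

variable {M}

lemma star_eval (h0 : [] ∉ M.accepts) (x : List α) (p : σ × Bool) :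
    p ∈ (starNFA M).eval x ↔ ∃ l s, Q M x l s p := by
  induction x using List.reverseRecOn generalizing p with
  | nil =>
    show p ∈ (starNFA M).start ↔ _
    constructor
    · rintro rfl
      exact ⟨[], [], (Q_nil h0).mpr ⟨rfl, rfl, rfl⟩⟩
    · rintro ⟨l, s, hQ⟩
      obtain ⟨-, -, rfl⟩ := (Q_nil h0).mp hQ
      rfl
  | append_singleton x a ih =>
    rw [NFA.eval_append_singleton, NFA.mem_stepSet]
    constructor
    · rintro ⟨t, ht, c, hc, rfl⟩
      obtain ⟨l, s, hQ⟩ := (ih t).mp ht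
      exact ⟨_, _, Q_step hQ hc⟩
    · rintro ⟨L, S, hQ⟩
      obtain ⟨c, l, s, t, hQ', hA, hn, -⟩ := Q_step_rev h0 hQ
      exact ⟨t, (ih t).mpr ⟨l, s, hQ'⟩, c, hA, hn.symm⟩

lemma star_accepts (h0 : [] ∉ M.accepts) : (starNFA M).accepts = M.accepts∗ := by
  ext x
  rw [NFA.mem_accepts]
  constructor
  · rintro ⟨p, hp, hev⟩
    obtain ⟨l, s, h1, h2, h3⟩ := (star_eval h0 x p).mp hev
    have hs : s = [] := by
      have hb : s.isEmpty = true := by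
        have : p.2 = true := hp
        rw [h3] at this; exact this
      simpa using hb
    subst hs
    exact Language.mem_kstar.mpr ⟨l, by simpa using h2.symm, h1⟩
  · intro hx
    obtain ⟨l, rfl, hl⟩ := Language.mem_kstar.mp hx
    exact ⟨(M.start, true), rfl, (star_eval h0 _ _).mpr ⟨l, [], hl, by simp, by simp⟩⟩

variable (M) in
/-- the invariant for the two-run NFA. -/
def RepD (x : List α) (st : (σ × Bool) × (σ × Bool) × Bool) : Prop :=
  ∃ l₁ s₁ l₂ s₂, Q M x l₁ s₁ st.1 ∧ Q M x l₂ s₂ st.2.1 ∧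
    (st.2.2 = true ↔ (l₁, s₁) ≠ (l₂, s₂))

lemma amb_eval (h0 : [] ∉ M.accepts) (x : List α) (st : (σ × Bool) × (σ × Bool) × Bool) :
    st ∈ (ambNFA M).eval x ↔ RepD M x st := by
  induction x using List.reverseRecOn generalizing st with
  | nil =>
    show st ∈ (ambNFA M).start ↔ _
    constructor
    · rintro rfl
      exact ⟨[], [], [], [], (Q_nil h0).mpr ⟨rfl, rfl, rfl⟩, (Q_nil h0).mpr ⟨rfl, rfl, rfl⟩,
        by simp⟩
    · rintro ⟨l₁, s₁, l₂, s₂, hQ1, hQ2, hd⟩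
      obtain ⟨rfl, rfl, h1⟩ := (Q_nil h0).mp hQ1
      obtain ⟨rfl, rfl, h2⟩ := (Q_nil h0).mp hQ2
      have h3 : st.2.2 = false := by
        rcases Bool.eq_false_or_eq_true st.2.2 with h | h
        · exact absurd rfl (hd.mp h)
        · exact h
      exact Prod.ext_iff.mpr ⟨h1, Prod.ext_iff.mpr ⟨h2, h3⟩⟩
  | append_singleton x a ih =>
    rw [NFA.eval_append_singleton, NFA.mem_stepSet]
    constructor
    · rintro ⟨t, ht, c₁, c₂, hA1, hA2, rfl⟩
      obtain ⟨l₁, s₁, l₂, s₂, hQ1, hQ2, hd⟩ := (ih t).mp ht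
      refine ⟨(cutPair c₁ l₁ s₁ a).1, (cutPair c₁ l₁ s₁ a).2,
        (cutPair c₂ l₂ s₂ a).1, (cutPair c₂ l₂ s₂ a).2,
        Q_step hQ1 hA1, Q_step hQ2 hA2, ?_⟩
      show (t.2.2 || (c₁ != c₂)) = true ↔ _
      rw [Prod.mk.eta, Prod.mk.eta, ne_eq, cutPair_inj]
      rw [Bool.or_eq_true, bne_iff_ne, hd]
      simp only [ne_eq, Prod.mk.injEq, not_and]
      tauto
    · rintro ⟨L₁, S₁, L₂, S₂, hQ1, hQ2, hd⟩
      obtain ⟨c₁, l₁, s₁, p₁, hQ1', hA1, hn1, hcp1⟩ := Q_step_rev h0 hQ1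
      obtain ⟨c₂, l₂, s₂, p₂, hQ2', hA2, hn2, hcp2⟩ := Q_step_rev h0 hQ2
      classical
      refine ⟨(p₁, p₂, decide ((l₁, s₁) ≠ (l₂, s₂))),
        (ih _).mpr ⟨l₁, s₁, l₂, s₂, hQ1', hQ2', by simp; tauto⟩, c₁, c₂, hA1, hA2, ?_⟩
      have h3 : st.2.2 = (decide ((l₁, s₁) ≠ (l₂, s₂)) || (c₁ != c₂)) := by
        rw [Bool.eq_iff_iff, hd, Bool.or_eq_true, bne_iff_ne, decide_eq_true_eq]
        have hiff : (L₁, S₁) = (L₂, S₂) ↔ c₁ = c₂ ∧ l₁ = l₂ ∧ s₁ = s₂ := by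
          rw [← hcp1, ← hcp2, cutPair_inj]
        rw [ne_eq, hiff]
        simp only [ne_eq, Prod.mk.injEq, not_and]
        tauto
      rw [hn1, hn2, ← h3]

lemma amb_accepts (h0 : [] ∉ M.accepts) :
    (ambNFA M).accepts
      = {x | ∃ l₁ l₂, IsFactorization M.accepts x l₁ ∧ IsFactorization M.accepts x l₂ ∧
          l₁ ≠ l₂} := by
  ext x
  rw [NFA.mem_accepts]
  constructor
  · rintro ⟨st, hst, hev⟩
    obtain ⟨hb1, hb2, hb3⟩ := hst
    obtain ⟨l₁, s₁, l₂, s₂, ⟨hm1, hf1, he1⟩, ⟨hm2, hf2, he2⟩, hd⟩ := (amb_eval h0 x st).mp hev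
    have hs1 : s₁ = [] := by
      have : st.1.2 = s₁.isEmpty := by rw [he1]
      simpa using (this ▸ hb1 : s₁.isEmpty = true)
    have hs2 : s₂ = [] := by
      have : st.2.1.2 = s₂.isEmpty := by rw [he2]
      simpa using (this ▸ hb2 : s₂.isEmpty = true)
    subst hs1 hs2
    refine ⟨l₁, l₂, ⟨hm1, by simpa using hf1⟩, ⟨hm2, by simpa using hf2⟩, ?_⟩
    intro hne
    exact (hd.mp hb3) (by rw [hne])
  · rintro ⟨l₁, l₂, ⟨hm1, hf1⟩, ⟨hm2, hf2⟩, hne⟩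
    refine ⟨((M.start, true), (M.start, true), true), ⟨rfl, rfl, rfl⟩, ?_⟩
    refine (amb_eval h0 x _).mpr ⟨l₁, [], l₂, [], ⟨hm1, by simpa using hf1, rfl⟩,
      ⟨hm2, by simpa using hf2, rfl⟩, ?_⟩
    simpa using hne

end UFP

/-- If `L` is regular, then so is `UF L`. -/
theorem stmt1 {α : Type*} (L : Language α) (h : L.IsRegular) :
    (UF L).IsRegular := by
  obtain ⟨σ, _, M, rfl⟩ := h
  by_cases h0 : [] ∈ M.accepts
  · have : UF M.accepts = 0 := by
      ext x
      simp only [Language.notMem_zero, iff_false]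
      rintro ⟨hx, huniq⟩
      obtain ⟨l, rfl, hl⟩ := Language.mem_kstar.mp hx
      have h1 : IsFactorization M.accepts l.flatten l := ⟨hl, rfl⟩
      have h2 : IsFactorization M.accepts l.flatten (l ++ [[]]) :=
        ⟨by intro w hw; rcases List.mem_append.mp hw with hw | hw
            · exact hl w hw
            · simpa using (List.mem_singleton.mp hw) ▸ h0, by simp⟩
      have := huniq l (l ++ [[]]) h1 h2
      simp at this
    rw [this]
    exact UFP.regular_empty
  · have key : UF M.accepts
        = {x | x ∈ (UFP.starNFA M).accepts ∧ x ∈ {y | y ∉ (UFP.ambNFA M).accepts}} := by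
      ext x
      change (x ∈ M.accepts∗ ∧ ∀ l₁ l₂, IsFactorization M.accepts x l₁ → IsFactorization M.accepts x l₂ → l₁ = l₂) ↔ (x ∈ (UFP.starNFA M).accepts ∧ x ∉ (UFP.ambNFA M).accepts)
      rw [UFP.star_accepts h0, UFP.amb_accepts h0]
      constructor
      · rintro ⟨hx, huniq⟩
        refine ⟨hx, ?_⟩
        rintro ⟨l₁, l₂, hf1, hf2, hne⟩
        exact hne (huniq l₁ l₂ hf1 hf2)
      · rintro ⟨hx, hamb⟩
        refine ⟨hx, fun l₁ l₂ hf1 hf2 => ?_⟩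
        by_contra hne
        exact hamb ⟨l₁, l₂, hf1, hf2, hne⟩
    rw [key]
    exact UFP.regular_inter (UFP.regular_nfa _) (UFP.regular_compl (UFP.regular_nfa _))
end

section
/- If L is a language accepted by a DFA with n states and L is not a code, then there exists a word x ∈ L* admitting two distinct factorizations into elements of L with |x| < n² + n. -/
/-!
Let `x` be a shortest word with two distinct factorizations. If `ε ∈ L` then `x = ε`. Otherwise
the two factorizations start with factors `w`, `w'` of different lengths, say `|w| < |w'|`.
At each position `i` of `x`, record for each factorization the state that `M` reaches on the part
of the factor containing `i` read before `i`. If these pairs of states agree at positions `i < j`,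
excising `x[i, j)` from both factorizations yields a shorter word with two factorizations, which
are distinct because their first factors still differ. For `i ≤ |w|` both states are
`δ(q₀, x[0, i))`, so there are at most `n` such positions and `|w| < n`; beyond `|w|` there are
`n²` pairs, so `|x| - |w| ≤ n²`.
-/

open Computability

/-- `L` is a code: every word has at most one factorization into elements of `L`. -/
def IsCode {α : Type*} (L : Language α) : Prop :=
  ∀ x l₁ l₂, IsFactorization L x l₁ → IsFactorization L x l₂ → l₁ = l₂

theorem Finset.card_le_card_univ_of_forall_lt_ne {ι β : Type*} [LinearOrder ι] [Fintype β]
    {s : Finset ι} (f : ι → β) (h : ∀ i ∈ s, ∀ j ∈ s, i < j → f i ≠ f j) :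
    s.card ≤ Fintype.card β := by
  refine Finset.card_le_card_of_injOn f (fun _ _ => Finset.mem_coe.2 (Finset.mem_univ _)) ?_
  intro i hi j hj hij
  rcases lt_trichotomy i j with hlt | heq | hgt
  · exact absurd hij (h i hi j hj hlt)
  · exact heq
  · exact absurd hij.symm (h j hj i hi hgt)

theorem DFA.append_mem_accepts_of_eval_eq {α σ : Type*} (M : DFA α σ) {u u' v : List α}
    (h : M.eval u = M.eval u') (hv : u' ++ v ∈ M.accepts) : u ++ v ∈ M.accepts := by
  simp only [DFA.mem_accepts, DFA.eval, DFA.evalFrom_of_append] at h hv ⊢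
  rwa [h]

namespace List

variable {α : Type*}

/-- Cutting `l.flatten` at position `i` splits `l` as
`l.factorsBefore i ++ (l.headAt i ++ l.tailAt i) :: l.factorsAfter i`, the cut factor being the
first one that ends at or after position `i`. -/
def factorsBefore : List (List α) → ℕ → List (List α)
  | [], _ => []
  | w :: l, i => if i ≤ w.length then [] else w :: factorsBefore l (i - w.length)

def headAt : List (List α) → ℕ → List α
  | [], _ => []
  | w :: l, i => if i ≤ w.length then w.take i else headAt l (i - w.length)

def tailAt : List (List α) → ℕ → List α
  | [], _ => []
  | w :: l, i => if i ≤ w.length then w.drop i else tailAt l (i - w.length)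

def factorsAfter : List (List α) → ℕ → List (List α)
  | [], _ => []
  | w :: l, i => if i ≤ w.length then l else factorsAfter l (i - w.length)

def excise (l : List (List α)) (i j : ℕ) : List (List α) :=
  l.factorsBefore i ++ (l.headAt i ++ l.tailAt j) :: l.factorsAfter j

theorem eq_factorsBefore_append_cons_factorsAfter {l : List (List α)} (hl : l ≠ []) {i : ℕ}
    (hi : i ≤ l.flatten.length) :
    l = l.factorsBefore i ++ (l.headAt i ++ l.tailAt i) :: l.factorsAfter i := by
  induction l generalizing i with
  | nil => contradiction
  | cons w t ih =>
    by_cases hw : i ≤ w.length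
    · simp [factorsBefore, headAt, tailAt, factorsAfter, hw]
    · simp only [flatten_cons, length_append] at hi
      have ht : t ≠ [] := by rintro rfl; simp at hi; omega
      simp only [factorsBefore, headAt, tailAt, factorsAfter, if_neg hw, cons_append]
      rw [← ih ht (by omega)]

theorem flatten_factorsBefore_append_headAt (l : List (List α)) (i : ℕ) :
    (l.factorsBefore i).flatten ++ l.headAt i = l.flatten.take i := by
  induction l generalizing i with
  | nil => simp [factorsBefore, headAt]
  | cons w t ih =>
    by_cases hw : i ≤ w.length
    · simp [factorsBefore, headAt, hw, take_append, Nat.sub_eq_zero_of_le hw]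
    · simp only [factorsBefore, headAt, if_neg hw, flatten_cons, take_append, append_assoc, ih,
        take_of_length_le (le_of_not_ge hw)]

theorem tailAt_append_flatten_factorsAfter (l : List (List α)) (i : ℕ) :
    l.tailAt i ++ (l.factorsAfter i).flatten = l.flatten.drop i := by
  induction l generalizing i with
  | nil => simp [tailAt, factorsAfter]
  | cons w t ih =>
    by_cases hw : i ≤ w.length
    · simp [tailAt, factorsAfter, hw, drop_append, Nat.sub_eq_zero_of_le hw]
    · simp [tailAt, factorsAfter, hw, drop_append, ih, drop_of_length_le (le_of_not_ge hw)]

theorem flatten_excise (l : List (List α)) (i j : ℕ) :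
    (l.excise i j).flatten = l.flatten.take i ++ l.flatten.drop j := by
  simp [excise, ← flatten_factorsBefore_append_headAt, ← tailAt_append_flatten_factorsAfter]

theorem mem_of_mem_excise {l : List (List α)} (hl : l ≠ []) {i j : ℕ}
    (hi : i ≤ l.flatten.length) (hj : j ≤ l.flatten.length) {v : List α}
    (hv : v ∈ l.excise i j) (hne : v ≠ l.headAt i ++ l.tailAt j) : v ∈ l := by
  rcases mem_append.1 hv with hv | hv
  · rw [eq_factorsBefore_append_cons_factorsAfter hl hi]
    exact mem_append_left _ hv
  · rw [eq_factorsBefore_append_cons_factorsAfter hl hj]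
    exact mem_append_right _ (mem_cons_of_mem _ ((mem_cons.1 hv).resolve_left hne))

theorem headAt_append_tailAt_mem {l : List (List α)} (hl : l ≠ []) {i : ℕ}
    (hi : i ≤ l.flatten.length) : l.headAt i ++ l.tailAt i ∈ l := by
  have h := mem_append_right (l.factorsBefore i)
    (mem_cons_self (a := l.headAt i ++ l.tailAt i) (l := l.factorsAfter i))
  rwa [← eq_factorsBefore_append_cons_factorsAfter hl hi] at h

theorem headAt_cons_of_le {w : List α} {t : List (List α)} {i : ℕ} (hi : i ≤ w.length) :
    (w :: t).headAt i = (w :: t).flatten.take i := by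
  simp [headAt, hi, take_append_of_le_length hi]

theorem excise_cons_of_le {w : List α} {t : List (List α)} {i : ℕ} (j : ℕ) (hi : i ≤ w.length) :
    (w :: t).excise i j = (w.take i ++ (w :: t).tailAt j) :: (w :: t).factorsAfter j := by
  simp [excise, factorsBefore, headAt, hi]

theorem excise_cons_of_le_of_le {w : List α} {t : List (List α)} {i j : ℕ} (hij : i ≤ j)
    (hj : j ≤ w.length) : (w :: t).excise i j = (w.take i ++ w.drop j) :: t := by
  simp [excise_cons_of_le j (hij.trans hj), tailAt, factorsAfter, hj]

theorem excise_cons_of_lt {w : List α} {t : List (List α)} {i j : ℕ} (hi : w.length < i)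
    (hij : i ≤ j) : (w :: t).excise i j = w :: t.excise (i - w.length) (j - w.length) := by
  simp [excise, factorsBefore, headAt, tailAt, factorsAfter, not_le.2 hi,
    not_le.2 (hi.trans_le hij)]

end List

section

variable {α : Type*}

def IsAmbiguous (L : Language α) (x : List α) : Prop :=
  ∃ l₁ l₂, IsFactorization L x l₁ ∧ IsFactorization L x l₂ ∧ l₁ ≠ l₂

def IsShortestAmbiguous (L : Language α) (x : List α) : Prop :=
  IsAmbiguous L x ∧ ∀ y, IsAmbiguous L y → x.length ≤ y.length

theorem exists_isShortestAmbiguous {L : Language α} (h : ¬ IsCode L) :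
    ∃ x, IsShortestAmbiguous L x := by
  have hamb : {x | IsAmbiguous L x}.Nonempty := by
    simpa [IsCode, IsAmbiguous, Set.Nonempty] using h
  obtain ⟨x, hx, hmin⟩ := (InvImage.wf List.length wellFounded_lt).has_min _ hamb
  exact ⟨x, hx, fun y hy => not_lt.1 (hmin y hy)⟩

theorem isAmbiguous_nil {L : Language α} (h : [] ∈ L) : IsAmbiguous L [] :=
  ⟨[], [[]], ⟨by simp, rfl⟩, ⟨by simpa using h, rfl⟩, by simp⟩

theorem IsFactorization.eq_nil_iff {L : Language α} {x : List α} {l : List (List α)}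
    (hnil : [] ∉ L) (h : IsFactorization L x l) : l = [] ↔ x = [] := by
  refine ⟨fun hl => by rw [← h.2, hl, List.flatten_nil], fun hx => ?_⟩
  refine List.eq_nil_iff_forall_not_mem.2 fun w hw => hnil ?_
  rw [← List.flatten_eq_nil_iff.1 (h.2.trans hx) w hw]
  exact h.1 w hw

/-- First factors of equal length would coincide and could be removed, leaving a shorter
ambiguous word. -/
theorem IsShortestAmbiguous.exists_cons_cons {L : Language α} {x : List α}
    (hx : IsShortestAmbiguous L x) (hnil : [] ∉ L) :
    ∃ w t₁ w' t₂, IsFactorization L x (w :: t₁) ∧ IsFactorization L x (w' :: t₂) ∧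
      w.length < w'.length := by
  obtain ⟨⟨l₁, l₂, h₁, h₂, hne⟩, hmin⟩ := hx
  rcases l₁ with _ | ⟨w, t₁⟩
  · exact absurd ((h₂.eq_nil_iff hnil).2 ((h₁.eq_nil_iff hnil).1 rfl)).symm hne
  rcases l₂ with _ | ⟨w', t₂⟩
  · exact absurd ((h₁.eq_nil_iff hnil).2 ((h₂.eq_nil_iff hnil).1 rfl)) hne
  have hlen : w.length ≠ w'.length := by
    intro hlen
    obtain ⟨rfl, hflat⟩ := List.append_inj (h₁.2.trans h₂.2.symm) hlen
    have hamb : IsAmbiguous L t₁.flatten :=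
      ⟨t₁, t₂, ⟨fun v hv => h₁.1 v (List.mem_cons_of_mem _ hv), rfl⟩,
        ⟨fun v hv => h₂.1 v (List.mem_cons_of_mem _ hv), hflat.symm⟩, fun h => hne (h ▸ rfl)⟩
    have hw : w ≠ [] := fun hw => hnil (hw ▸ h₁.1 w List.mem_cons_self)
    have hx : x.length = w.length + t₁.flatten.length := by rw [← h₁.2]; simp
    have := hmin _ hamb
    have := List.length_pos_iff.2 hw
    omega
  rcases Nat.lt_or_gt_of_ne hlen with hlt | hgt
  · exact ⟨w, t₁, w', t₂, h₁, h₂, hlt⟩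
  · exact ⟨w', t₂, w, t₁, h₂, h₁, hgt⟩

variable {σ : Type*} {M : DFA α σ}

theorem IsFactorization.excise {x : List α} {l : List (List α)}
    (h : IsFactorization M.accepts x l) (hl : l ≠ []) {i j : ℕ} (hi : i ≤ x.length)
    (hj : j ≤ x.length) (hs : M.eval (l.headAt i) = M.eval (l.headAt j)) :
    IsFactorization M.accepts (x.take i ++ x.drop j) (l.excise i j) := by
  obtain ⟨hmem, rfl⟩ := h
  refine ⟨fun v hv => ?_, l.flatten_excise i j⟩
  by_cases hv' : v = l.headAt i ++ l.tailAt j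
  · exact hv' ▸ M.append_mem_accepts_of_eval_eq hs
      (hmem _ (List.headAt_append_tailAt_mem hl hj))
  · exact hmem v (List.mem_of_mem_excise hl hi hj hv hv')

theorem IsShortestAmbiguous.excise_eq_excise {x : List α} {l₁ l₂ : List (List α)}
    (hx : IsShortestAmbiguous M.accepts x)
    (h₁ : IsFactorization M.accepts x l₁) (h₂ : IsFactorization M.accepts x l₂)
    (hl₁ : l₁ ≠ []) (hl₂ : l₂ ≠ []) {i j : ℕ} (hij : i < j) (hj : j ≤ x.length)
    (hs₁ : M.eval (l₁.headAt i) = M.eval (l₁.headAt j))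
    (hs₂ : M.eval (l₂.headAt i) = M.eval (l₂.headAt j)) :
    l₁.excise i j = l₂.excise i j := by
  by_contra hne
  have := hx.2 _ ⟨_, _, h₁.excise hl₁ (by omega) hj hs₁, h₂.excise hl₂ (by omega) hj hs₂, hne⟩
  simp only [List.length_append, List.length_take, List.length_drop] at this
  omega

variable [Fintype σ]

theorem IsShortestAmbiguous.length_lt_card {x w w' : List α} {t₁ t₂ : List (List α)}
    (hx : IsShortestAmbiguous M.accepts x)
    (h₁ : IsFactorization M.accepts x (w :: t₁)) (h₂ : IsFactorization M.accepts x (w' :: t₂))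
    (hw : w.length < w'.length) : w.length < Fintype.card σ := by
  have hw'x : w'.length ≤ x.length := by rw [← h₂.2]; simp
  have hne : ∀ i ∈ Finset.range (w.length + 1), ∀ j ∈ Finset.range (w.length + 1), i < j →
      M.eval (x.take i) ≠ M.eval (x.take j) := by
    intro i _ j hj hij hs
    rw [Finset.mem_range] at hj
    have heq := hx.excise_eq_excise h₁ h₂ (List.cons_ne_nil _ _) (List.cons_ne_nil _ _) hij
      (by omega)
      (by rwa [List.headAt_cons_of_le (by omega), List.headAt_cons_of_le (by omega), h₁.2])
      (by rwa [List.headAt_cons_of_le (by omega), List.headAt_cons_of_le (by omega), h₂.2])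
    rw [List.excise_cons_of_le_of_le hij.le (by omega),
      List.excise_cons_of_le_of_le hij.le (by omega), List.cons_eq_cons] at heq
    have := congrArg List.length heq.1
    simp only [List.length_append, List.length_take, List.length_drop] at this
    omega
  simpa using Finset.card_le_card_univ_of_forall_lt_ne _ hne

theorem IsShortestAmbiguous.length_le_add_card_sq {x w w' : List α} {t₁ t₂ : List (List α)}
    (hx : IsShortestAmbiguous M.accepts x)
    (h₁ : IsFactorization M.accepts x (w :: t₁)) (h₂ : IsFactorization M.accepts x (w' :: t₂))
    (hw : w.length < w'.length) : x.length ≤ w.length + Fintype.card σ ^ 2 := by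
  have hne : ∀ i ∈ Finset.Icc (w.length + 1) x.length, ∀ j ∈ Finset.Icc (w.length + 1) x.length,
      i < j → (M.eval ((w :: t₁).headAt i), M.eval ((w' :: t₂).headAt i)) ≠
        (M.eval ((w :: t₁).headAt j), M.eval ((w' :: t₂).headAt j)) := by
    intro i hi j hj hij hs
    rw [Finset.mem_Icc] at hi hj
    have heq := hx.excise_eq_excise h₁ h₂ (List.cons_ne_nil _ _) (List.cons_ne_nil _ _) hij hj.2
      (congrArg Prod.fst hs) (congrArg Prod.snd hs)
    rw [List.excise_cons_of_lt (by omega) hij.le, eq_comm] at heq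
    -- the first factor of the second excised factorization is longer than `w`, or it is `w'`
    by_cases hi' : i ≤ w'.length
    · rw [List.excise_cons_of_le j hi', List.cons_eq_cons] at heq
      have := congrArg List.length heq.1
      simp only [List.length_append, List.length_take] at this
      omega
    · rw [List.excise_cons_of_lt (by omega) hij.le, List.cons_eq_cons] at heq
      exact absurd (congrArg List.length heq.1) (by omega)
  have := Finset.card_le_card_univ_of_forall_lt_ne _ hne
  rw [Nat.card_Icc, Fintype.card_prod, ← sq] at this
  omega

end

/-- If `L` is accepted by a DFA with `n` states and is not a code, then some word of `L∗`
has two distinct factorizations into elements of `L` and length `< n² + n`. -/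
theorem stmt2 {α σ : Type*} [Fintype σ] (M : DFA α σ) (h : ¬ IsCode M.accepts) :
    ∃ x l₁ l₂, IsFactorization M.accepts x l₁ ∧ IsFactorization M.accepts x l₂ ∧
      l₁ ≠ l₂ ∧ x.length < (Fintype.card σ) ^ 2 + Fintype.card σ := by
  obtain ⟨x, hx⟩ := exists_isShortestAmbiguous h
  obtain ⟨l₁, l₂, h₁, h₂, hne⟩ := hx.1
  refine ⟨x, l₁, l₂, h₁, h₂, hne, ?_⟩
  by_cases hnil : [] ∈ M.accepts
  · have hx₀ : x.length ≤ 0 := hx.2 _ (isAmbiguous_nil hnil)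
    have := Fintype.card_pos_iff.2 ⟨M.start⟩
    omega
  · obtain ⟨w, t₁, w', t₂, hw₁, hw₂, hw⟩ := hx.exists_cons_cons hnil
    have := hx.length_lt_card hw₁ hw₂ hw
    have := hx.length_le_add_card_sq hw₁ hw₂ hw
    omega
end

section
/- For every n ≥ 2, the language Lₙ = b(aⁿ)* ∪ (aⁿ⁺¹)*b over the alphabet {a,b} is accepted by a DFA with 2n+5 states, and the shortest word in Lₙ* having two distinct factorizations into elements of Lₙ is b a^{n(n+1)} b, of length n² + n + 2. -/
open Computability

/-- The language `Lₙ = b(aⁿ)* ∪ (aⁿ⁺¹)*b` over the two-letter alphabet `Fin 2`,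
where `a` is encoded as `0` and `b` as `1`. -/
def Lb (n : ℕ) : Language (Fin 2) := show Set (List (Fin 2)) from
  {w | ∃ k, w = 1 :: List.replicate (n * k) 0} ∪
  {w | ∃ k, w = List.replicate ((n + 1) * k) 0 ++ [1]}

namespace Stmt3Aux

open Fin.NatCast Fin.CommRing

set_option linter.unusedSectionVars false

lemma fin2_cases (c : Fin 2) : c = 0 ∨ c = 1 := by revert c; decide

lemma evalFrom_cons_g {σ : Type*} (M : DFA (Fin 2) σ) (s : σ) (c : Fin 2) (t : List (Fin 2)) :
    M.evalFrom s (c :: t) = M.evalFrom (M.step s c) t := rfl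

lemma evalFrom_nil_g {σ : Type*} (M : DFA (Fin 2) σ) (s : σ) :
    M.evalFrom s [] = s := rfl

/-! ### The DFA -/

abbrev Q (n : ℕ) := Unit ⊕ Fin n ⊕ Fin (n + 1) ⊕ Fin 3

variable (n : ℕ) [NeZero n]

def bst (j : Fin n) : Q n := Sum.inr (Sum.inl j)
def ast (j : Fin (n + 1)) : Q n := Sum.inr (Sum.inr (Sum.inl j))
def fst : Q n := Sum.inr (Sum.inr (Sum.inr 0))
def dead : Q n := Sum.inr (Sum.inr (Sum.inr 1))

def M0 : DFA (Fin 2) (Q n) where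
  step q c :=
    match q with
    | Sum.inl _ => if c = 1 then bst n 0 else ast n 1
    | Sum.inr (Sum.inl j) => if c = 1 then dead n else bst n (j + 1)
    | Sum.inr (Sum.inr (Sum.inl j)) =>
        if c = 1 then (if j = 0 then fst n else dead n) else ast n (j + 1)
    | Sum.inr (Sum.inr (Sum.inr _)) => dead n
  start := Sum.inl ()
  accept := {bst n 0, fst n}

lemma accept_def : (M0 n).accept = {bst n 0, fst n} := rfl

lemma start_def : (M0 n).start = Sum.inl () := rfl

lemma step_start_one : (M0 n).step (M0 n).start 1 = bst n 0 := rfl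
lemma step_start_zero : (M0 n).step (M0 n).start 0 = ast n 1 := rfl
lemma step_bst_zero (j : Fin n) : (M0 n).step (bst n j) 0 = bst n (j + 1) := rfl
lemma step_bst_one (j : Fin n) : (M0 n).step (bst n j) 1 = dead n := rfl
lemma step_ast_zero (j : Fin (n + 1)) : (M0 n).step (ast n j) 0 = ast n (j + 1) := rfl
lemma step_ast_one (j : Fin (n + 1)) :
    (M0 n).step (ast n j) 1 = if j = 0 then fst n else dead n := rfl
lemma step_fst (c : Fin 2) : (M0 n).step (fst n) c = dead n := rfl
lemma step_dead (c : Fin 2) : (M0 n).step (dead n) c = dead n := rfl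

lemma eval_dead (w : List (Fin 2)) : (M0 n).evalFrom (dead n) w = dead n := by
  induction w with
  | nil => rfl
  | cons c t ih => rw [evalFrom_cons_g, step_dead]; exact ih

lemma dead_not_accept : dead n ∉ (M0 n).accept := by
  rw [accept_def]
  simp [dead, bst, fst]

lemma eval_bst (m : ℕ) : ∀ (j : Fin n),
    (M0 n).evalFrom (bst n j) (List.replicate m 0) = bst n (j + (m : Fin n)) := by
  induction m with
  | zero => intro j; simp [evalFrom_nil_g]
  | succ m ih =>
    intro j
    rw [List.replicate_succ, evalFrom_cons_g, step_bst_zero, ih]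
    congr 1
    push_cast
    ring

lemma eval_ast (m : ℕ) : ∀ (j : Fin (n + 1)),
    (M0 n).evalFrom (ast n j) (List.replicate m 0) = ast n (j + (m : Fin (n + 1))) := by
  induction m with
  | zero => intro j; simp [evalFrom_nil_g]
  | succ m ih =>
    intro j
    rw [List.replicate_succ, evalFrom_cons_g, step_ast_zero, ih]
    congr 1
    push_cast
    ring

lemma eval_start_zeros (m : ℕ) :
    (M0 n).evalFrom (M0 n).start (List.replicate (m + 1) 0) =
      ast n ((m + 1 : ℕ) : Fin (n + 1)) := by
  rw [List.replicate_succ, evalFrom_cons_g, step_start_zero, eval_ast]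
  congr 1
  push_cast
  ring

lemma eval_fst_accept (u : List (Fin 2)) (h : (M0 n).evalFrom (fst n) u ∈ (M0 n).accept) :
    u = [] := by
  cases u with
  | nil => rfl
  | cons c t =>
    exfalso
    rw [evalFrom_cons_g, step_fst, eval_dead] at h
    exact dead_not_accept n h

lemma eval_bst_accept (u : List (Fin 2)) : ∀ (j : Fin n),
    (M0 n).evalFrom (bst n j) u ∈ (M0 n).accept →
    ∃ m, u = List.replicate m 0 ∧ j + (m : Fin n) = 0 := by
  induction u with
  | nil =>
    intro j h
    refine ⟨0, rfl, ?_⟩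
    rw [evalFrom_nil_g, accept_def] at h
    simp only [Set.mem_insert_iff, Set.mem_singleton_iff, bst, fst] at h
    rcases h with h | h
    · simpa using h
    · simp at h
  | cons c t ih =>
    intro j h
    rcases fin2_cases c with rfl | rfl
    · rw [evalFrom_cons_g, step_bst_zero] at h
      obtain ⟨m, rfl, hm⟩ := ih (j + 1) h
      refine ⟨m + 1, by rw [List.replicate_succ], ?_⟩
      push_cast
      linear_combination hm
    · exfalso
      rw [evalFrom_cons_g, step_bst_one, eval_dead] at h
      exact dead_not_accept n h

lemma word_decomp (w : List (Fin 2)) :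
    (∃ m, w = List.replicate m 0) ∨ ∃ m u, w = List.replicate m 0 ++ 1 :: u := by
  induction w with
  | nil => exact Or.inl ⟨0, rfl⟩
  | cons c t ih =>
    rcases fin2_cases c with rfl | rfl
    · rcases ih with ⟨m, rfl⟩ | ⟨m, u, rfl⟩
      · exact Or.inl ⟨m + 1, by rw [List.replicate_succ]⟩
      · exact Or.inr ⟨m + 1, u, by rw [List.replicate_succ]; rfl⟩
    · exact Or.inr ⟨0, t, rfl⟩

lemma M0_accepts : (M0 n).accepts = Lb n := by
  ext w
  rw [DFA.mem_accepts]
  unfold DFA.eval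
  constructor
  · intro hw
    rcases word_decomp w with ⟨m, rfl⟩ | ⟨m, u, rfl⟩
    · exfalso
      cases m with
      | zero =>
        rw [List.replicate_zero, evalFrom_nil_g, accept_def, start_def] at hw
        simp [bst, fst] at hw
      | succ m =>
        rw [eval_start_zeros, accept_def] at hw
        simp [ast, bst, fst] at hw
    · cases m with
      | zero =>
        simp only [List.replicate_zero, List.nil_append] at hw ⊢
        rw [evalFrom_cons_g, step_start_one] at hw
        obtain ⟨m, rfl, hm⟩ := eval_bst_accept n (u := u) 0 hw
        rw [zero_add, Fin.natCast_eq_zero] at hm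
        obtain ⟨k, rfl⟩ := hm
        exact Or.inl ⟨k, rfl⟩
      | succ m =>
        rw [DFA.evalFrom_of_append, eval_start_zeros, evalFrom_cons_g, step_ast_one] at hw
        by_cases h0 : ((m + 1 : ℕ) : Fin (n + 1)) = 0
        · rw [if_pos h0] at hw
          have := eval_fst_accept n u hw
          subst this
          rw [Fin.natCast_eq_zero] at h0
          obtain ⟨k, hk⟩ := h0
          exact Or.inr ⟨k, by rw [← hk]⟩
        · exfalso
          rw [if_neg h0, eval_dead] at hw
          exact dead_not_accept n hw
  · intro hw
    rcases hw with ⟨k, rfl⟩ | ⟨k, rfl⟩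
    · rw [evalFrom_cons_g, step_start_one, eval_bst, accept_def]
      left
      rw [Fin.natCast_eq_zero.2 ⟨k, rfl⟩, add_zero]
    · cases k with
      | zero =>
        simp only [Nat.mul_zero, List.replicate_zero, List.nil_append]
        rw [show ([1] : List (Fin 2)) = 1 :: [] from rfl, evalFrom_cons_g, step_start_one,
          evalFrom_nil_g, accept_def]
        left
        rfl
      | succ k =>
        obtain ⟨m', hm'⟩ : ∃ m', (n + 1) * (k + 1) = m' + 1 :=
          ⟨(n + 1) * (k + 1) - 1, by
            have h1 : 0 < (n + 1) * (k + 1) := by positivity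
            omega⟩
        rw [hm', DFA.evalFrom_of_append, eval_start_zeros,
          show ([1] : List (Fin 2)) = 1 :: [] from rfl, evalFrom_cons_g, step_ast_one]
        have h0 : ((m' + 1 : ℕ) : Fin (n + 1)) = 0 :=
          Fin.natCast_eq_zero.2 ⟨k + 1, by omega⟩
        rw [if_pos h0, evalFrom_nil_g, accept_def]
        right
        rfl

/-! ### Reindexing a DFA along an equivalence -/

def reindex {σ τ : Type*} (e : σ ≃ τ) (M : DFA (Fin 2) σ) : DFA (Fin 2) τ where
  step s c := e (M.step (e.symm s) c)
  start := e M.start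
  accept := e '' M.accept

lemma reindex_evalFrom {σ τ : Type*} (e : σ ≃ τ) (M : DFA (Fin 2) σ)
    (w : List (Fin 2)) : ∀ (s : σ), (reindex e M).evalFrom (e s) w = e (M.evalFrom s w) := by
  induction w with
  | nil => intro s; rfl
  | cons c t ih =>
    intro s
    rw [evalFrom_cons_g, evalFrom_cons_g]
    have hstep : (reindex e M).step (e s) c = e (M.step s c) := by simp [reindex]
    rw [hstep, ih]

lemma reindex_accepts {σ τ : Type*} (e : σ ≃ τ) (M : DFA (Fin 2) σ) :
    (reindex e M).accepts = M.accepts := by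
  ext w
  rw [DFA.mem_accepts, DFA.mem_accepts]
  unfold DFA.eval
  rw [show (reindex e M).start = e M.start from rfl, reindex_evalFrom]
  rw [show (reindex e M).accept = e '' M.accept from rfl]
  exact (e.injective.mem_set_image)

lemma card_Q : Fintype.card (Q n) = 2 * n + 5 := by
  simp [Q]
  omega

/-! ### Structure of words of `Lb` -/

lemma mem_Lb_shape {w : List (Fin 2)} (hw : w ∈ Lb n) :
    ∃ p r, w = List.replicate p 0 ++ 1 :: List.replicate r 0 ∧
      (n + 1) ∣ p ∧ n ∣ r ∧ (p = 0 ∨ r = 0) := by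
  rcases hw with ⟨k, rfl⟩ | ⟨k, rfl⟩
  · exact ⟨0, n * k, by simp, dvd_zero _, ⟨k, rfl⟩, Or.inl rfl⟩
  · exact ⟨(n + 1) * k, 0, by simp, ⟨k, rfl⟩, dvd_zero _, Or.inr rfl⟩

lemma Lb_ne_nil {w : List (Fin 2)} (hw : w ∈ Lb n) : w ≠ [] := by
  obtain ⟨p, r, rfl, -, -, -⟩ := mem_Lb_shape n hw
  simp

lemma ones_align : ∀ (x y : ℕ) (α β : List (Fin 2)),
    List.replicate x 0 ++ 1 :: α = List.replicate y 0 ++ 1 :: β → x = y ∧ α = β := by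
  intro x
  induction x with
  | zero =>
    intro y α β h
    cases y with
    | zero => simpa using h
    | succ y =>
      exfalso
      rw [List.replicate_succ] at h
      simp only [List.replicate_zero, List.nil_append, List.cons_append,
        List.cons.injEq] at h
      exact absurd h.1 (by decide)
  | succ x ih =>
    intro y α β h
    cases y with
    | zero =>
      exfalso
      rw [List.replicate_succ] at h
      simp only [List.replicate_zero, List.nil_append, List.cons_append,
        List.cons.injEq] at h
      exact absurd h.1 (by decide)
    | succ y =>
      rw [List.replicate_succ, List.replicate_succ, List.cons_append,
        List.cons_append, List.cons.injEq] at h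
      obtain ⟨h1, h2⟩ := ih y α β h.2
      exact ⟨by omega, h2⟩

/-! ### The lower bound -/

lemma core (hn : 2 ≤ n) (w₁ w₂ : List (Fin 2)) (t₁ t₂ : List (List (Fin 2)))
    (h₁ : w₁ ∈ Lb n) (h₂ : w₂ ∈ Lb n)
    (ht₁ : ∀ w ∈ t₁, w ∈ Lb n) (ht₂ : ∀ w ∈ t₂, w ∈ Lb n)
    (heq : w₁ ++ t₁.flatten = w₂ ++ t₂.flatten) (hlt : w₁.length < w₂.length) :
    n ^ 2 + n + 2 ≤ (w₁ ++ t₁.flatten).length := by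
  obtain ⟨p₁, r₁, hw₁, hp₁, hr₁, hor₁⟩ := mem_Lb_shape n h₁
  obtain ⟨p₂, r₂, hw₂, hp₂, hr₂, hor₂⟩ := mem_Lb_shape n h₂
  have hpre₁ : w₁ <+: w₂ ++ t₂.flatten := heq ▸ List.prefix_append w₁ t₁.flatten
  have hpre : w₁ <+: w₂ :=
    List.prefix_of_prefix_length_le hpre₁ (List.prefix_append _ _) (le_of_lt hlt)
  obtain ⟨c, hc⟩ := hpre
  have hcne : c ≠ [] := by
    intro h
    subst h
    rw [List.append_nil] at hc
    rw [hc] at hlt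
    exact lt_irrefl _ hlt
  have key : List.replicate p₂ (0 : Fin 2) ++ 1 :: List.replicate r₂ 0
      = List.replicate p₁ 0 ++ 1 :: (List.replicate r₁ 0 ++ c) := by
    rw [← hw₂, ← hc, hw₁]
    simp [List.append_assoc]
  obtain ⟨hpp, hrr⟩ := ones_align _ _ _ _ key
  have hlenr : r₂ = r₁ + c.length := by
    have h := congrArg List.length hrr
    simpa using h
  have hD : 0 < c.length := List.length_pos_iff.2 hcne
  have hczero : ∀ x ∈ c, x = (0 : Fin 2) := by
    intro x hx
    have hx2 : x ∈ List.replicate r₂ (0 : Fin 2) := by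
      rw [hrr]; exact List.mem_append_right _ hx
    exact List.eq_of_mem_replicate hx2
  have hcrep : c = List.replicate c.length 0 := List.eq_replicate_of_mem hczero
  have hnD : n ∣ c.length := by
    have h1 : c.length = r₂ - r₁ := by omega
    rw [h1]
    exact Nat.dvd_sub hr₂ hr₁
  have hflat : t₁.flatten = c ++ t₂.flatten := by
    have h := heq
    rw [← hc, List.append_assoc] at h
    exact List.append_cancel_left h
  cases t₁ with
  | nil =>
    exfalso
    rw [List.flatten_nil] at hflat
    exact hcne (List.append_eq_nil_iff.mp hflat.symm).1
  | cons u t₁' =>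
    obtain ⟨pu, ru, hu, hpu, -, -⟩ := mem_Lb_shape n (ht₁ u (by simp))
    cases t₂ with
    | nil =>
      exfalso
      rw [List.flatten_nil, List.append_nil] at hflat
      have h1 : (1 : Fin 2) ∈ (u :: t₁').flatten := by
        rw [List.flatten_cons, hu]
        simp
      rw [hflat] at h1
      exact absurd (hczero 1 h1) (by decide)
    | cons v t₂' =>
      obtain ⟨pv, rv, hv, hpv, -, -⟩ := mem_Lb_shape n (ht₂ v (by simp))
      have key2 : List.replicate pu (0 : Fin 2) ++ 1 :: (List.replicate ru 0 ++ t₁'.flatten)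
          = List.replicate (c.length + pv) 0 ++ 1 :: (List.replicate rv 0 ++ t₂'.flatten) := by
        have h := hflat
        rw [List.flatten_cons, List.flatten_cons, hu, hv, hcrep] at h
        rw [List.replicate_add]
        simp only [List.append_assoc, List.cons_append] at h ⊢
        exact h
      obtain ⟨hpueq, -⟩ := ones_align _ _ _ _ key2
      have hdvdD : (n + 1) ∣ c.length := by
        have h1 : (n + 1) ∣ c.length + pv := hpueq ▸ hpu
        simpa using Nat.dvd_sub h1 hpv
      have hmul : n * (n + 1) ∣ c.length :=
        Nat.Coprime.mul_dvd_of_dvd_of_dvd (by simp) hnD hdvdD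
      have hDbig : n * (n + 1) ≤ c.length := Nat.le_of_dvd hD hmul
      have hlen : (w₁ ++ (u :: t₁').flatten).length = (w₂ ++ (v :: t₂').flatten).length :=
        congrArg List.length heq
      rw [hlen]
      have hw₂len : w₂.length = p₂ + 1 + r₂ := by
        rw [hw₂]
        simp only [List.length_append, List.length_cons, List.length_replicate]
        omega
      have hvlen : v.length = pv + 1 + rv := by
        rw [hv]
        simp only [List.length_append, List.length_cons, List.length_replicate]
        omega
      rw [List.length_append, List.flatten_cons, List.length_append]
      have hnn : n ^ 2 + n = n * (n + 1) := by ring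
      omega

lemma main (hn : 2 ≤ n) : ∀ l₁ l₂ : List (List (Fin 2)),
    (∀ w ∈ l₁, w ∈ Lb n) → (∀ w ∈ l₂, w ∈ Lb n) →
    l₁.flatten = l₂.flatten → l₁ ≠ l₂ → n ^ 2 + n + 2 ≤ l₁.flatten.length := by
  intro l₁
  induction l₁ with
  | nil =>
    intro l₂ _ h₂ hflat hne
    exfalso
    cases l₂ with
    | nil => exact hne rfl
    | cons v t =>
      rw [List.flatten_nil, List.flatten_cons] at hflat
      exact Lb_ne_nil n (h₂ v (by simp)) (List.append_eq_nil_iff.mp hflat.symm).1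
  | cons w₁ t₁ ih =>
    intro l₂ h₁ h₂ hflat hne
    cases l₂ with
    | nil =>
      exfalso
      rw [List.flatten_cons, List.flatten_nil] at hflat
      exact Lb_ne_nil n (h₁ w₁ (by simp)) (List.append_eq_nil_iff.mp hflat).1
    | cons w₂ t₂ =>
      rw [List.flatten_cons] at hflat ⊢
      rw [List.flatten_cons] at hflat
      rcases lt_trichotomy w₁.length w₂.length with h | h | h
      · exact core n hn w₁ w₂ t₁ t₂ (h₁ _ (by simp)) (h₂ _ (by simp))
          (fun w hw => h₁ w (by simp [hw])) (fun w hw => h₂ w (by simp [hw])) hflat h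
      · obtain ⟨rfl, hft⟩ := List.append_inj hflat h
        have hne' : t₁ ≠ t₂ := fun hh => hne (by rw [hh])
        have hle := ih t₂ (fun w hw => h₁ w (by simp [hw]))
          (fun w hw => h₂ w (by simp [hw])) hft hne'
        calc n ^ 2 + n + 2 ≤ t₁.flatten.length := hle
          _ ≤ (w₁ ++ t₁.flatten).length := by simp
      · have hcore := core n hn w₂ w₁ t₂ t₁ (h₂ _ (by simp)) (h₁ _ (by simp))
          (fun w hw => h₂ w (by simp [hw])) (fun w hw => h₁ w (by simp [hw])) hflat.symm h
        rwa [← hflat] at hcore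

end Stmt3Aux

/-- For every `n ≥ 2`, `Lₙ` is accepted by a DFA with `2n+5` states, and the shortest
word of `Lₙ∗` having two distinct factorizations into elements of `Lₙ` is
`b a^{n(n+1)} b`, of length `n² + n + 2`. -/
theorem stmt3 (n : ℕ) (hn : 2 ≤ n) :
    (∃ M : DFA (Fin 2) (Fin (2 * n + 5)), M.accepts = Lb n) ∧
    (∃ l₁ l₂, IsFactorization (Lb n) (1 :: (List.replicate (n * (n + 1)) 0 ++ [1])) l₁ ∧
       IsFactorization (Lb n) (1 :: (List.replicate (n * (n + 1)) 0 ++ [1])) l₂ ∧ l₁ ≠ l₂) ∧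
    (1 :: (List.replicate (n * (n + 1)) 0 ++ [1]) : List (Fin 2)).length = n ^ 2 + n + 2 ∧
    (∀ y : List (Fin 2), (∃ l₁ l₂, IsFactorization (Lb n) y l₁ ∧ IsFactorization (Lb n) y l₂ ∧
       l₁ ≠ l₂) → n ^ 2 + n + 2 ≤ y.length) := by
  haveI : NeZero n := ⟨by omega⟩
  refine ⟨?_, ?_, ?_, ?_⟩
  · exact ⟨Stmt3Aux.reindex (Fintype.equivFinOfCardEq (Stmt3Aux.card_Q n)) (Stmt3Aux.M0 n),
      by rw [Stmt3Aux.reindex_accepts, Stmt3Aux.M0_accepts]⟩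
  · refine ⟨[1 :: List.replicate (n * (n + 1)) 0, [1]],
      [[1], List.replicate ((n + 1) * n) 0 ++ [1]], ⟨?_, ?_⟩, ⟨?_, ?_⟩, ?_⟩
    · intro w hw
      simp only [List.mem_cons, List.mem_singleton, List.not_mem_nil, or_false] at hw
      rcases hw with rfl | rfl
      · exact Or.inl ⟨n + 1, rfl⟩
      · exact Or.inl ⟨0, by simp⟩
    · simp
    · intro w hw
      simp only [List.mem_cons, List.mem_singleton, List.not_mem_nil, or_false] at hw
      rcases hw with rfl | rfl
      · exact Or.inl ⟨0, by simp⟩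
      · exact Or.inr ⟨n, rfl⟩
    · simp [mul_comm]
    · intro h
      rw [List.cons.injEq] at h
      have h1 := congrArg List.length h.1
      simp at h1
      have hpos : 0 < n * (n + 1) := by positivity
      omega
  · simp
    ring
  · rintro y ⟨l₁, l₂, ⟨hm₁, he₁⟩, ⟨hm₂, he₂⟩, hne⟩
    have h := Stmt3Aux.main n hn l₁ l₂ hm₁ hm₂ (by rw [he₁, he₂]) hne
    rwa [he₁] at h
end

section
/- For every n ≥ 2, over the alphabet Σ = {b, a₁, …, aₙ}, the finite language Lₙ = {a₁, aₙ} ∪ { bⁱ a_{i+1} : 1 ≤ i < n } ∪ { aᵢ bⁱ : 1 ≤ i < n } is not a code, and the shortest word in Lₙ* having two distinct factorizations into elements of Lₙ is a₁ b a₂ b² a₃ b³ ⋯ a_{n-1} b^{n-1} aₙ, of length n(n+1)/2. -/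
open Computability
open Fin.NatCast

/-- The alphabet `{b, a₁, …, aₙ}` is encoded as `Option (Fin n)`, with `none` playing the
role of `b` and `some (i-1)` playing the role of `aᵢ`.  `Lc n` is the language
`{a₁, aₙ} ∪ { bⁱ a_{i+1} : 1 ≤ i < n } ∪ { aᵢ bⁱ : 1 ≤ i < n }`. -/
def Lc (n : ℕ) [NeZero n] : Language (Option (Fin n)) := show Set (List (Option (Fin n))) from
  {[some ((0 : ℕ) : Fin n)], [some ((n - 1 : ℕ) : Fin n)]} ∪
  {w | ∃ i, 1 ≤ i ∧ i < n ∧ w = List.replicate i none ++ [some ((i : ℕ) : Fin n)]} ∪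
  {w | ∃ i, 1 ≤ i ∧ i < n ∧ w = some ((i - 1 : ℕ) : Fin n) :: List.replicate i none}

/-- The word `a₁ b a₂ b² a₃ b³ ⋯ a_{n-1} b^{n-1} aₙ`. -/
def xc (n : ℕ) [NeZero n] : List (Option (Fin n)) :=
  ((List.range (n - 1)).map
    (fun j => some ((j : ℕ) : Fin n) :: List.replicate (j + 1) none)).flatten ++
    [some ((n - 1 : ℕ) : Fin n)]

/-!
Two distinct factorizations of a word first differ at words `u ≠ v` of `Lₙ` one of which is a
prefix of the other, and the only such pair in `Lₙ` is `a₁`, `a₁ b`. From there on both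
factorizations are forced: the one lagging behind by `bᵏ` must continue with `bᵏ a_{k+1}`,
after which the other lags behind by `a_{k+1}` and must continue with `a_{k+1} b^{k+1}`, or
with `aₙ` when `k + 1 = n`. So the word contains consecutive factors of lengths `1, 2, …, n`
and has length at least `n(n+1)/2`, which is the length of `a₁ b a₂ b² ⋯ aₙ`.
-/

namespace List

variable {α : Type*}

theorem replicate_append_cons_eq_replicate_append {a x : α} (hx : x ≠ a) {s r : List α} :
    ∀ {i k : ℕ}, replicate i a ++ x :: s = replicate k a ++ r →
      k ≤ i ∧ r = replicate (i - k) a ++ x :: s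
  | i, 0, h => by simpa using h.symm
  | 0, k + 1, h => absurd (List.cons.inj h).1 hx
  | i + 1, k + 1, h => by
    obtain ⟨hk, rfl⟩ := replicate_append_cons_eq_replicate_append hx (List.cons.inj h).2
    exact ⟨by omega, by simp⟩

theorem replicate_append_cons_inj {a x y : α} (hx : x ≠ a) (hy : y ≠ a) {i k : ℕ}
    {s t : List α} (h : replicate i a ++ x :: s = replicate k a ++ y :: t) :
    i = k ∧ x = y ∧ s = t := by
  obtain ⟨hki, h'⟩ := replicate_append_cons_eq_replicate_append hx h
  obtain ⟨hik, -⟩ := replicate_append_cons_eq_replicate_append hy h.symm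
  obtain rfl : i = k := le_antisymm hik hki
  simpa [eq_comm] using h'

theorem exists_eq_append_cons_of_flatten_eq :
    ∀ {l₁ l₂ : List (List α)}, l₁.flatten = l₂.flatten → l₁ ≠ l₂ → [] ∉ l₁ → [] ∉ l₂ →
      ∃ p u v r₁ r₂, u ≠ v ∧ l₁ = p ++ u :: r₁ ∧ l₂ = p ++ v :: r₂
  | [], [], _, hne, _, _ => absurd rfl hne
  | [], v :: _, h, _, _, h₂ => by
    simp only [flatten_nil, flatten_cons, nil_eq_append_iff] at h
    exact absurd (h.1 ▸ mem_cons_self) h₂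
  | u :: _, [], h, _, h₁, _ => by
    simp only [flatten_nil, flatten_cons, append_eq_nil_iff] at h
    exact absurd (h.1 ▸ mem_cons_self) h₁
  | u :: r₁, v :: r₂, h, hne, h₁, h₂ => by
    by_cases huv : u = v
    · subst huv
      obtain ⟨p, u', v', r₁', r₂', hne', rfl, rfl⟩ := exists_eq_append_cons_of_flatten_eq
        (append_cancel_left h) (by simpa using hne) (fun h => h₁ (mem_cons_of_mem _ h))
        (fun h => h₂ (mem_cons_of_mem _ h))
      exact ⟨u :: p, u', v', r₁', r₂', hne', rfl, rfl⟩
    · exact ⟨[], u, v, r₁, r₂, huv, rfl, rfl⟩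

theorem flatten_map_range_cons_append_singleton (s : ℕ → α) (t : ℕ → List α) (m : ℕ) :
    ((range m).map fun j => s j :: t j).flatten ++ [s m] =
      s 0 :: ((range m).map fun j => t j ++ [s (j + 1)]).flatten := by
  induction m with
  | zero => simp
  | succ m ih =>
    simp only [range_succ, map_append, flatten_append, map_cons, map_nil, flatten_cons,
      flatten_nil, append_nil]
    rw [← append_assoc, ← singleton_append, ← append_assoc, ih]
    simp

theorem two_mul_length_flatten_map_range_cons_replicate (s : ℕ → α) (b : α) (m : ℕ) :
    2 * ((range m).map fun j => s j :: replicate (j + 1) b).flatten.length = m * (m + 3) := by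
  induction m with
  | zero => simp
  | succ m ih =>
    simp only [range_succ, map_append, flatten_append, map_cons, map_nil, flatten_cons,
      flatten_nil, append_nil, length_append, length_cons, length_replicate]
    linarith

end List

open List

theorem Fin.natCast_inj_of_lt {n : ℕ} [NeZero n] {i j : ℕ} (hi : i < n) (hj : j < n) :
    ((i : ℕ) : Fin n) = ((j : ℕ) : Fin n) ↔ i = j := by
  rw [Fin.ext_iff, Fin.val_cast_of_lt hi, Fin.val_cast_of_lt hj]

-- `a₁ · (b a₂)(b² a₃) ⋯ (bⁿ⁻¹ aₙ)`
def factorizationLeft (n : ℕ) [NeZero n] : List (List (Option (Fin n))) :=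
  [some ((0 : ℕ) : Fin n)] ::
    (range (n - 1)).map fun j => replicate (j + 1) none ++ [some ((j + 1 : ℕ) : Fin n)]

-- `(a₁ b)(a₂ b²) ⋯ (aₙ₋₁ bⁿ⁻¹) · aₙ`
def factorizationRight (n : ℕ) [NeZero n] : List (List (Option (Fin n))) :=
  ((range (n - 1)).map fun j => some ((j : ℕ) : Fin n) :: replicate (j + 1) none) ++
    [[some ((n - 1 : ℕ) : Fin n)]]

section

variable {n : ℕ} [NeZero n]

-- Indices are shifted so that the first letter of every word is visible to `simp`.
theorem mem_Lc_iff {w : List (Option (Fin n))} :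
    w ∈ Lc n ↔ w = [some ((0 : ℕ) : Fin n)] ∨ w = [some ((n - 1 : ℕ) : Fin n)] ∨
      (∃ i, i + 1 < n ∧ w = replicate (i + 1) none ++ [some ((i + 1 : ℕ) : Fin n)]) ∨
      (∃ i, i + 1 < n ∧ w = some ((i : ℕ) : Fin n) :: replicate (i + 1) none) := by
  have shift {P : ℕ → Prop} : (∃ i, 1 ≤ i ∧ P i) ↔ ∃ i, P (i + 1) :=
    ⟨fun ⟨i, hi, h⟩ => ⟨i - 1, by rwa [Nat.sub_add_cancel hi]⟩, fun ⟨i, h⟩ => ⟨i + 1, by omega, h⟩⟩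
  unfold Lc
  change w ∈ (_ : Set _) ↔ _
  simp only [Set.mem_union, Set.mem_insert_iff, Set.mem_singleton_iff, Set.mem_ofPred_eq,
    shift, Nat.add_sub_cancel, or_assoc]

theorem ne_nil_of_mem_Lc {w : List (Option (Fin n))} (hw : w ∈ Lc n) : w ≠ [] := by
  rcases mem_Lc_iff.mp hw with rfl | rfl | ⟨i, -, rfl⟩ | ⟨i, -, rfl⟩ <;> simp

theorem two_mul_length_xc : 2 * (xc n).length = n * (n + 1) := by
  obtain ⟨m, rfl⟩ : ∃ m, n = m + 1 := ⟨n - 1, by have := NeZero.ne n; omega⟩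
  rw [xc, length_append, Nat.mul_add, two_mul_length_flatten_map_range_cons_replicate]
  simp only [Nat.add_sub_cancel, length_singleton]
  ring

theorem isFactorization_factorizationLeft :
    IsFactorization (Lc n) (xc n) (factorizationLeft n) := by
  refine ⟨fun w hw => ?_, ?_⟩
  · rcases mem_cons.mp hw with rfl | hw
    · exact mem_Lc_iff.mpr (.inl rfl)
    · obtain ⟨j, hj, rfl⟩ := mem_map.mp hw
      exact mem_Lc_iff.mpr (.inr (.inr (.inl ⟨j, by simp at hj; omega, rfl⟩)))
  · rw [factorizationLeft, xc, flatten_cons, flatten_map_range_cons_append_singleton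
      (fun j => some ((j : ℕ) : Fin n)) (fun j => replicate (j + 1) none)]
    simp

theorem isFactorization_factorizationRight :
    IsFactorization (Lc n) (xc n) (factorizationRight n) := by
  refine ⟨fun w hw => ?_, by simp [factorizationRight, xc]⟩
  rcases mem_append.mp hw with hw | hw
  · obtain ⟨j, hj, rfl⟩ := mem_map.mp hw
    exact mem_Lc_iff.mpr (.inr (.inr (.inr ⟨j, by simp at hj; omega, rfl⟩)))
  · rw [mem_singleton.mp hw]
    exact mem_Lc_iff.mpr (.inr (.inl rfl))

theorem factorizationLeft_ne_factorizationRight (hn : 2 ≤ n) :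
    factorizationLeft n ≠ factorizationRight n := by
  obtain ⟨m, rfl⟩ : ∃ m, n = m + 2 := ⟨n - 2, by omega⟩
  simp [factorizationLeft, factorizationRight, range_succ_eq_map]

theorem exists_eq_cons_of_flatten_eq_none_cons {r : List (List (Option (Fin n)))}
    (hr : ∀ w ∈ r, w ∈ Lc n) {s : List (Option (Fin n))} (h : r.flatten = none :: s) :
    ∃ i t, i + 1 < n ∧ r = (replicate (i + 1) none ++ [some ((i + 1 : ℕ) : Fin n)]) :: t := by
  obtain _ | ⟨w, t⟩ := r
  · simp at h
  rcases mem_Lc_iff.mp (hr w mem_cons_self) with rfl | rfl | ⟨i, hi, rfl⟩ | ⟨i, -, rfl⟩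
  · simp at h
  · simp at h
  · exact ⟨i, t, hi, rfl⟩
  · simp at h

theorem eq_some_of_flatten_eq_replicate_append_cons {r : List (List (Option (Fin n)))}
    (hr : ∀ w ∈ r, w ∈ Lc n) {j : ℕ} {x : Option (Fin n)} (hx : x ≠ none)
    {s : List (Option (Fin n))} (h : r.flatten = replicate (j + 1) none ++ x :: s) :
    j + 1 < n ∧ x = some ((j + 1 : ℕ) : Fin n) := by
  obtain ⟨i, t, hi, rfl⟩ := exists_eq_cons_of_flatten_eq_none_cons hr
    (by rw [h, replicate_succ, cons_append])
  rw [flatten_cons, append_assoc, singleton_append] at h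
  obtain ⟨hij, rfl, -⟩ := replicate_append_cons_inj (by simp) hx h
  obtain rfl : i = j := by omega
  exact ⟨hi, rfl⟩

theorem exists_of_flatten_eq_replicate_append_flatten {r₁ r₂ : List (List (Option (Fin n)))}
    (hr₁ : ∀ w ∈ r₁, w ∈ Lc n) (hr₂ : ∀ w ∈ r₂, w ∈ Lc n) {k : ℕ}
    (h : r₁.flatten = replicate (k + 1) none ++ r₂.flatten) :
    ∃ t₁, k + 1 < n ∧ r₁ = (replicate (k + 1) none ++ [some ((k + 1 : ℕ) : Fin n)]) :: t₁ ∧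
      r₂.flatten = some ((k + 1 : ℕ) : Fin n) :: t₁.flatten := by
  obtain ⟨i, t₁, hi, rfl⟩ := exists_eq_cons_of_flatten_eq_none_cons hr₁
    (by rw [h, replicate_succ, cons_append])
  rw [flatten_cons, append_assoc, singleton_append] at h
  obtain ⟨hki, h₂⟩ := replicate_append_cons_eq_replicate_append (by simp) h
  by_cases hik : i = k
  · subst hik
    exact ⟨t₁, hi, rfl, by simpa using h₂⟩
  · -- otherwise `r₂.flatten` would start with a `b`-block followed by the wrong letter
    rw [show i + 1 - (k + 1) = i - k - 1 + 1 by omega] at h₂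
    obtain ⟨hm, hsome⟩ := eq_some_of_flatten_eq_replicate_append_cons hr₂ (by simp) h₂
    have := (Fin.natCast_inj_of_lt hi hm).mp (Option.some_injective _ hsome)
    omega

theorem eq_or_exists_of_flatten_eq_some_cons {r : List (List (Option (Fin n)))}
    (hr : ∀ w ∈ r, w ∈ Lc n) {k : ℕ} (hk : k + 1 < n) {s : List (Option (Fin n))}
    (h : r.flatten = some ((k + 1 : ℕ) : Fin n) :: s) :
    k + 2 = n ∨ ∃ t : List (List (Option (Fin n))),
      k + 2 < n ∧ (∀ w ∈ t, w ∈ Lc n) ∧ s = replicate (k + 2) none ++ t.flatten := by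
  obtain _ | ⟨w, t⟩ := r
  · simp at h
  have ht : ∀ w ∈ t, w ∈ Lc n := fun w hw => hr w (mem_cons_of_mem _ hw)
  rcases mem_Lc_iff.mp (hr w mem_cons_self) with rfl | rfl | ⟨i, -, rfl⟩ | ⟨i, hi, rfl⟩
  · have := (Fin.natCast_inj_of_lt (Nat.pos_of_neZero n) hk).mp
      (Option.some_injective _ (cons.inj h).1)
    omega
  · have := (Fin.natCast_inj_of_lt (Nat.sub_one_lt (NeZero.ne n)) hk).mp
      (Option.some_injective _ (cons.inj h).1)
    omega
  · simp [replicate_succ] at h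
  · obtain ⟨ha, hs⟩ := cons.inj h
    obtain rfl := (Fin.natCast_inj_of_lt (by omega) hk).mp (Option.some_injective _ ha)
    exact .inr ⟨t, hi, ht, by simp [← hs]⟩

-- `(k + 2) + ⋯ + n ≤ |r₁.flatten|`, doubled
theorem length_flatten_ge_of_flatten_eq_replicate_append {r₁ r₂ : List (List (Option (Fin n)))}
    (hr₁ : ∀ w ∈ r₁, w ∈ Lc n) (hr₂ : ∀ w ∈ r₂, w ∈ Lc n) {k : ℕ}
    (h : r₁.flatten = replicate (k + 1) none ++ r₂.flatten) :
    n * (n + 1) ≤ (k + 1) * (k + 2) + 2 * r₁.flatten.length := by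
  obtain ⟨t₁, hk, rfl, h₂⟩ := exists_of_flatten_eq_replicate_append_flatten hr₁ hr₂ h
  have hlen : ((replicate (k + 1) none ++ [some ((k + 1 : ℕ) : Fin n)]) :: t₁).flatten.length =
      k + 2 + t₁.flatten.length := by
    simp only [flatten_cons, length_append, length_replicate, length_singleton]
  rw [hlen]
  rcases eq_or_exists_of_flatten_eq_some_cons hr₂ hk h₂ with rfl | ⟨t₂, -, ht₂, ht₁⟩
  · nlinarith
  · have := length_flatten_ge_of_flatten_eq_replicate_append
      (fun w hw => hr₁ w (mem_cons_of_mem _ hw)) ht₂ ht₁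
    nlinarith
termination_by n - k

theorem eq_of_prefix_of_mem_Lc {u v : List (Option (Fin n))} (hu : u ∈ Lc n) (hv : v ∈ Lc n)
    (hne : u ≠ v) (hp : u <+: v) :
    u = [some ((0 : ℕ) : Fin n)] ∧ v = [some ((0 : ℕ) : Fin n), none] := by
  obtain ⟨r, rfl⟩ := hp
  have hr : r ≠ [] := by rintro rfl; simp at hne
  have hlen : 2 ≤ (u ++ r).length := by
    have := length_pos_iff.mpr (ne_nil_of_mem_Lc hu)
    have := length_pos_iff.mpr hr
    simp only [length_append]
    omega
  rcases mem_Lc_iff.mp hv with h | h | ⟨j, hj, h⟩ | ⟨j, hj, h⟩ <;> rw [h] at hlen hne ⊢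
  · simp at hlen
  · simp at hlen
  · exfalso
    rcases mem_Lc_iff.mp hu with rfl | rfl | ⟨i, -, rfl⟩ | ⟨i, -, rfl⟩
    · simp [replicate_succ] at h
    · simp [replicate_succ] at h
    · rw [append_assoc, singleton_append] at h
      exact hr (replicate_append_cons_inj (by simp) (by simp) h).2.2
    · simp [replicate_succ] at h
  · rcases mem_Lc_iff.mp hu with rfl | rfl | ⟨i, -, rfl⟩ | ⟨i, hi, rfl⟩
    · obtain ⟨ha, rfl⟩ := cons.inj h
      obtain rfl := (Fin.natCast_inj_of_lt (Nat.pos_of_neZero n) (by omega)).mp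
        (Option.some_injective _ ha)
      exact ⟨rfl, rfl⟩
    · have := (Fin.natCast_inj_of_lt (Nat.sub_one_lt (NeZero.ne n)) (by omega)).mp
        (Option.some_injective _ (cons.inj h).1)
      omega
    · simp [replicate_succ] at h
    · obtain ⟨ha, -⟩ := cons.inj h
      obtain rfl := (Fin.natCast_inj_of_lt (by omega) (by omega)).mp (Option.some_injective _ ha)
      exact absurd rfl hne

theorem le_two_mul_length_of_append_flatten_eq {u v : List (Option (Fin n))}
    {r₁ r₂ : List (List (Option (Fin n)))} (hu : u ∈ Lc n) (hv : v ∈ Lc n)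
    (hr₁ : ∀ w ∈ r₁, w ∈ Lc n) (hr₂ : ∀ w ∈ r₂, w ∈ Lc n) (hne : u ≠ v)
    (h : u ++ r₁.flatten = v ++ r₂.flatten) :
    n * (n + 1) ≤ 2 * (u ++ r₁.flatten).length := by
  wlog hp : u <+: v generalizing u v r₁ r₂
  · have hp' : v <+: u :=
      (prefix_or_prefix_of_prefix (prefix_append u _) (h ▸ prefix_append v _)).resolve_left hp
    rw [h]
    exact this hv hu hr₂ hr₁ hne.symm h.symm hp'
  obtain ⟨rfl, rfl⟩ := eq_of_prefix_of_mem_Lc hu hv hne hp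
  have := length_flatten_ge_of_flatten_eq_replicate_append hr₁ hr₂ (k := 0) (by simpa using h)
  simp only [singleton_append, length_cons]
  omega

theorem length_xc_le_of_isFactorization {y : List (Option (Fin n))}
    {l₁ l₂ : List (List (Option (Fin n)))} (hl₁ : IsFactorization (Lc n) y l₁)
    (hl₂ : IsFactorization (Lc n) y l₂) (hne : l₁ ≠ l₂) : (xc n).length ≤ y.length := by
  obtain ⟨hl₁, rfl⟩ := hl₁
  obtain ⟨hl₂, hflat⟩ := hl₂
  obtain ⟨p, u, v, r₁, r₂, huv, rfl, rfl⟩ := exists_eq_append_cons_of_flatten_eq hflat.symm hne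
    (fun h => ne_nil_of_mem_Lc (hl₁ _ h) rfl) (fun h => ne_nil_of_mem_Lc (hl₂ _ h) rfl)
  simp only [flatten_append, flatten_cons, append_cancel_left_eq] at hflat
  have hle := le_two_mul_length_of_append_flatten_eq (hl₁ u (by simp)) (hl₂ v (by simp))
    (fun w hw => hl₁ w (by simp [hw])) (fun w hw => hl₂ w (by simp [hw])) huv hflat.symm
  have hxc := two_mul_length_xc (n := n)
  simp only [flatten_append, flatten_cons, length_append] at hle ⊢
  omega

end

/-- For every `n ≥ 2`, the finite language `Lₙ` is not a code, and the shortest word of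
`Lₙ∗` having two distinct factorizations into elements of `Lₙ` is
`a₁ b a₂ b² ⋯ a_{n-1} b^{n-1} aₙ`, of length `n(n+1)/2`. -/
theorem stmt4 (n : ℕ) [NeZero n] (hn : 2 ≤ n) :
    ¬ IsCode (Lc n) ∧
    (∃ l₁ l₂, IsFactorization (Lc n) (xc n) l₁ ∧ IsFactorization (Lc n) (xc n) l₂ ∧ l₁ ≠ l₂) ∧
    (∀ y, (∃ l₁ l₂, IsFactorization (Lc n) y l₁ ∧ IsFactorization (Lc n) y l₂ ∧ l₁ ≠ l₂) →
      (xc n).length ≤ y.length) ∧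
    (xc n).length = n * (n + 1) / 2 := by
  have hL := isFactorization_factorizationLeft (n := n)
  have hR := isFactorization_factorizationRight (n := n)
  have hne := factorizationLeft_ne_factorizationRight hn
  refine ⟨fun hcode => hne (hcode _ _ _ hL hR), ⟨_, _, hL, hR, hne⟩,
    fun y ⟨_, _, h₁, h₂, h⟩ => length_xc_le_of_isFactorization h₁ h₂ h, ?_⟩
  have := two_mul_length_xc (n := n)
  omega
end

section
/- For L = {a, ab, aab} over the alphabet {a,b}, the set SU(L) of words in L* all of whose factorizations into elements of L have the same number of factors equals the regular language (ab)* a*. -/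
/-!
Each of `a` and `ab` contains one letter `a`, and the block `aab` does not occur in `(ab)^i a^j`;
so every factorization of `(ab)^i a^j` has exactly `i + j` factors. Conversely, if `w x ∈ SU L`
with `w ∈ L` and `x ∈ L*`, then `x ∈ SU L`, so by induction `x = (ab)^i a^j`. The first factor must
then be `ab`, or `a` with `i = 0`: otherwise the word starts with `aab = a · ab` followed by a word
of `L*`, and reading that prefix as one factor or as two gives factorizations of different lengths.
-/

open Computability

/-- The set of words of `L∗` all of whose factorizations into elements of `L` have the
same number of factors. -/
def SU {α : Type*} (L : Language α) : Language α :=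
  {x | x ∈ L∗ ∧ ∀ l₁ l₂, IsFactorization L x l₁ → IsFactorization L x l₂ →
    l₁.length = l₂.length}

section General

variable {α : Type*} {L : Language α} {u v w x : List α} {l : List (List α)}

theorem IsFactorization.cons (hw : w ∈ L) (h : IsFactorization L x l) :
    IsFactorization L (w ++ x) (w :: l) :=
  ⟨by simpa [hw] using h.1, by simp [h.2]⟩

theorem mem_kstar_iff_exists_isFactorization : x ∈ L∗ ↔ ∃ l, IsFactorization L x l := by
  rw [Language.mem_kstar]
  exact exists_congr fun l => ⟨fun ⟨hx, hl⟩ => ⟨hl, hx.symm⟩, fun ⟨hl, hx⟩ => ⟨hx.symm, hl⟩⟩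

theorem mem_SU_of_append_mem_SU (hw : w ∈ L) (hwx : w ++ x ∈ SU L) (hx : x ∈ L∗) :
    x ∈ SU L :=
  ⟨hx, fun l₁ l₂ h₁ h₂ => by simpa using hwx.2 _ _ (h₁.cons hw) (h₂.cons hw)⟩

theorem append_append_notMem_SU (hu : u ∈ L) (hv : v ∈ L) (huv : u ++ v ∈ L) (hx : x ∈ L∗) :
    u ++ v ++ x ∉ SU L := by
  obtain ⟨l, hl⟩ := mem_kstar_iff_exists_isFactorization.1 hx
  have hsplit : IsFactorization L (u ++ v ++ x) (u :: v :: l) := by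
    simpa using (hl.cons hv).cons hu
  have hjoin : IsFactorization L (u ++ v ++ x) ((u ++ v) :: l) := hl.cons huv
  exact fun h => by simpa using h.2 _ _ hsplit hjoin

end General

namespace SemiUniqueFactorization

/-- The code `{a, ab, aab}`, with letters `a = 0` and `b = 1`. -/
def aAbAab : Language (Fin 2) := {[0], [0, 1], [0, 0, 1]}

theorem mem_aAbAab {w : List (Fin 2)} : w ∈ aAbAab ↔ w = [0] ∨ w = [0, 1] ∨ w = [0, 0, 1] :=
  Iff.rfl

def abPowAPow (i j : ℕ) : List (Fin 2) :=
  (List.replicate i [0, 1]).flatten ++ List.replicate j 0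

theorem abPowAPow_zero (j : ℕ) : abPowAPow 0 j = List.replicate j 0 := by
  simp [abPowAPow]

theorem abPowAPow_succ (i j : ℕ) : abPowAPow (i + 1) j = [0, 1] ++ abPowAPow i j := by
  simp [abPowAPow, List.replicate_succ]

theorem abPowAPow_zero_succ (j : ℕ) : abPowAPow 0 (j + 1) = [0] ++ abPowAPow 0 j := by
  simp [abPowAPow, List.replicate_succ]

theorem count_zero_abPowAPow (i j : ℕ) : (abPowAPow i j).count 0 = i + j := by
  induction i with
  | zero => simp [abPowAPow_zero]
  | succ i ih => rw [abPowAPow_succ, List.count_append, ih]; simp; omega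

theorem not_infix_abPowAPow (i j : ℕ) : ¬ [0, 0, 1] <:+: abPowAPow i j := by
  induction i with
  | zero =>
    intro h
    simpa [abPowAPow_zero] using h.subset (by simp : (1 : Fin 2) ∈ [0, 0, 1])
  | succ i ih => simpa [abPowAPow_succ, List.infix_cons_iff] using ih

theorem isFactorization_abPowAPow (i j : ℕ) :
    IsFactorization aAbAab (abPowAPow i j) (List.replicate i [0, 1] ++ List.replicate j [0]) := by
  refine ⟨fun w hw => ?_, by simp [abPowAPow]⟩
  rcases List.mem_append.1 hw with hw | hw <;> rw [List.eq_of_mem_replicate hw] <;> simp [mem_aAbAab]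

theorem abPowAPow_mem_kstar (i j : ℕ) : abPowAPow i j ∈ aAbAab∗ :=
  mem_kstar_iff_exists_isFactorization.2 ⟨_, isFactorization_abPowAPow i j⟩

theorem length_eq_count_of_isFactorization {x : List (Fin 2)} {l : List (List (Fin 2))}
    (hl : IsFactorization aAbAab x l) (hx : ¬ [0, 0, 1] <:+: x) : l.length = x.count 0 := by
  induction l generalizing x with
  | nil => simp [← hl.2]
  | cons w l ih =>
    obtain ⟨hmem, rfl⟩ := hl
    have hw : w = [0] ∨ w = [0, 1] := by
      rcases hmem w (by simp) with rfl | rfl | rfl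
      exacts [Or.inl rfl, Or.inr rfl, absurd (List.prefix_append _ _).isInfix hx]
    have ih' := ih ⟨fun u hu => hmem u (by simp [hu]), rfl⟩
      fun h => hx (h.trans (List.suffix_append w _).isInfix)
    rcases hw with rfl | rfl <;> simp [ih']

theorem abPowAPow_mem_SU (i j : ℕ) : abPowAPow i j ∈ SU aAbAab := by
  refine ⟨abPowAPow_mem_kstar i j, fun l₁ l₂ h₁ h₂ => ?_⟩
  rw [length_eq_count_of_isFactorization h₁ (not_infix_abPowAPow i j),
    length_eq_count_of_isFactorization h₂ (not_infix_abPowAPow i j)]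

theorem exists_eq_abPowAPow_of_mem_SU {x : List (Fin 2)} (hx : x ∈ SU aAbAab) :
    ∃ i j, x = abPowAPow i j := by
  obtain ⟨l, hl⟩ := mem_kstar_iff_exists_isFactorization.1 hx.1
  induction l generalizing x with
  | nil => exact ⟨0, 0, by simp [← hl.2, abPowAPow]⟩
  | cons w l ih =>
    obtain ⟨hmem, rfl⟩ := hl
    have hw : w ∈ aAbAab := hmem w (by simp)
    have htail : IsFactorization aAbAab l.flatten l := ⟨fun u hu => hmem u (by simp [hu]), rfl⟩
    obtain ⟨i, j, hij⟩ := ih (mem_SU_of_append_mem_SU hw (by simpa using hx)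
      (mem_kstar_iff_exists_isFactorization.2 ⟨l, htail⟩)) htail
    have hx' : w ++ abPowAPow i j ∈ SU aAbAab := by simpa [hij] using hx
    have ha : [0] ∈ aAbAab := by simp [mem_aAbAab]
    have hab : [0, 1] ∈ aAbAab := by simp [mem_aAbAab]
    have haab : [0] ++ [0, 1] ∈ aAbAab := by simp [mem_aAbAab]
    simp only [List.flatten_cons, hij]
    rcases hw with rfl | rfl | rfl
    · rcases i with _ | i
      · exact ⟨0, j + 1, (abPowAPow_zero_succ j).symm⟩
      · rw [abPowAPow_succ, ← List.append_assoc] at hx'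
        exact absurd hx' (append_append_notMem_SU ha hab haab (abPowAPow_mem_kstar i j))
    · exact ⟨i + 1, j, (abPowAPow_succ i j).symm⟩
    · exact absurd hx' (append_append_notMem_SU ha hab haab (abPowAPow_mem_kstar i j))

end SemiUniqueFactorization

open SemiUniqueFactorization in
/-- For `L = {a, ab, aab}` over `Fin 2` (with `a = 0`, `b = 1`), `SU L = (ab)* a*`. -/
theorem stmt7 :
    SU (show Set (List (Fin 2)) from {[0], [0, 1], [0, 0, 1]}) =
      {x : List (Fin 2) | ∃ i j, x = (List.replicate i [0, 1]).flatten ++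
        List.replicate j 0} := by
  ext x
  exact ⟨exists_eq_abPowAPow_of_mem_SU, fun ⟨i, j, hx⟩ => hx ▸ abPowAPow_mem_SU i j⟩
end

section
/- If L is a finite language, then the set of words of L* NOT having permutationally unique factorization is context-free. -/
open Computability

namespace Stmt12

open ContextFreeGrammar

universe uT uN uM

/-- A context-free grammar whose nonterminals may live in any universe. -/
structure CFG (T : Type uT) where
  NT : Type uN
  initial : NT
  rules : Finset (ContextFreeRule T NT)

namespace CFG

variable {T : Type uT} (g : CFG.{uT, uN} T)

def Produces (u v : List (Symbol T g.NT)) : Prop := ∃ r ∈ g.rules, r.Rewrites u v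

abbrev Derives : List (Symbol T g.NT) → List (Symbol T g.NT) → Prop :=
  Relation.ReflTransGen g.Produces

def language : Language T :=
  {w | g.Derives [Symbol.nonterminal g.initial] (w.map Symbol.terminal)}

lemma mem_language_iff (w : List T) :
    w ∈ g.language ↔ g.Derives [Symbol.nonterminal g.initial] (w.map Symbol.terminal) :=
  Iff.rfl

variable {g}

@[refl]
lemma Derives.refl (w : List (Symbol T g.NT)) : g.Derives w w := Relation.ReflTransGen.refl

lemma Produces.single {v w : List (Symbol T g.NT)} (h : g.Produces v w) : g.Derives v w :=
  Relation.ReflTransGen.single h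

lemma Derives.trans {u v w : List (Symbol T g.NT)} (h₁ : g.Derives u v) (h₂ : g.Derives v w) :
    g.Derives u w := Relation.ReflTransGen.trans h₁ h₂

lemma Derives.trans_produces {u v w : List (Symbol T g.NT)} (h₁ : g.Derives u v)
    (h₂ : g.Produces v w) : g.Derives u w := Relation.ReflTransGen.tail h₁ h₂

lemma Derives.append_left {v w : List (Symbol T g.NT)} (h : g.Derives v w)
    (p : List (Symbol T g.NT)) : g.Derives (p ++ v) (p ++ w) := by
  induction h with
  | refl => exact Relation.ReflTransGen.refl
  | tail _ hst ih =>
    obtain ⟨r, hr, hrw⟩ := hst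
    exact Relation.ReflTransGen.tail ih ⟨r, hr, hrw.append_left p⟩

lemma Derives.append_right {v w : List (Symbol T g.NT)} (h : g.Derives v w)
    (p : List (Symbol T g.NT)) : g.Derives (v ++ p) (w ++ p) := by
  induction h with
  | refl => exact Relation.ReflTransGen.refl
  | tail _ hst ih =>
    obtain ⟨r, hr, hrw⟩ := hst
    exact Relation.ReflTransGen.tail ih ⟨r, hr, hrw.append_right p⟩

end CFG

/-! ### Generic: relabeling nonterminals along a retraction preserves the language -/

section Relabel

variable {T : Type uT} {N : Type uN} {N' : Type uM}

/-- Map a symbol along a function on nonterminals. -/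
def mapSym (f : N → N') : Symbol T N → Symbol T N'
  | .terminal a => .terminal a
  | .nonterminal A => .nonterminal (f A)

lemma mapSym_comp (f : N → N') (g : N' → N) (s : Symbol T N) :
    mapSym g (mapSym f s) = mapSym (g ∘ f) s := by
  cases s <;> rfl

lemma mapSym_id' (f : N → N) (s : Symbol T N) (hf : ∀ A, f A = A) : mapSym f s = s := by
  cases s <;> simp [mapSym, hf]

def mapRule (f : N → N') (r : ContextFreeRule T N) : ContextFreeRule T N' :=
  ⟨f r.input, r.output.map (mapSym f)⟩

lemma map_mapSym_terminal (f : N → N') (x : List T) :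
    (x.map Symbol.terminal).map (mapSym f) = x.map Symbol.terminal := by
  simp [List.map_map, Function.comp_def, mapSym]

end Relabel

section RelabelGrammar

variable {T : Type uT}

/-- Relabeled grammar. -/
noncomputable abbrev relabel (g : CFG.{uT, uN} T) {N' : Type} (f : g.NT → N') :
    ContextFreeGrammar T := by
  classical
  exact ⟨N', f g.initial, g.rules.image (mapRule f)⟩

lemma relabel_produces (g : CFG.{uT, uN} T) {N' : Type} (f : g.NT → N')
    {u v : List (Symbol T g.NT)} (h : g.Produces u v) :
    (relabel g f).Produces (u.map (mapSym f)) (v.map (mapSym f)) := by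
  classical
  obtain ⟨r, hr, hrw⟩ := h
  refine ⟨mapRule f r, by simp [relabel, Finset.mem_image]; exact ⟨r, hr, rfl⟩, ?_⟩
  rw [ContextFreeRule.rewrites_iff] at hrw ⊢
  obtain ⟨p, q, rfl, rfl⟩ := hrw
  exact ⟨p.map (mapSym f), q.map (mapSym f), by simp [mapRule, mapSym], by simp [mapRule]⟩

lemma relabel_derives (g : CFG.{uT, uN} T) {N' : Type} (f : g.NT → N')
    {u v : List (Symbol T g.NT)} (h : g.Derives u v) :
    (relabel g f).Derives (u.map (mapSym f)) (v.map (mapSym f)) := by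
  induction h with
  | refl => rfl
  | tail _ hstep ih => exact ih.trans_produces (relabel_produces g f hstep)

/-- If `dec` is a retraction of `f` on all nonterminals occurring in the grammar, then the
relabeled grammar has the same language. -/
lemma relabel_language (g : CFG.{uT, uN} T) {N' : Type} (f : g.NT → N')
    (dec : N' → g.NT)
    (hinit : dec (f g.initial) = g.initial)
    (hrules : ∀ r ∈ g.rules, dec (f r.input) = r.input ∧
      ∀ s ∈ r.output, mapSym dec (mapSym f s) = s) :
    (relabel g f).language = g.language := by
  classical
  ext x
  constructor
  · rintro hx
    rw [mem_language_iff] at hx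
    rw [CFG.mem_language_iff]
    have key : ∀ u v : List (Symbol T (relabel g f).NT), (relabel g f).Produces u v →
        g.Produces (u.map (mapSym dec)) (v.map (mapSym dec)) := by
      rintro u v ⟨r₀, hr₀, hrw⟩
      simp only [relabel, Finset.mem_image] at hr₀
      obtain ⟨r, hr, rfl⟩ := hr₀
      rw [ContextFreeRule.rewrites_iff] at hrw
      obtain ⟨p, q, rfl, rfl⟩ := hrw
      refine ⟨r, hr, ?_⟩
      rw [ContextFreeRule.rewrites_iff]
      refine ⟨p.map (mapSym dec), q.map (mapSym dec), ?_, ?_⟩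
      · simp [mapRule, mapSym, (hrules r hr).1]
      · have : (mapRule f r).output.map (mapSym dec) = r.output := by
          simp only [mapRule, List.map_map]
          rw [List.map_congr_left (fun s hs => ?_), List.map_id]
          exact (hrules r hr).2 s hs
        simp [this]
    have main : ∀ u v : List (Symbol T (relabel g f).NT), (relabel g f).Derives u v →
        g.Derives (u.map (mapSym dec)) (v.map (mapSym dec)) := by
      intro u v huv
      induction huv with
      | refl => rfl
      | tail _ hstep ih => exact ih.trans_produces (key _ _ hstep)
    have := main _ _ hx
    simpa [relabel, mapSym, map_mapSym_terminal, hinit, Function.comp_def] using this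
  · intro hx
    rw [CFG.mem_language_iff] at hx
    rw [mem_language_iff]
    have := relabel_derives g f hx
    simpa [map_mapSym_terminal, mapSym, relabel, Function.comp_def] using this

end RelabelGrammar


/-! ### Generic: semantic soundness of a grammar via instantiation -/

section Inst

variable {T : Type uT} {N : Type uN}

/-- `Inst M s x`: `x` is obtained from the sentential form `s` by replacing every nonterminal `A`
with some word in `M A`. -/
inductive Inst (M : N → Language T) : List (Symbol T N) → List T → Prop
  | nil : Inst M [] []
  | ter {a s x} : Inst M s x → Inst M (Symbol.terminal a :: s) (a :: x)
  | nt {A v s x} : v ∈ M A → Inst M s x → Inst M (Symbol.nonterminal A :: s) (v ++ x)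

lemma Inst.append {M : N → Language T} {p q : List (Symbol T N)} {x y : List T}
    (hp : Inst M p x) (hq : Inst M q y) : Inst M (p ++ q) (x ++ y) := by
  induction hp with
  | nil => simpa
  | ter _ ih => exact Inst.ter ih
  | nt hv _ ih => simpa using Inst.nt hv ih

lemma Inst.split {M : N → Language T} {p q : List (Symbol T N)} {x : List T}
    (h : Inst M (p ++ q) x) : ∃ x₁ x₂, x = x₁ ++ x₂ ∧ Inst M p x₁ ∧ Inst M q x₂ := by
  induction p generalizing x with
  | nil => exact ⟨[], x, rfl, Inst.nil, by simpa using h⟩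
  | cons s p ih =>
    cases h with
    | ter h' =>
      obtain ⟨x₁, x₂, rfl, h₁, h₂⟩ := ih h'
      exact ⟨_ :: x₁, x₂, rfl, Inst.ter h₁, h₂⟩
    | nt hv h' =>
      obtain ⟨x₁, x₂, rfl, h₁, h₂⟩ := ih h'
      exact ⟨_ ++ x₁, x₂, by simp, Inst.nt hv h₁, h₂⟩

lemma Inst.of_terminal {M : N → Language T} (x : List T) :
    Inst M (x.map Symbol.terminal) x := by
  induction x with
  | nil => exact Inst.nil
  | cons a x ih => exact Inst.ter ih

lemma Inst.terminal_eq {M : N → Language T} {x y : List T}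
    (h : Inst M (x.map Symbol.terminal) y) : y = x := by
  induction x generalizing y with
  | nil => cases h; rfl
  | cons a x ih => cases h with | ter h' => rw [ih h']

lemma Inst.singleton_nt {M : N → Language T} {A : N} {x : List T}
    (h : Inst M [Symbol.nonterminal A] x) : x ∈ M A := by
  cases h with
  | nt hv h' => cases h'; simpa using hv

lemma Inst.singleton_nt_of {M : N → Language T} {A : N} {x : List T} (hx : x ∈ M A) :
    Inst M [Symbol.nonterminal A] x := by
  simpa using Inst.nt hx Inst.nil

end Inst

section Soundness

variable {T : Type uT} (g : CFG.{uT, uN} T) (M : g.NT → Language T)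

lemma inst_of_derives
    (hM : ∀ r ∈ g.rules, ∀ x, Inst M r.output x → x ∈ M r.input)
    {s : List (Symbol T g.NT)} {x : List T}
    (h : g.Derives s (x.map Symbol.terminal)) : Inst M s x := by
  induction h using Relation.ReflTransGen.head_induction_on with
  | refl => exact Inst.of_terminal x
  | head hstep _ ih =>
    obtain ⟨r, hr, hrw⟩ := hstep
    rw [ContextFreeRule.rewrites_iff] at hrw
    obtain ⟨p, q, rfl, rfl⟩ := hrw
    obtain ⟨x₁, x₂, rfl, h₁, h₂⟩ := Inst.split (p := p ++ r.output) ih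
    obtain ⟨y₁, y₂, rfl, hy₁, hy₂⟩ := Inst.split h₁
    exact (hy₁.append (Inst.singleton_nt_of (hM r hr _ hy₂))).append h₂

lemma language_subset_of_inst
    (hM : ∀ r ∈ g.rules, ∀ x, Inst M r.output x → x ∈ M r.input) :
    g.language ≤ M g.initial := by
  intro x hx
  replace hx := (CFG.mem_language_iff g x).1 hx
  exact Inst.singleton_nt (inst_of_derives g M hM hx)

end Soundness


/-! ### The two-track factorization machine -/

section Machine

variable {α : Type uT}

/-- Sign of a track: `true` is track 1. -/
def sg (b : Bool) : ℤ := if b then 1 else -1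

@[simp] lemma sg_not (b : Bool) : sg (!b) = -sg b := by cases b <;> simp [sg]

lemma sg_ne_zero (b : Bool) : sg b ≠ 0 := by cases b <;> simp [sg]

/-- Contribution to the counter when a word `u` is read by the track of sign `b`. -/
noncomputable def delta (w u : List α) (b : Bool) : ℤ :=
  open scoped Classical in if u = w then sg b else 0

lemma delta_not (w u : List α) (b : Bool) : delta w u (!b) = -delta w u b := by
  classical
  unfold delta
  split_ifs <;> simp

lemma delta_mem (w u : List α) (b : Bool) :
    delta w u b = -1 ∨ delta w u b = 0 ∨ delta w u b = 1 := by
  classical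
  unfold delta
  split_ifs <;> cases b <;> simp [sg]

/-- A state of the machine: the overhang `t` (the part of the word that the track currently
ahead has claimed beyond the position of the track currently behind), together with the
identity `b` of the track currently behind (i.e. the one that reads next); `b = true` means
track 1 reads next. -/
abbrev Q (α : Type uT) := List α × Bool

variable (L : Language α) (w : List α)

/-- One step of the machine, producing output `o` and counter increment `d`. -/
inductive Step : Q α → Q α → List α → ℤ → Prop
  | short (u t : List α) (b : Bool) (hu : u ∈ L) (hp : u <+: t) :
      Step (t, b) (t.drop u.length, b) [] (delta w u b)
  | long (u t : List α) (b : Bool) (hu : u ∈ L) (hp : t <+: u) (hne : t ≠ u) :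
      Step (t, b) (u.drop t.length, !b) (u.drop t.length) (delta w u b)
  | swap (b : Bool) : Step ([], b) ([], !b) [] 0

/-- Runs of the machine, with output, total counter increment, and number of steps. -/
inductive Run : Q α → Q α → List α → ℤ → ℕ → Prop
  | nil (q : Q α) : Run q q [] 0 0
  | cons {q r q' : Q α} {o x : List α} {d e : ℤ} {k : ℕ} :
      Step L w q r o d → Run r q' x e k → Run q q' (o ++ x) (d + e) (k + 1)

lemma Step.delta_mem' {q q' o d} (h : Step L w q q' o d) : d = -1 ∨ d = 0 ∨ d = 1 := by
  cases h with
  | short u t b hu hp => exact delta_mem w u b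
  | long u t b hu hp hne => exact delta_mem w u b
  | swap b => simp

lemma Run.single {q q' o d} (h : Step L w q q' o d) : Run L w q q' o d 1 := by
  have := Run.cons h (Run.nil (L := L) (w := w) q')
  simpa using this

lemma Run.append {q r s x y d e k m} (h₁ : Run L w q r x d k) (h₂ : Run L w r s y e m) :
    Run L w q s (x ++ y) (d + e) (k + m) := by
  induction h₁ with
  | nil q => simpa using h₂
  | cons hst _ ih =>
    have := Run.cons hst (ih h₂)
    rw [List.append_assoc, add_assoc, Nat.add_right_comm]
    exact this

/-- Flip the identities of the two tracks. -/
def flipQ (q : Q α) : Q α := (q.1, !q.2)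

@[simp] lemma flipQ_flipQ (q : Q α) : flipQ (flipQ q) = q := by
  simp [flipQ]

lemma Step.flip {q q' o d} (h : Step L w q q' o d) :
    Step L w (flipQ q) (flipQ q') o (-d) := by
  cases h with
  | short u t b hu hp => rw [← delta_not]; exact Step.short u t (!b) hu hp
  | long u t b hu hp hne => rw [← delta_not]; exact Step.long u t (!b) hu hp hne
  | swap b => simpa [flipQ] using Step.swap (L := L) (w := w) (!b)

lemma Run.flip {q q' x d k} (h : Run L w q q' x d k) :
    Run L w (flipQ q) (flipQ q') x (-d) k := by
  induction h with
  | nil q => simpa using Run.nil (L := L) (w := w) (flipQ q)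
  | cons hst _ ih =>
    have := Run.cons (hst.flip L w) ih
    rw [neg_add]
    exact this

/-- Splitting a run with negative total increment at the first time the counter goes one
below its initial value. -/
lemma run_split_neg : ∀ k : ℕ, ∀ {q q' : Q α} {x : List α} {e : ℤ},
    Run L w q q' x e k → e < 0 →
    ∃ s s' o y₁ y₂ k₁ k₂, Run L w q s y₁ 0 k₁ ∧ Step L w s s' o (-1) ∧
      Run L w s' q' y₂ (e + 1) k₂ ∧ x = y₁ ++ o ++ y₂ ∧ k = k₁ + k₂ + 1 := by
  intro k
  induction k using Nat.strong_induction_on with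
  | _ k ih =>
    intro q q' x e hrun he
    cases hrun with
    | nil q => omega
    | @cons _ r _ o x' d e' k' hst hrest =>
      rcases hst.delta_mem' L w with hd | hd | hd
      · subst hd
        refine ⟨q, r, o, [], x', 0, k', Run.nil q, hst, ?_, by simp, by omega⟩
        rw [show (-1 : ℤ) + e' + 1 = e' by ring]
        exact hrest
      · subst hd
        have he' : e' < 0 := by omega
        obtain ⟨s, s', o₂, y₁, y₂, k₁, k₂, hA, hS, hB, hx, hk⟩ :=
          ih k' (by omega) hrest he'
        refine ⟨s, s', o₂, o ++ y₁, y₂, k₁ + 1, k₂, ?_, hS, ?_, by simp [hx], by omega⟩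
        · have := Run.cons hst hA
          simpa using this
        · rw [show (0 : ℤ) + e' + 1 = e' + 1 by ring]
          exact hB
      · subst hd
        have he' : e' < 0 := by omega
        obtain ⟨s, s', o₂, y₁, y₂, k₁, k₂, hA, hS, hB, hx, hk⟩ :=
          ih k' (by omega) hrest he'
        have hB' : e' + 1 < 0 := by omega
        obtain ⟨s₂, s₂', o₃, z₁, z₂, m₁, m₂, hA₂, hS₂, hB₂, hy, hm⟩ :=
          ih k₂ (by omega) hB hB'
        -- front zero run : step(+1) ++ hA(0) ++ hS(-1) ++ hA₂(0)
        have front : Run L w q s₂ ((o ++ y₁ ++ o₂) ++ z₁) 0 ((k₁ + 1 + 1) + m₁) := by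
          have h1 : Run L w q s (o ++ y₁) (1 + 0) (k₁ + 1) := Run.cons hst hA
          have h2 : Run L w q s' ((o ++ y₁) ++ o₂) ((1 + 0) + -1) ((k₁ + 1) + 1) :=
            h1.append L w (Run.single L w hS)
          have h3 := h2.append L w hA₂
          rw [show (0 : ℤ) = 1 + 0 + -1 + 0 by ring]
          exact h3
        refine ⟨s₂, s₂', o₃, (o ++ y₁ ++ o₂) ++ z₁, z₂, (k₁ + 1 + 1) + m₁, m₂,
          front, hS₂, ?_, by simp [hx, hy], by omega⟩
        rw [show (1 : ℤ) + e' + 1 = e' + 1 + 1 by ring]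
        exact hB₂

/-- Splitting a run with positive total increment at the first time the counter goes one
above its initial value. -/
lemma run_split_pos {k : ℕ} {q q' : Q α} {x : List α} {e : ℤ}
    (hrun : Run L w q q' x e k) (he : 0 < e) :
    ∃ s s' o y₁ y₂ k₁ k₂, Run L w q s y₁ 0 k₁ ∧ Step L w s s' o 1 ∧
      Run L w s' q' y₂ (e - 1) k₂ ∧ x = y₁ ++ o ++ y₂ ∧ k = k₁ + k₂ + 1 := by
  obtain ⟨s, s', o, y₁, y₂, k₁, k₂, hA, hS, hB, hx, hk⟩ :=
    run_split_neg L w k (hrun.flip L w) (by omega)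
  refine ⟨flipQ s, flipQ s', o, y₁, y₂, k₁, k₂, ?_, ?_, ?_, hx, hk⟩
  · have := hA.flip L w
    rw [flipQ_flipQ] at this
    simpa using this
  · have := hS.flip L w
    simpa using this
  · have := hB.flip L w
    rw [flipQ_flipQ, show (-(-e + 1) : ℤ) = e - 1 by ring] at this
    exact this


open scoped Classical in
/-- Number of occurrences of `w` in a list of factors (with a pinned decidability instance). -/
noncomputable def cnt (w : List α) (m : List (List α)) : ℕ :=
  List.countP (fun u => decide (u = w)) m

@[simp] lemma cnt_nil (w : List α) : cnt w ([] : List (List α)) = 0 := by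
  simp [cnt]

open scoped Classical in
lemma cnt_cons (w u : List α) (m : List (List α)) :
    cnt w (u :: m) = cnt w m + if u = w then 1 else 0 := by
  classical
  simp [cnt, List.countP_cons]


/-! ### Runs versus pairs of factorizations -/

open scoped Classical in
/-- Soundness: a run into an aligned state yields the remaining factor lists of both tracks. -/
lemma factorizations_of_run {q q' : Q α} {x : List α} {d : ℤ} {k : ℕ}
    (hrun : Run L w q q' x d k) (hq' : q'.1 = []) :
    ∃ m₁ m₂ : List (List α), (∀ u ∈ m₁, u ∈ L) ∧ (∀ u ∈ m₂, u ∈ L) ∧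
      m₁.flatten = q.1 ++ x ∧ m₂.flatten = x ∧
      d = sg q.2 * ((cnt w m₁ : ℤ) - cnt w m₂) := by
  induction hrun with
  | nil q =>
    exact ⟨[], [], by simp, by simp, by simp [hq'], by simp, by simp⟩
  | @cons q r q' o x d e k hst hrest ih =>
    obtain ⟨m₁, m₂, hm₁, hm₂, hf₁, hf₂, hd⟩ := ih hq'
    cases hst with
    | short u t b hu hp =>
      obtain ⟨s, rfl⟩ := hp
      rw [List.drop_left] at hf₁ hd
      refine ⟨u :: m₁, m₂, ?_, hm₂, ?_, by simpa using hf₂, ?_⟩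
      · intro v hv
        rcases List.mem_cons.mp hv with rfl | hv'
        exacts [hu, hm₁ v hv']
      · simp only [List.flatten_cons]
        simp only at hf₁
        rw [hf₁]
        simp
      · subst hd
        by_cases huw : u = w
        · simp only [huw]
          simp [delta, cnt_cons] <;> push_cast <;> ring
        · simp [delta, cnt_cons, huw, Ne.symm huw] <;> push_cast <;> ring
    | long u t b hu hp hne =>
      obtain ⟨s, rfl⟩ := hp
      rw [List.drop_left] at hf₁ hd ⊢
      refine ⟨(t ++ s) :: m₂, m₁, ?_, hm₁, ?_, by simpa using hf₁, ?_⟩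
      · intro v hv
        rcases List.mem_cons.mp hv with rfl | hv'
        exacts [hu, hm₂ v hv']
      · simp only [List.flatten_cons, hf₂, List.append_assoc]
      · subst hd
        by_cases huw : t ++ s = w
        · simp only [huw]
          simp [delta, cnt_cons] <;> push_cast <;> ring
        · simp [delta, cnt_cons, huw, Ne.symm huw] <;> push_cast <;> ring
    | swap b =>
      refine ⟨m₂, m₁, hm₂, hm₁, by simpa using hf₂, by simpa using hf₁, ?_⟩
      subst hd
      simp
      ring

open scoped Classical in
/-- Completeness: two factor lists covering `t ++ x` and `x` yield a run. -/
lemma run_of_factorizations : ∀ n : ℕ, ∀ (t x : List α) (b : Bool) (m₁ m₂ : List (List α)),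
    m₁.length + m₂.length = n →
    (∀ u ∈ m₁, u ∈ L) → (∀ u ∈ m₂, u ∈ L) →
    m₁.flatten = t ++ x → m₂.flatten = x →
    ∃ b' k, Run L w (t, b) ([], b') x (sg b * ((cnt w m₁ : ℤ) - cnt w m₂)) k := by
  intro n
  induction n using Nat.strong_induction_on with
  | _ n ih =>
    intro t x b m₁ m₂ hn hm₁ hm₂ hf₁ hf₂
    match m₁ with
    | u :: rest =>
      by_cases hp : u <+: t
      · -- short step
        obtain ⟨s, rfl⟩ := hp
        have hrest : rest.flatten = s ++ x := by
          have h1 := hf₁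
          rw [List.flatten_cons, List.append_assoc] at h1
          exact List.append_cancel_left h1
        obtain ⟨b', k, hr⟩ := ih (rest.length + m₂.length) (by simp at hn; omega)
          s x b rest m₂ rfl (fun v hv => hm₁ v (by simp [hv])) hm₂ hrest hf₂
        refine ⟨b', k + 1, ?_⟩
        have hstep : Step L w (u ++ s, b) (s, b) [] (delta w u b) := by
          have h2 := Step.short (L := L) (w := w) u (u ++ s) b (hm₁ u (by simp)) ⟨s, rfl⟩
          simpa [List.drop_left] using h2
        have hrun := Run.cons hstep hr
        simp only [List.nil_append] at hrun
        rw [show sg b * ((cnt w (u :: rest) : ℤ) - cnt w m₂)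
            = delta w u b + sg b * ((cnt w rest : ℤ) - cnt w m₂) by
          by_cases huw : u = w
          · simp only [huw]
            simp [delta, cnt_cons] <;> push_cast <;> ring
          · simp [delta, cnt_cons, huw, Ne.symm huw]]
        exact hrun
      · -- long step
        have hut : u <+: t ++ x := hf₁ ▸ ⟨rest.flatten, by simp⟩
        have htu : t <+: u := by
          rcases List.prefix_or_prefix_of_prefix hut (List.prefix_append t x) with h | h
          · exact absurd h hp
          · exact h
        obtain ⟨o, rfl⟩ := htu
        have hne : t ≠ t ++ o := by
          intro hh
          apply hp
          have ho : o = [] := by simpa using hh.symm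
          simp [ho]
        have hx : x = o ++ rest.flatten := by
          have h1 := hf₁
          rw [List.flatten_cons, List.append_assoc] at h1
          exact (List.append_cancel_left h1).symm
        obtain ⟨b', k, hr⟩ := ih (m₂.length + rest.length) (by simp at hn ⊢; omega)
          o rest.flatten (!b) m₂ rest rfl hm₂ (fun v hv => hm₁ v (by simp [hv]))
          (by rw [hf₂, hx]) rfl
        refine ⟨b', k + 1, ?_⟩
        have hstep : Step L w (t, b) (o, !b) o (delta w (t ++ o) b) := by
          have h2 := Step.long (L := L) (w := w) (t ++ o) t b (hm₁ (t ++ o) (by simp))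
            ⟨o, rfl⟩ hne
          simpa [List.drop_left] using h2
        have hrun := Run.cons hstep hr
        rw [show sg b * ((cnt w ((t ++ o) :: rest) : ℤ) - cnt w m₂)
            = delta w (t ++ o) b + sg (!b) * ((cnt w m₂ : ℤ) - cnt w rest) by
          by_cases huw : t ++ o = w
          · simp only [huw]
            simp [delta, cnt_cons] <;> push_cast <;> ring
          · simp [delta, cnt_cons, huw, Ne.symm huw] <;> push_cast <;> ring]
        rw [hx]
        exact hrun
    | [] =>
      have htx : t = [] ∧ x = [] := by
        have h1 := hf₁
        simp only [List.flatten_nil] at h1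
        exact List.append_eq_nil_iff.mp h1.symm
      obtain ⟨rfl, rfl⟩ := htx
      match m₂ with
      | [] => exact ⟨b, 0, by simpa using Run.nil (L := L) (w := w) ([], b)⟩
      | v :: rest =>
        have hv : v = [] := by
          have h1 := hf₂
          simp only [List.flatten_cons] at h1
          exact (List.append_eq_nil_iff.mp h1).1
        subst hv
        have hrest : rest.flatten = [] := by simpa using hf₂
        obtain ⟨b', k, hr⟩ := ih rest.length (by simp at hn; omega)
          [] [] (!b) rest [] (by simp) (fun v hv => hm₂ v (by simp [hv])) (by simp)
          (by simpa using hrest) rfl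
        have hstep1 : Step L w ([], b) ([], !b) [] 0 := Step.swap b
        have hstep2 : Step L w ([], !b) ([], !b) [] (delta w [] (!b)) := by
          have h2 := Step.short (L := L) (w := w) [] [] (!b) (hm₂ [] (by simp)) List.nil_prefix
          simpa using h2
        refine ⟨b', k + 2, ?_⟩
        have hrun := Run.cons hstep1 (Run.cons hstep2 (by simpa using hr))
        rw [show sg b * ((cnt w ([] : List (List α)) : ℤ) - cnt w ([] :: rest))
            = 0 + (delta w [] (!b) + (sg (!b) * ((cnt w rest : ℤ) - cnt w ([] : List (List α))))) by
          by_cases huw : ([] : List α) = w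
          · simp only [← huw]
            simp [delta, cnt_cons] <;> push_cast <;> ring
          · simp [delta, cnt_cons, huw, Ne.symm huw] <;> push_cast <;> ring]
        simpa using hrun

end Machine


/-! ### The grammar -/

section Grammar

variable {α : Type uT}

/-- Nonterminals of the grammar (before relabeling into `ℕ`). -/
inductive NTt (α : Type uT) where
  | start : NTt α
  | Z (w : List α) (q q' : Q α) : NTt α
  | G (w : List α) (q q' : Q α) : NTt α
  | N (w : List α) (q q' : Q α) : NTt α

open scoped Classical

/-- All possible overhangs: suffixes of words of `ls`. -/
def tsList (ls : List (List α)) : List (List α) := ls.flatMap List.tails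

/-- All states of the machine. -/
def qsList (ls : List (List α)) : List (Q α) :=
  (tsList ls).flatMap (fun t => [(t, true), (t, false)])

lemma mem_qsList {ls : List (List α)} {q : Q α} :
    q ∈ qsList ls ↔ ∃ u ∈ ls, q.1 <:+ u := by
  obtain ⟨t, b⟩ := q
  simp only [qsList, tsList, List.mem_flatMap, List.mem_tails, List.mem_cons,
    List.not_mem_nil, or_false, Prod.mk.injEq]
  constructor
  · rintro ⟨t', ⟨u, hu, ht'⟩, (⟨rfl, -⟩ | ⟨rfl, -⟩)⟩ <;> exact ⟨u, hu, ht'⟩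
  · rintro ⟨u, hu, ht⟩
    cases b
    · exact ⟨t, ⟨u, hu, ht⟩, Or.inr ⟨rfl, rfl⟩⟩
    · exact ⟨t, ⟨u, hu, ht⟩, Or.inl ⟨rfl, rfl⟩⟩

lemma mem_ite_nil {c : Prop} [Decidable c] {β : Type*} {l : List β} {a : β} :
    (a ∈ if c then l else []) ↔ c ∧ a ∈ l := by
  split_ifs with h <;> simp [h]

/-- The list of steps out of a given state. -/
noncomputable def stepsFrom (ls : List (List α)) (w : List α) (q : Q α) :
    List (Q α × List α × ℤ) :=
  (ls.flatMap fun u =>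
    (if u <+: q.1 then [((q.1.drop u.length, q.2), ([] : List α), delta w u q.2)] else []) ++
    (if q.1 <+: u ∧ q.1 ≠ u then
      [((u.drop q.1.length, !q.2), u.drop q.1.length, delta w u q.2)] else []))
  ++ (if q.1 = [] then [((([] : List α), !q.2), ([] : List α), (0 : ℤ))] else [])

lemma stepsFrom_spec {L : Language α} {ls : List (List α)} (hls : ∀ u, u ∈ ls ↔ u ∈ L)
    {w : List α} {q q' : Q α} {o : List α} {d : ℤ} :
    (q', o, d) ∈ stepsFrom ls w q ↔ Step L w q q' o d := by
  obtain ⟨t, b⟩ := q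
  constructor
  · intro hmem
    simp only [stepsFrom, List.mem_append, List.mem_flatMap, mem_ite_nil, List.mem_cons,
      List.not_mem_nil, or_false, Prod.mk.injEq] at hmem
    rcases hmem with ⟨u, hu, (⟨hp, hq', ho, hd⟩ | ⟨⟨hp, hne⟩, hq', ho, hd⟩)⟩ | ⟨ht, hq', ho, hd⟩
    · subst hd
      obtain ⟨rfl⟩ : q' = (List.drop u.length t, b) := by
        cases q'; simp_all
      subst ho
      exact Step.short u t b ((hls u).1 hu) hp
    · obtain ⟨rfl⟩ : q' = (List.drop t.length u, !b) := by
        cases q'; simp_all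
      subst ho hd
      exact Step.long u t b ((hls u).1 hu) hp hne
    · obtain ⟨rfl⟩ : q' = (([] : List α), !b) := by
        cases q'; simp_all
      subst ho hd ht
      exact Step.swap b
  · intro hst
    cases hst with
    | short u t b hu hp =>
      simp only [stepsFrom, List.mem_append, List.mem_flatMap, mem_ite_nil, List.mem_cons,
        List.not_mem_nil, or_false]
      exact Or.inl ⟨u, (hls u).2 hu, Or.inl ⟨hp, rfl⟩⟩
    | long u t b hu hp hne =>
      simp only [stepsFrom, List.mem_append, List.mem_flatMap, mem_ite_nil, List.mem_cons,
        List.not_mem_nil, or_false]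
      exact Or.inl ⟨u, (hls u).2 hu, Or.inr ⟨⟨hp, hne⟩, rfl⟩⟩
    | swap b =>
      simp only [stepsFrom, List.mem_append, List.mem_flatMap, mem_ite_nil, List.mem_cons,
        List.not_mem_nil, or_false]
      right
      simp

lemma Step.mem_qs {L : Language α} {ls : List (List α)} (hls : ∀ u, u ∈ ls ↔ u ∈ L)
    {w : List α} {q q' : Q α} {o : List α} {d : ℤ}
    (hst : Step L w q q' o d) (hq : q ∈ qsList ls) : q' ∈ qsList ls := by
  rw [mem_qsList] at hq ⊢
  obtain ⟨v, hv, hsuf⟩ := hq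
  cases hst with
  | short u t b hu hp => exact ⟨v, hv, (List.drop_suffix _ _).trans hsuf⟩
  | long u t b hu hp hne => exact ⟨u, (hls u).2 hu, List.drop_suffix _ _⟩
  | swap b => exact ⟨v, hv, hsuf⟩

lemma Run.mem_qs {L : Language α} {ls : List (List α)} (hls : ∀ u, u ∈ ls ↔ u ∈ L)
    {w : List α} {q q' : Q α} {x : List α} {d : ℤ} {k : ℕ}
    (hrun : Run L w q q' x d k) (hq : q ∈ qsList ls) : q' ∈ qsList ls := by
  induction hrun with
  | nil q => exact hq
  | cons hst _ ih => exact ih (hst.mem_qs hls hq)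

/-- The rules of the grammar. -/
noncomputable def rulesList (ls : List (List α)) : List (ContextFreeRule α (NTt α)) :=
  ls.flatMap fun w =>
    [⟨.start, [.nonterminal (.G w ([], true) ([], true))]⟩,
     ⟨.start, [.nonterminal (.G w ([], true) ([], false))]⟩] ++
    ((qsList ls).flatMap fun q =>
      [⟨.Z w q q, []⟩] ++
      ((qsList ls).flatMap fun q' =>
        [⟨.N w q q', [.nonterminal (.Z w q q')]⟩,
         ⟨.N w q q', [.nonterminal (.G w q q')]⟩] ++
        ((stepsFrom ls w q).flatMap fun p =>
          (if p.2.2 = 0 then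
            [⟨.Z w q q', p.2.1.map .terminal ++ [.nonterminal (.Z w p.1 q')]⟩] else []) ++
          ((qsList ls).flatMap fun s =>
            (stepsFrom ls w s).flatMap fun p₂ =>
              if (p.2.2 = 1 ∧ p₂.2.2 = -1) ∨ (p.2.2 = -1 ∧ p₂.2.2 = 1) then
                [⟨.Z w q q', p.2.1.map .terminal ++ [.nonterminal (.Z w p.1 s)] ++
                  p₂.2.1.map .terminal ++ [.nonterminal (.Z w p₂.1 q')]⟩] else [])) ++
        ((qsList ls).flatMap fun r =>
          (stepsFrom ls w r).flatMap fun p =>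
            if p.2.2 = 1 then
              [⟨.G w q q', [.nonterminal (.Z w q r)] ++ p.2.1.map .terminal ++
                [.nonterminal (.N w p.1 q')]⟩] else [])))

/-- Specification of the rules. -/
inductive RuleSpec (ls : List (List α)) : ContextFreeRule α (NTt α) → Prop
  | start (w : List α) (hw : w ∈ ls) (b : Bool) :
      RuleSpec ls ⟨.start, [.nonterminal (.G w ([], true) ([], b))]⟩
  | znil (w : List α) (hw : w ∈ ls) (q : Q α) (hq : q ∈ qsList ls) :
      RuleSpec ls ⟨.Z w q q, []⟩
  | nz (w : List α) (hw : w ∈ ls) (q : Q α) (hq : q ∈ qsList ls) (q' : Q α)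
      (hq' : q' ∈ qsList ls) : RuleSpec ls ⟨.N w q q', [.nonterminal (.Z w q q')]⟩
  | ng (w : List α) (hw : w ∈ ls) (q : Q α) (hq : q ∈ qsList ls) (q' : Q α)
      (hq' : q' ∈ qsList ls) : RuleSpec ls ⟨.N w q q', [.nonterminal (.G w q q')]⟩
  | z0 (w : List α) (hw : w ∈ ls) (q : Q α) (hq : q ∈ qsList ls) (q' : Q α)
      (hq' : q' ∈ qsList ls) (r : Q α) (o : List α) (hs : (r, o, (0 : ℤ)) ∈ stepsFrom ls w q) :
      RuleSpec ls ⟨.Z w q q', o.map .terminal ++ [.nonterminal (.Z w r q')]⟩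
  | zpm (w : List α) (hw : w ∈ ls) (q : Q α) (hq : q ∈ qsList ls) (q' : Q α)
      (hq' : q' ∈ qsList ls) (r : Q α) (o : List α) (d : ℤ)
      (hs₁ : (r, o, d) ∈ stepsFrom ls w q) (s : Q α) (hqs : s ∈ qsList ls) (s' : Q α)
      (o₂ : List α) (d₂ : ℤ) (hs₂ : (s', o₂, d₂) ∈ stepsFrom ls w s)
      (hd : (d = 1 ∧ d₂ = -1) ∨ (d = -1 ∧ d₂ = 1)) :
      RuleSpec ls ⟨.Z w q q', o.map .terminal ++ [.nonterminal (.Z w r s)] ++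
        o₂.map .terminal ++ [.nonterminal (.Z w s' q')]⟩
  | g (w : List α) (hw : w ∈ ls) (q : Q α) (hq : q ∈ qsList ls) (q' : Q α)
      (hq' : q' ∈ qsList ls) (r : Q α) (hr : r ∈ qsList ls) (r' : Q α) (o : List α)
      (hs : (r', o, (1 : ℤ)) ∈ stepsFrom ls w r) :
      RuleSpec ls ⟨.G w q q', [.nonterminal (.Z w q r)] ++ o.map .terminal ++
        [.nonterminal (.N w r' q')]⟩

lemma mem_rulesList {ls : List (List α)} {r : ContextFreeRule α (NTt α)} :
    r ∈ rulesList ls ↔ RuleSpec ls r := by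
  constructor
  · intro hmem
    simp only [rulesList, List.mem_flatMap, List.mem_append, List.mem_cons, List.not_mem_nil,
      or_false, mem_ite_nil] at hmem
    obtain ⟨w, hw, hmem⟩ := hmem
    rcases hmem with (rfl | rfl) | ⟨q, hq, rfl | ⟨q', hq', hmem⟩⟩
    · exact RuleSpec.start w hw true
    · exact RuleSpec.start w hw false
    · exact RuleSpec.znil w hw q hq
    · rcases hmem with ((rfl | rfl) | ⟨p, hp, ⟨hd, rfl⟩ | ⟨s, hqs, p₂, hp₂, hd, rfl⟩⟩) |
        ⟨r', hr', p, hp, hd, rfl⟩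
      · exact RuleSpec.nz w hw q hq q' hq'
      · exact RuleSpec.ng w hw q hq q' hq'
      · exact RuleSpec.z0 w hw q hq q' hq' p.1 p.2.1 (by rw [← hd]; exact hp)
      · exact RuleSpec.zpm w hw q hq q' hq' p.1 p.2.1 p.2.2 hp s hqs p₂.1 p₂.2.1 p₂.2.2 hp₂ hd
      · exact RuleSpec.g w hw q hq q' hq' r' hr' p.1 p.2.1 (by rw [← hd]; exact hp)
  · intro hr
    cases hr with
    | start w hw b =>
      simp only [rulesList, List.mem_flatMap, List.mem_append, List.mem_cons]
      refine ⟨w, hw, Or.inl ?_⟩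
      cases b
      · exact Or.inr (Or.inl rfl)
      · exact Or.inl rfl
    | znil w hw q hq =>
      simp only [rulesList, List.mem_flatMap, List.mem_append, List.mem_cons, List.not_mem_nil,
        or_false]
      exact ⟨w, hw, Or.inr ⟨q, hq, Or.inl rfl⟩⟩
    | nz w hw q hq q' hq' =>
      simp only [rulesList, List.mem_flatMap, List.mem_append, List.mem_cons, List.not_mem_nil,
        or_false]
      exact ⟨w, hw, Or.inr ⟨q, hq, Or.inr ⟨q', hq', Or.inl (Or.inl (Or.inl rfl))⟩⟩⟩
    | ng w hw q hq q' hq' =>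
      simp only [rulesList, List.mem_flatMap, List.mem_append, List.mem_cons, List.not_mem_nil,
        or_false]
      exact ⟨w, hw, Or.inr ⟨q, hq, Or.inr ⟨q', hq', Or.inl (Or.inl (Or.inr rfl))⟩⟩⟩
    | z0 w hw q hq q' hq' r' o hs =>
      simp only [rulesList, List.mem_flatMap, List.mem_append, List.mem_cons, List.not_mem_nil,
        or_false, mem_ite_nil]
      refine ⟨w, hw, Or.inr ⟨q, hq, Or.inr ⟨q', hq',
        Or.inl (Or.inr ⟨(r', o, 0), hs, Or.inl ?_⟩)⟩⟩⟩
      simp [mem_ite_nil]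
    | zpm w hw q hq q' hq' r' o d hs₁ s hqs s' o₂ d₂ hs₂ hd =>
      simp only [rulesList, List.mem_flatMap, List.mem_append, List.mem_cons, List.not_mem_nil,
        or_false, mem_ite_nil]
      refine ⟨w, hw, Or.inr ⟨q, hq, Or.inr ⟨q', hq',
        Or.inl (Or.inr ⟨(r', o, d), hs₁, Or.inr ⟨s, hqs, (s', o₂, d₂), hs₂, ?_⟩⟩)⟩⟩⟩
      simp only [mem_ite_nil]
      exact ⟨hd, by simp⟩
    | g w hw q hq q' hq' r' hr' r'' o hs =>
      simp only [rulesList, List.mem_flatMap, List.mem_append, List.mem_cons, List.not_mem_nil,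
        or_false, mem_ite_nil]
      refine ⟨w, hw, Or.inr ⟨q, hq, Or.inr ⟨q', hq',
        Or.inr ⟨r', hr', (r'', o, 1), hs, ?_⟩⟩⟩⟩
      simp [mem_ite_nil]

end Grammar


/-! ### Semantics and soundness -/

section Semantics

variable {α : Type uT}

open scoped Classical

/-- The target language. -/
def targetLang (L : Language α) : Language α :=
  {x | x ∈ L∗ ∧ ∃ l₁ l₂, IsFactorization L x l₁ ∧ IsFactorization L x l₂ ∧ ¬ l₁.Perm l₂}

/-- Semantics of the nonterminals. -/
def Msem (L : Language α) : NTt α → Language α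
  | .start => targetLang L
  | .Z w q q' => {x | ∃ k, Run L w q q' x 0 k}
  | .G w q q' => {x | ∃ e k, 1 ≤ e ∧ Run L w q q' x e k}
  | .N w q q' => {x | ∃ e k, 0 ≤ e ∧ Run L w q q' x e k}

lemma stepsFrom_mem_qs {ls : List (List α)} {w : List α} {q : Q α}
    {p : Q α × List α × ℤ} (hp : p ∈ stepsFrom ls w q) (hq : q ∈ qsList ls) :
    p.1 ∈ qsList ls := by
  obtain ⟨q', o, d⟩ := p
  have hst : Step (α := α) {u | u ∈ ls} w q q' o d :=
    (stepsFrom_spec (fun u => Iff.rfl)).1 hp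
  exact hst.mem_qs (fun u => Iff.rfl) hq

lemma ruleSpec_closed {L : Language α} {ls : List (List α)} (hls : ∀ u, u ∈ ls ↔ u ∈ L)
    {r : ContextFreeRule α (NTt α)} (hr : RuleSpec ls r) :
    ∀ x, Inst (Msem L) r.output x → x ∈ Msem L r.input := by
  cases hr with
  | start w hw b =>
    intro x hx
    obtain ⟨e, k, he, hrun⟩ := Inst.singleton_nt hx
    obtain ⟨m₁, m₂, hm₁, hm₂, hf₁, hf₂, hd⟩ := factorizations_of_run L w hrun rfl
    simp only [sg] at hd
    norm_num at hd
    refine ⟨Language.mem_kstar.2 ⟨m₂, hf₂.symm, hm₂⟩, m₁, m₂,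
      ⟨hm₁, by simpa using hf₁⟩, ⟨hm₂, hf₂⟩, ?_⟩
    intro hperm
    have hc : cnt w m₁ = cnt w m₂ := hperm.countP_eq _
    omega
  | znil w hw q hq =>
    intro x hx
    cases hx
    exact ⟨0, Run.nil q⟩
  | nz w hw q hq q' hq' =>
    intro x hx
    obtain ⟨k, hrun⟩ := Inst.singleton_nt hx
    exact ⟨0, k, le_refl 0, hrun⟩
  | ng w hw q hq q' hq' =>
    intro x hx
    obtain ⟨e, k, he, hrun⟩ := Inst.singleton_nt hx
    exact ⟨e, k, by omega, hrun⟩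
  | z0 w hw q hq q' hq' r o hs =>
    intro x hx
    obtain ⟨y₁, y₂, rfl, h₁, h₂⟩ := Inst.split hx
    have hy₁ : y₁ = o := Inst.terminal_eq h₁
    obtain ⟨k, hrun⟩ := Inst.singleton_nt h₂
    have hst : Step L w q r o 0 := (stepsFrom_spec hls).1 hs
    refine ⟨k + 1, ?_⟩
    rw [hy₁]
    simpa using Run.cons hst hrun
  | zpm w hw q hq q' hq' r o d hs₁ s hqs s' o₂ d₂ hs₂ hd =>
    intro x hx
    obtain ⟨y, y₄, rfl, h₁, h₂⟩ := Inst.split hx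
    obtain ⟨y', y₃, rfl, h₃, h₄⟩ := Inst.split h₁
    obtain ⟨y₁, y₂, rfl, h₅, h₆⟩ := Inst.split h₃
    have hy₁ : y₁ = o := Inst.terminal_eq h₅
    have hy₃ : y₃ = o₂ := Inst.terminal_eq h₄
    obtain ⟨k₁, hrun₁⟩ := Inst.singleton_nt h₆
    obtain ⟨k₂, hrun₂⟩ := Inst.singleton_nt h₂
    have hst₁ : Step L w q r o d := (stepsFrom_spec hls).1 hs₁
    have hst₂ : Step L w s s' o₂ d₂ := (stepsFrom_spec hls).1 hs₂
    have hbig := Run.cons hst₁ (hrun₁.append L w (Run.cons hst₂ hrun₂))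
    have hz : d + (0 + (d₂ + 0)) = 0 := by rcases hd with ⟨rfl, rfl⟩ | ⟨rfl, rfl⟩ <;> ring
    rw [hz] at hbig
    have heq : o ++ (y₂ ++ (o₂ ++ y₄)) = y₁ ++ y₂ ++ y₃ ++ y₄ := by
      rw [hy₁, hy₃]
      simp
    rw [heq] at hbig
    exact ⟨_, hbig⟩
  | g w hw q hq q' hq' r hr r' o hs =>
    intro x hx
    obtain ⟨y, y₃, rfl, h₁, h₂⟩ := Inst.split hx
    obtain ⟨y₁, y₂, rfl, h₃, h₄⟩ := Inst.split h₁
    obtain ⟨k₁, hrun₁⟩ := Inst.singleton_nt h₃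
    have hy₂ : y₂ = o := Inst.terminal_eq h₄
    obtain ⟨e, k₂, he, hrun₂⟩ := Inst.singleton_nt h₂
    have hst : Step L w r r' o 1 := (stepsFrom_spec hls).1 hs
    have hbig := hrun₁.append L w (Run.cons hst hrun₂)
    have heq : y₁ ++ (o ++ y₃) = y₁ ++ y₂ ++ y₃ := by
      rw [hy₂]
      simp
    rw [heq] at hbig
    exact ⟨0 + (1 + e), _, by omega, hbig⟩

end Semantics


/-! ### The big grammar and completeness -/

section Completeness

variable {α : Type uT}

open scoped Classical

/-- The grammar over the large nonterminal type. -/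
noncomputable abbrev gBig (ls : List (List α)) : CFG.{uT, uT} α :=
  ⟨NTt α, .start, (rulesList ls).toFinset⟩

lemma mem_gBig_rules {ls : List (List α)} {r : ContextFreeRule α (NTt α)} :
    r ∈ (gBig ls).rules ↔ RuleSpec ls r := by
  rw [show (gBig ls).rules = (rulesList ls).toFinset from rfl, List.mem_toFinset]
  exact mem_rulesList

lemma derives_of_spec {ls : List (List α)} {r : ContextFreeRule α (NTt α)}
    (hr : RuleSpec ls r) :
    (gBig ls).Derives [Symbol.nonterminal r.input] r.output :=
  CFG.Produces.single ⟨r, mem_gBig_rules.2 hr, ContextFreeRule.Rewrites.input_output⟩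

lemma derives_two {ls : List (List α)} {p₁ p₂ : List (Symbol α (NTt α))} {A B : NTt α}
    {y₁ y₂ : List (Symbol α (NTt α))}
    (h₁ : (gBig ls).Derives [Symbol.nonterminal A] y₁)
    (h₂ : (gBig ls).Derives [Symbol.nonterminal B] y₂) :
    (gBig ls).Derives (p₁ ++ [Symbol.nonterminal A] ++ p₂ ++ [Symbol.nonterminal B])
      (p₁ ++ y₁ ++ p₂ ++ y₂) := by
  have s₁ := (h₁.append_left p₁).append_right (p₂ ++ [Symbol.nonterminal B])
  have s₂ := h₂.append_left (p₁ ++ y₁ ++ p₂)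
  have e₂ : (p₁ ++ y₁ ++ p₂) ++ [Symbol.nonterminal B]
      = (p₁ ++ y₁) ++ (p₂ ++ [Symbol.nonterminal B]) := by simp
  rw [e₂] at s₂
  have e₁ : p₁ ++ [Symbol.nonterminal A] ++ p₂ ++ [Symbol.nonterminal B]
      = (p₁ ++ [Symbol.nonterminal A]) ++ (p₂ ++ [Symbol.nonterminal B]) := by simp
  rw [e₁]
  exact s₁.trans s₂

open scoped Classical in
lemma cz {L : Language α} {ls : List (List α)} (hls : ∀ u, u ∈ ls ↔ u ∈ L)
    {w : List α} (hw : w ∈ ls) :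
    ∀ k : ℕ, ∀ (q q' : Q α) (x : List α) (e : ℤ), Run L w q q' x e k → e = 0 →
      q ∈ qsList ls →
      (gBig ls).Derives [Symbol.nonterminal (NTt.Z w q q')] (x.map Symbol.terminal) := by
  intro k
  induction k using Nat.strong_induction_on with
  | _ k ih =>
    intro q q' x e hrun he hq
    cases hrun with
    | nil q => exact derives_of_spec (RuleSpec.znil w hw q hq)
    | @cons _ r _ o x' d e' k' hst hrest =>
      have hr : r ∈ qsList ls := hst.mem_qs hls hq
      rcases hst.delta_mem' L w with hd | hd | hd
      · -- d = -1, so e' = 1 > 0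
        subst hd
        obtain ⟨s, s', o₂, y₁, y₂, k₁, k₂, hA, hS, hB, hx, hk⟩ :=
          run_split_pos L w hrest (by omega)
        have hs : s ∈ qsList ls := hA.mem_qs hls hr
        have hs' : s' ∈ qsList ls := hS.mem_qs hls hs
        have hq'2 : q' ∈ qsList ls := hB.mem_qs hls hs'
        have hrule := derives_of_spec (RuleSpec.zpm w hw q hq q' hq'2 r o (-1)
          ((stepsFrom_spec hls).2 hst) s hs s' o₂ 1 ((stepsFrom_spec hls).2 hS)
          (Or.inr ⟨rfl, rfl⟩))
        have hZ₁ := ih k₁ (by omega) r s y₁ 0 hA rfl hr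
        have hZ₂ := ih k₂ (by omega) s' q' y₂ (e' - 1) hB (by omega) hs'
        have hmain := hrule.trans (derives_two hZ₁ hZ₂)
        rw [hx]
        simpa using hmain
      · -- d = 0
        subst hd
        have hrule := derives_of_spec (RuleSpec.z0 w hw q hq q' (hrest.mem_qs hls hr) r o
          ((stepsFrom_spec hls).2 hst))
        have hZ := ih k' (by omega) r q' x' e' hrest (by omega) hr
        have hmain := hrule.trans (hZ.append_left (o.map Symbol.terminal))
        simpa using hmain
      · -- d = 1, so e' = -1 < 0
        subst hd
        obtain ⟨s, s', o₂, y₁, y₂, k₁, k₂, hA, hS, hB, hx, hk⟩ :=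
          run_split_neg L w k' hrest (by omega)
        have hs : s ∈ qsList ls := hA.mem_qs hls hr
        have hs' : s' ∈ qsList ls := hS.mem_qs hls hs
        have hq'2 : q' ∈ qsList ls := hB.mem_qs hls hs'
        have hrule := derives_of_spec (RuleSpec.zpm w hw q hq q' hq'2 r o 1
          ((stepsFrom_spec hls).2 hst) s hs s' o₂ (-1) ((stepsFrom_spec hls).2 hS)
          (Or.inl ⟨rfl, rfl⟩))
        have hZ₁ := ih k₁ (by omega) r s y₁ 0 hA rfl hr
        have hZ₂ := ih k₂ (by omega) s' q' y₂ (e' + 1) hB (by omega) hs'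
        have hmain := hrule.trans (derives_two hZ₁ hZ₂)
        rw [hx]
        simpa using hmain

open scoped Classical in
lemma cg {L : Language α} {ls : List (List α)} (hls : ∀ u, u ∈ ls ↔ u ∈ L)
    {w : List α} (hw : w ∈ ls) :
    ∀ k : ℕ, ∀ (q q' : Q α) (x : List α) (e : ℤ), Run L w q q' x e k → 1 ≤ e →
      q ∈ qsList ls →
      (gBig ls).Derives [Symbol.nonterminal (NTt.G w q q')] (x.map Symbol.terminal) := by
  intro k
  induction k using Nat.strong_induction_on with
  | _ k ih =>
    intro q q' x e hrun he hq
    obtain ⟨s, s', o, y₁, y₂, k₁, k₂, hA, hS, hB, hx, hk⟩ :=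
      run_split_pos L w hrun (by omega)
    have hs : s ∈ qsList ls := hA.mem_qs hls hq
    have hs' : s' ∈ qsList ls := hS.mem_qs hls hs
    have hq'2 : q' ∈ qsList ls := hB.mem_qs hls hs'
    have hrule := derives_of_spec (RuleSpec.g w hw q hq q' hq'2 s hs s' o
      ((stepsFrom_spec hls).2 hS))
    have hZ := cz hls hw k₁ q s y₁ 0 hA rfl hq
    have hN : (gBig ls).Derives [Symbol.nonterminal (NTt.N w s' q')]
        (y₂.map Symbol.terminal) := by
      rcases eq_or_lt_of_le (show (0 : ℤ) ≤ e - 1 by omega) with he' | he'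
      · have hZ₂ := cz hls hw k₂ s' q' y₂ (e - 1) hB (by omega) hs'
        exact (derives_of_spec (RuleSpec.nz w hw s' hs' q' hq'2)).trans hZ₂
      · have hG₂ := ih k₂ (by omega) s' q' y₂ (e - 1) hB (by omega) hs'
        exact (derives_of_spec (RuleSpec.ng w hw s' hs' q' hq'2)).trans hG₂
    have hmain := hrule.trans (derives_two (p₁ := []) hZ hN)
    rw [hx]
    simpa using hmain

end Completeness


/-! ### Language equality and final assembly -/

section Final

variable {α : Type uT}

open scoped Classical

lemma gBig_language {L : Language α} {ls : List (List α)} (hls : ∀ u, u ∈ ls ↔ u ∈ L) :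
    (gBig ls).language = targetLang L := by
  apply le_antisymm
  · exact language_subset_of_inst (gBig ls) (Msem L)
      (fun r hr x hx => ruleSpec_closed hls (mem_gBig_rules.1 hr) x hx)
  · intro x hx
    obtain ⟨hxK, l₁, l₂, ⟨h₁L, hf₁⟩, ⟨h₂L, hf₂⟩, hperm⟩ := hx
    have hex : ∃ wv : List α, cnt wv l₁ ≠ cnt wv l₂ := by
      by_contra hcon
      push_neg at hcon
      apply hperm
      haveI inst2 : DecidableEq (List α) := Classical.decEq _
      refine List.perm_iff_count.mpr fun a => ?_
      have ha := hcon a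
      rw [cnt, cnt] at ha
      rw [List.count_eq_countP, List.count_eq_countP]
      refine Eq.trans (List.countP_congr fun b _ => ?_)
        (Eq.trans ha (List.countP_congr fun b _ => ?_).symm)
      · by_cases hb : b = a <;> simp [hb]
      · by_cases hb : b = a <;> simp [hb]
    obtain ⟨wv, hne⟩ := hex
    have key : ∀ la lb : List (List α), (∀ u ∈ la, u ∈ L) → (∀ u ∈ lb, u ∈ L) →
        la.flatten = x → lb.flatten = x → cnt wv lb < cnt wv la →
        x ∈ (gBig ls).language := by
      intro la lb hla hlb hfa hfb hlt
      have hwL : wv ∈ L := by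
        have hmem : wv ∈ la := by
          by_contra hnm
          have hz : cnt wv la = 0 := by
            rw [cnt, List.countP_eq_zero]
            intro a ha
            simp only [decide_eq_true_eq]
            exact fun hh => hnm (hh ▸ ha)
          omega
        exact hla wv hmem
      have hw : wv ∈ ls := (hls wv).2 hwL
      obtain ⟨b', k, hrun⟩ := run_of_factorizations L wv (la.length + lb.length) [] x true
        la lb rfl hla hlb (by simpa using hfa) hfb
      have hd1 : (1 : ℤ) ≤ sg true * ((cnt wv la : ℤ) - cnt wv lb) := by
        simp only [sg, if_pos]
        omega
      have hq0 : (([] : List α), true) ∈ qsList ls := mem_qsList.2 ⟨wv, hw, by simp⟩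
      have hder := cg hls hw k ([], true) ([], b') x _ hrun hd1 hq0
      have hstart := derives_of_spec (RuleSpec.start wv hw b')
      rw [CFG.mem_language_iff]
      exact hstart.trans hder
    rcases Nat.lt_or_ge (cnt wv l₁) (cnt wv l₂) with hlt | hge
    · exact key l₂ l₁ h₂L h₁L hf₂ hf₁ hlt
    · exact key l₁ l₂ h₁L h₂L hf₁ hf₂ (by omega)

/-- All nonterminals used by the grammar. -/
def ntList (ls : List (List α)) : List (NTt α) :=
  .start :: (ls.flatMap fun w => (qsList ls).flatMap fun q => (qsList ls).flatMap fun q' =>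
    [.Z w q q', .G w q q', .N w q q'])

lemma mem_ntList_Z {ls : List (List α)} {w : List α} {q q' : Q α} (hw : w ∈ ls)
    (hq : q ∈ qsList ls) (hq' : q' ∈ qsList ls) : NTt.Z w q q' ∈ ntList ls := by
  simp only [ntList, List.mem_cons, List.mem_flatMap]
  exact Or.inr ⟨w, hw, q, hq, q', hq', by simp⟩

lemma mem_ntList_G {ls : List (List α)} {w : List α} {q q' : Q α} (hw : w ∈ ls)
    (hq : q ∈ qsList ls) (hq' : q' ∈ qsList ls) : NTt.G w q q' ∈ ntList ls := by
  simp only [ntList, List.mem_cons, List.mem_flatMap]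
  exact Or.inr ⟨w, hw, q, hq, q', hq', by simp⟩

lemma mem_ntList_N {ls : List (List α)} {w : List α} {q q' : Q α} (hw : w ∈ ls)
    (hq : q ∈ qsList ls) (hq' : q' ∈ qsList ls) : NTt.N w q q' ∈ ntList ls := by
  simp only [ntList, List.mem_cons, List.mem_flatMap]
  exact Or.inr ⟨w, hw, q, hq, q', hq', by simp⟩

/-- Encoding of nonterminals into `ℕ`. -/
noncomputable def encNT (ls : List (List α)) : NTt α → ℕ := fun A => (ntList ls).idxOf A

/-- Decoding of nonterminals from `ℕ`. -/
noncomputable def decNT (ls : List (List α)) : ℕ → NTt α := fun n => (ntList ls).getD n .start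

lemma dec_enc {ls : List (List α)} {A : NTt α} (hA : A ∈ ntList ls) :
    decNT ls (encNT ls A) = A := by
  have h1 : (ntList ls).idxOf A < (ntList ls).length := List.idxOf_lt_length_iff.2 hA
  rw [decNT, encNT, List.getD_eq_getElem _ _ h1, List.getElem_idxOf]

lemma sym_ok {ls : List (List α)} {A : NTt α} (hA : A ∈ ntList ls) :
    mapSym (decNT ls) (mapSym (encNT ls) (Symbol.nonterminal A : Symbol α (NTt α)))
      = Symbol.nonterminal A := by
  simp [mapSym, dec_enc hA]

lemma sym_ok_ter {ls : List (List α)} {a : α} :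
    mapSym (decNT ls) (mapSym (encNT ls) (Symbol.terminal a : Symbol α (NTt α)))
      = Symbol.terminal a := rfl

lemma relabel_ok {ls : List (List α)} : ∀ r ∈ (gBig ls).rules,
    decNT ls (encNT ls r.input) = r.input ∧
    ∀ s ∈ r.output, mapSym (decNT ls) (mapSym (encNT ls) s) = s := by
  intro r hr
  have hspec := mem_gBig_rules.1 hr
  cases hspec with
  | start w hw b =>
    have hq0 : (([] : List α), true) ∈ qsList ls := mem_qsList.2 ⟨w, hw, by simp⟩
    have hqb : (([] : List α), b) ∈ qsList ls := mem_qsList.2 ⟨w, hw, by simp⟩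
    refine ⟨dec_enc (by simp [ntList]), ?_⟩
    intro s hs
    simp only [List.mem_singleton] at hs
    subst hs
    exact sym_ok (mem_ntList_G hw hq0 hqb)
  | znil w hw q hq =>
    exact ⟨dec_enc (mem_ntList_Z hw hq hq), by simp⟩
  | nz w hw q hq q' hq' =>
    refine ⟨dec_enc (mem_ntList_N hw hq hq'), ?_⟩
    intro s hs
    simp only [List.mem_singleton] at hs
    subst hs
    exact sym_ok (mem_ntList_Z hw hq hq')
  | ng w hw q hq q' hq' =>
    refine ⟨dec_enc (mem_ntList_N hw hq hq'), ?_⟩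
    intro s hs
    simp only [List.mem_singleton] at hs
    subst hs
    exact sym_ok (mem_ntList_G hw hq hq')
  | z0 w hw q hq q' hq' r' o hs =>
    have hr' : r' ∈ qsList ls := stepsFrom_mem_qs hs hq
    refine ⟨dec_enc (mem_ntList_Z hw hq hq'), ?_⟩
    intro s hsm
    rcases List.mem_append.1 hsm with hsm | hsm
    · obtain ⟨a, -, rfl⟩ := List.mem_map.1 hsm
      exact sym_ok_ter
    · simp only [List.mem_singleton] at hsm
      subst hsm
      exact sym_ok (mem_ntList_Z hw hr' hq')
  | zpm w hw q hq q' hq' r' o d hs₁ ss hqs s' o₂ d₂ hs₂ hd =>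
    have hr' : r' ∈ qsList ls := stepsFrom_mem_qs hs₁ hq
    have hs'q : s' ∈ qsList ls := stepsFrom_mem_qs hs₂ hqs
    refine ⟨dec_enc (mem_ntList_Z hw hq hq'), ?_⟩
    intro s hsm
    rcases List.mem_append.1 hsm with hsm | hsm
    · rcases List.mem_append.1 hsm with hsm | hsm
      · rcases List.mem_append.1 hsm with hsm | hsm
        · obtain ⟨a, -, rfl⟩ := List.mem_map.1 hsm
          exact sym_ok_ter
        · simp only [List.mem_singleton] at hsm
          subst hsm
          exact sym_ok (mem_ntList_Z hw hr' hqs)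
      · obtain ⟨a, -, rfl⟩ := List.mem_map.1 hsm
        exact sym_ok_ter
    · simp only [List.mem_singleton] at hsm
      subst hsm
      exact sym_ok (mem_ntList_Z hw hs'q hq')
  | g w hw q hq q' hq' r' hr' r'' o hs =>
    have hr'' : r'' ∈ qsList ls := stepsFrom_mem_qs hs hr'
    refine ⟨dec_enc (mem_ntList_G hw hq hq'), ?_⟩
    intro s hsm
    rcases List.mem_append.1 hsm with hsm | hsm
    · rcases List.mem_append.1 hsm with hsm | hsm
      · simp only [List.mem_singleton] at hsm
        subst hsm
        exact sym_ok (mem_ntList_Z hw hq hr')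
      · obtain ⟨a, -, rfl⟩ := List.mem_map.1 hsm
        exact sym_ok_ter
    · simp only [List.mem_singleton] at hsm
      subst hsm
      exact sym_ok (mem_ntList_N hw hr'' hq')

end Final

end Stmt12

/-- If `L` is finite, then the set of words of `L∗` NOT having permutationally unique
factorization (i.e., admitting two factorizations into elements of `L` that are not
permutations of each other) is context-free. -/
theorem stmt12 {α : Type*} (L : Language α) (h : Set.Finite (L : Set (List α))) :
    Language.IsContextFree
      {x | x ∈ L∗ ∧ ∃ l₁ l₂, IsFactorization L x l₁ ∧ IsFactorization L x l₂ ∧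
        ¬ l₁.Perm l₂} := by
  classical
  set ls := h.toFinset.toList with hlsdef
  have hls : ∀ u, u ∈ ls ↔ u ∈ L := by
    intro u
    simp [hlsdef, Set.Finite.mem_toFinset]
    exact Set.Finite.mem_toFinset h
  refine ⟨Stmt12.relabel (Stmt12.gBig ls) (Stmt12.encNT ls), ?_⟩
  rw [Stmt12.relabel_language (Stmt12.gBig ls) (Stmt12.encNT ls) (Stmt12.decNT ls)
    (Stmt12.dec_enc (by exact List.mem_cons_self)) Stmt12.relabel_ok,
    Stmt12.gBig_language hls]
  rfl
end

section
/- If L is a finite language, then ufs(L), the set of words in L* having subset-invariant factorization, is a regular language. -/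
open Computability

/-- The set of words of `L∗` having subset-invariant factorization: there is a subset
`S ⊆ L` such that every factorization of `x` into elements of `L` uses exactly the
elements of `S`. -/
def ufs {α : Type*} (L : Language α) : Language α :=
  {x | x ∈ L∗ ∧ ∃ S : Set (List α), S ⊆ L ∧
    ∀ l, IsFactorization L x l → {w | w ∈ l} = S}

namespace Stmt15Aux

variable {α : Type*}

/-- Left quotient of a language by a word. -/
def lquot (L : Language α) (x : List α) : Language α := {y | x ++ y ∈ L}

lemma mem_lquot {L : Language α} {x y : List α} : y ∈ lquot L x ↔ x ++ y ∈ L := Iff.rfl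

lemma lquot_nil (L : Language α) : lquot L [] = L := rfl

lemma lquot_lquot (L : Language α) (x y : List α) :
    lquot (lquot L x) y = lquot L (x ++ y) := by
  ext z
  show x ++ (y ++ z) ∈ L ↔ (x ++ y) ++ z ∈ L
  rw [List.append_assoc]

/-- Quotient-finiteness: the set of left quotients of `L` is finite. -/
def QF (L : Language α) : Prop := (Set.range (lquot L)).Finite

lemma lquot_mem_range {L M : Language α} (hM : M ∈ Set.range (lquot L)) (a : α) :
    lquot M [a] ∈ Set.range (lquot L) := by
  obtain ⟨x, rfl⟩ := hM
  exact ⟨x ++ [a], (lquot_lquot L x [a]).symm⟩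

/-- The Myhill–Nerode style DFA for a language. -/
def toDFA (L : Language α) : DFA α ↥(Set.range (lquot L)) where
  step q a := ⟨lquot q.1 [a], lquot_mem_range q.2 a⟩
  start := ⟨L, ⟨[], lquot_nil L⟩⟩
  accept := {q | [] ∈ q.1}

lemma toDFA_evalFrom (L : Language α) (x : List α) :
    ∀ q : ↥(Set.range (lquot L)), ((toDFA L).evalFrom q x).1 = lquot q.1 x := by
  induction x with
  | nil => intro q; rw [lquot_nil]; rfl
  | cons a x ih =>
    intro q
    have h0 : (toDFA L).evalFrom q (a :: x) = (toDFA L).evalFrom ((toDFA L).step q a) x := rfl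
    rw [h0, ih]
    show lquot (lquot q.1 [a]) x = lquot q.1 (a :: x)
    rw [lquot_lquot]
    rfl

lemma accepts_toDFA (L : Language α) : (toDFA L).accepts = L := by
  ext x
  rw [DFA.mem_accepts]
  show ((toDFA L).evalFrom (toDFA L).start x) ∈ {q : ↥(Set.range (lquot L)) | [] ∈ q.1} ↔ _
  have h1 : ((toDFA L).evalFrom (toDFA L).start x).1 = lquot L x := by
    rw [toDFA_evalFrom]; rfl
  rw [Set.mem_setOf_eq, h1, mem_lquot, List.append_nil]

lemma isRegular_of_qf {L : Language α} (h : QF L) : L.IsRegular := by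
  haveI : Fintype ↥(Set.range (lquot L)) := h.fintype
  obtain ⟨n, ⟨e⟩⟩ : ∃ n, Nonempty (↥(Set.range (lquot L)) ≃ Fin n) :=
    ⟨_, ⟨Fintype.equivFin _⟩⟩
  exact ⟨Fin n, inferInstance, (toDFA L).reindex e, by
    rw [DFA.accepts_reindex, accepts_toDFA]⟩

/-! ### Closure properties of quotient-finiteness -/

lemma qf_of_finite {L : Language α} (h : Set.Finite (L : Set (List α))) : QF L := by
  have hS : ({y : List α | ∃ w ∈ L, y <:+ w}).Finite := by
    have he : {y : List α | ∃ w ∈ L, y <:+ w} = ⋃ w ∈ L, {y | y ∈ w.tails} := by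
      ext y; simp [List.mem_tails]
    rw [he]
    exact h.biUnion fun w _ => w.tails.finite_toSet
  refine Set.Finite.subset hS.finite_subsets ?_
  rintro M ⟨x, rfl⟩
  intro y hy
  exact ⟨x ++ y, hy, x, rfl⟩

lemma qf_compl {L : Language α} (h : QF L) :
    QF ((L : Set (List α))ᶜ : Set (List α)) := by
  refine Set.Finite.subset (h.image compl) ?_
  rintro M ⟨x, rfl⟩
  exact ⟨lquot L x, ⟨x, rfl⟩, rfl⟩

lemma qf_inter {A B : Language α} (hA : QF A) (hB : QF B) :
    QF ((A ∩ B : Set (List α))) := by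
  refine Set.Finite.subset (Set.Finite.image2 (fun M N => (M ∩ N : Set (List α))) hA hB) ?_
  rintro M ⟨x, rfl⟩
  exact ⟨lquot A x, ⟨x, rfl⟩, lquot B x, ⟨x, rfl⟩, rfl⟩

lemma qf_union {A B : Language α} (hA : QF A) (hB : QF B) :
    QF ((A ∪ B : Set (List α))) := by
  refine Set.Finite.subset (Set.Finite.image2 (fun M N => (M ∪ N : Set (List α))) hA hB) ?_
  rintro M ⟨x, rfl⟩
  exact ⟨lquot A x, ⟨x, rfl⟩, lquot B x, ⟨x, rfl⟩, rfl⟩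

lemma qf_univ : QF ((Set.univ : Set (List α))) := by
  refine Set.Finite.subset (Set.finite_singleton (Set.univ : Set (List α))) ?_
  rintro M ⟨x, rfl⟩
  have : lquot (Set.univ : Set (List α)) x = (Set.univ : Set (List α)) := by
    ext y; exact ⟨fun _ => trivial, fun _ => trivial⟩
  rw [this]
  exact Set.mem_singleton _

lemma qf_empty : QF ((∅ : Set (List α))) := by
  refine Set.Finite.subset (Set.finite_singleton (∅ : Set (List α))) ?_
  rintro M ⟨x, rfl⟩
  have : lquot (∅ : Set (List α)) x = (∅ : Set (List α)) := by
    ext y; exact ⟨fun h => h, fun h => h.elim⟩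
  rw [this]
  exact Set.mem_singleton _

lemma qf_biInter {β : Type*} {s : Set β} (hs : s.Finite) {f : β → Language α}
    (hf : ∀ w ∈ s, QF (f w)) : QF ((⋂ w ∈ s, (f w : Set (List α)) : Set (List α))) := by
  refine Set.Finite.induction_on
    (motive := fun s _ => (∀ w ∈ s, QF (f w)) →
      QF ((⋂ w ∈ s, (f w : Set (List α)) : Set (List α))))
    s hs ?_ ?_ hf
  · intro _
    erw [Set.biInter_empty]
    exact qf_univ
  · intro a s _ _ ih hf'
    erw [Set.biInter_insert]
    exact qf_inter (hf' a (Set.mem_insert a s))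
      (ih fun w hw => hf' w (Set.mem_insert_of_mem a hw))

lemma qf_biUnion {β : Type*} {s : Set β} (hs : s.Finite) {f : β → Language α}
    (hf : ∀ w ∈ s, QF (f w)) : QF ((⋃ w ∈ s, (f w : Set (List α)) : Set (List α))) := by
  refine Set.Finite.induction_on
    (motive := fun s _ => (∀ w ∈ s, QF (f w)) →
      QF ((⋃ w ∈ s, (f w : Set (List α)) : Set (List α))))
    s hs ?_ ?_ hf
  · intro _
    erw [Set.biUnion_empty]
    exact qf_empty
  · intro a s _ _ ih hf'
    erw [Set.biUnion_insert]
    exact qf_union (hf' a (Set.mem_insert a s))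
      (ih fun w hw => hf' w (Set.mem_insert_of_mem a hw))

lemma lquot_mul (A B : Language α) (x : List α) :
    lquot (A * B) x =
      ((lquot A x * B : Language α) ∪
        ⋃₀ {M : Set (List α) | ∃ p s, p ++ s = x ∧ p ∈ A ∧ M = lquot B s} : Set (List α)) := by
  ext y
  constructor
  · intro hy
    rw [mem_lquot, Language.mem_mul] at hy
    obtain ⟨a, ha, b, hb, hab⟩ := hy
    rcases List.append_eq_append_iff.mp hab with ⟨a', hx, hb'⟩ | ⟨c', ha', hy'⟩
    · refine Or.inr ⟨lquot B a', ⟨a, a', hx.symm, ha, rfl⟩, ?_⟩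
      show y ∈ (lquot B a' : Language α)
      rw [mem_lquot, ← hb']; exact hb
    · refine Or.inl ?_
      rw [hy']
      exact Language.append_mem_mul (show c' ∈ lquot A x by rw [mem_lquot, ← ha']; exact ha) hb
  · rintro (hy | ⟨M, ⟨p, s, hps, hp, rfl⟩, hyM⟩)
    · change y ∈ (lquot A x * B : Language α) at hy
      show y ∈ (lquot (A * B) x : Language α)
      rw [Language.mem_mul] at hy
      obtain ⟨a, ha, b, hb, hab⟩ := hy
      rw [mem_lquot] at ha
      rw [mem_lquot, ← hab, ← List.append_assoc]
      exact Language.append_mem_mul ha hb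
    · change y ∈ (lquot B s : Language α) at hyM
      show y ∈ (lquot (A * B) x : Language α)
      rw [mem_lquot] at hyM ⊢
      rw [← hps, List.append_assoc]
      exact Language.append_mem_mul hp hyM

lemma qf_mul {A B : Language α} (hA : QF A) (hB : QF B) : QF (A * B) := by
  refine Set.Finite.subset
    (((hA.prod hB.finite_subsets).image
      (fun P : Language α × Set (Language α) =>
        ((P.1 * B : Language α) ∪ ⋃₀ (P.2 : Set (Set (List α))) : Set (List α))))) ?_
  rintro M ⟨x, rfl⟩
  refine ⟨(lquot A x, {M : Language α | ∃ p s, p ++ s = x ∧ p ∈ A ∧ M = lquot B s}),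
    ⟨⟨x, rfl⟩, ?_⟩, ?_⟩
  · rintro M ⟨p, s, _, _, rfl⟩
    exact ⟨s, rfl⟩
  · exact (lquot_mul A B x).symm

lemma append_mem_kstar {A : Language α} {u v : List α} (hu : u ∈ A∗) (hv : v ∈ A∗) :
    u ++ v ∈ A∗ := by
  rw [Language.mem_kstar] at hu hv
  obtain ⟨lu, rfl, hlu⟩ := hu
  obtain ⟨lv, rfl, hlv⟩ := hv
  rw [← List.flatten_append]
  refine Language.join_mem_kstar ?_
  intro y hy
  rcases List.mem_append.mp hy with h | h
  · exact hlu y h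
  · exact hlv y h

lemma mem_kstar_of_mem {A : Language α} {w : List α} (hw : w ∈ A) : w ∈ A∗ := by
  rw [Language.mem_kstar]
  exact ⟨[w], by simp, by simpa⟩

lemma kstar_split (A : Language α) :
    ∀ (l : List (List α)), (∀ w ∈ l, w ∈ A) → ∀ x y, l.flatten = x ++ y →
      ∃ p s t r, x = p ++ s ∧ y = t ++ r ∧ p ∈ A∗ ∧ r ∈ A∗ ∧
        (s ++ t ∈ A ∨ (s = [] ∧ t = [])) := by
  intro l
  induction l with
  | nil =>
    intro _ x y hxy
    simp only [List.flatten_nil] at hxy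
    obtain ⟨hx, hy⟩ := List.append_eq_nil_iff.mp hxy.symm
    exact ⟨[], [], [], [], by simp [hx], by simp [hy],
      Language.nil_mem_kstar A, Language.nil_mem_kstar A, Or.inr ⟨rfl, rfl⟩⟩
  | cons w l ih =>
    intro hl x y hxy
    rw [List.flatten_cons] at hxy
    rcases List.append_eq_append_iff.mp hxy with ⟨a', hx, hf⟩ | ⟨c', hw, hy⟩
    · obtain ⟨p, s, t, r, h1, h2, h3, h4, h5⟩ :=
        ih (fun v hv => hl v (List.mem_cons_of_mem w hv)) a' y hf
      refine ⟨w ++ p, s, t, r, ?_, h2, ?_, h4, h5⟩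
      · rw [hx, h1, List.append_assoc]
      · exact append_mem_kstar (mem_kstar_of_mem (hl w (List.mem_cons_self))) h3
    · refine ⟨[], x, c', l.flatten, by simp, hy, Language.nil_mem_kstar A,
        Language.join_mem_kstar (fun v hv => hl v (List.mem_cons_of_mem w hv)), ?_⟩
      exact Or.inl (by rw [← hw]; exact hl w (List.mem_cons_self))

lemma lquot_kstar (A : Language α) (x : List α) :
    lquot (A∗) x =
      ((⋃₀ {M : Set (List α) | ∃ p s, p ++ s = x ∧ p ∈ A∗ ∧ M = lquot A s * A∗}) ∪
        {y | x ∈ A∗ ∧ y ∈ A∗} : Set (List α)) := by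
  ext y
  constructor
  · intro hy
    rw [mem_lquot, Language.mem_kstar] at hy
    obtain ⟨l, hflat, hl⟩ := hy
    obtain ⟨p, s, t, r, h1, h2, h3, h4, h5⟩ := kstar_split A l hl x y hflat.symm
    rcases h5 with h5 | ⟨hs, ht⟩
    · refine Or.inl ⟨lquot A s * A∗, ⟨p, s, h1.symm, h3, rfl⟩, ?_⟩
      rw [h2]
      exact Language.append_mem_mul (show t ∈ lquot A s from h5) h4
    · refine Or.inr ⟨?_, ?_⟩
      · rw [h1, hs, List.append_nil]; exact h3
      · rw [h2, ht, List.nil_append]; exact h4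
  · rintro (⟨M, ⟨p, s, hps, hp, rfl⟩, hyM⟩ | ⟨hx, hy⟩)
    · change y ∈ (lquot A s * A∗ : Language α) at hyM
      show y ∈ (lquot (A∗) x : Language α)
      rw [Language.mem_mul] at hyM
      obtain ⟨a, ha, b, hb, hab⟩ := hyM
      rw [mem_lquot] at ha
      rw [mem_lquot, ← hps, ← hab, List.append_assoc, ← List.append_assoc s,
        ← List.append_assoc]
      exact append_mem_kstar (append_mem_kstar hp (mem_kstar_of_mem ha)) hb
    · exact append_mem_kstar hx hy

lemma qf_kstar {A : Language α} (hA : QF A) : QF (A∗) := by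
  refine Set.Finite.subset
    ((((hA.image (fun M => (M * A∗ : Language α))).finite_subsets.prod
        (Set.finite_univ (α := Prop))).image
      (fun P : Set (Language α) × Prop =>
        ((⋃₀ (P.1 : Set (Set (List α)))) ∪ {y | P.2 ∧ y ∈ A∗} : Set (List α))))) ?_
  rintro M ⟨x, rfl⟩
  refine ⟨({M : Language α | ∃ p s, p ++ s = x ∧ p ∈ A∗ ∧ M = lquot A s * A∗}, x ∈ A∗),
    ⟨?_, Set.mem_univ _⟩, ?_⟩
  · rintro M ⟨p, s, _, _, rfl⟩
    exact ⟨lquot A s, ⟨s, rfl⟩, rfl⟩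
  · exact (lquot_kstar A x).symm

/-! ### The decomposition of `ufs L` -/

/-- `L` with the word `w` removed. -/
def minus (L : Language α) (w : List α) : Language α := {v | v ∈ L ∧ v ≠ w}

lemma ufs_eq (L : Language α) :
    ufs L = ((⋃ S ∈ {S : Set (List α) | S ⊆ L},
      (((L∗ : Language α) : Set (List α)) ∩
        (⋂ w ∈ S, ((((minus L w)∗ : Language α) : Set (List α))ᶜ)) ∩
        ⋂ w ∈ ((L : Set (List α)) \ S : Set (List α)),
          ((((L∗ * ({w} : Language α)) * L∗ : Language α) : Set (List α))ᶜ))) :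
      Set (List α)) := by
  ext x
  constructor
  · rintro ⟨hx, S₀, hS₀L, hall⟩
    obtain ⟨l₀, hflat₀, hl₀⟩ := Language.mem_kstar.mp hx
    have hfac₀ : IsFactorization L x l₀ := ⟨hl₀, hflat₀.symm⟩
    have hset₀ := hall l₀ hfac₀
    refine Set.mem_biUnion (show S₀ ∈ {S : Set (List α) | S ⊆ L} from hS₀L) ?_
    refine Set.mem_inter (Set.mem_inter hx ?_) ?_
    · -- for each w ∈ S₀, x ∉ (minus L w)∗
      refine Set.mem_iInter₂.mpr fun w hw => ?_
      intro hcon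
      obtain ⟨l, hflat, hl⟩ := Language.mem_kstar.mp hcon
      have hfac : IsFactorization L x l := ⟨fun v hv => (hl v hv).1, hflat.symm⟩
      have hwl : w ∈ l := by
        have h := hall l hfac
        rw [Set.ext_iff] at h
        exact (h w).mpr (hset₀ ▸ hw)
      exact (hl w hwl).2 rfl
    · -- for each w ∈ L \ S₀, x ∉ L∗ {w} L∗
      refine Set.mem_iInter₂.mpr fun w hw => ?_
      intro hcon
      obtain ⟨ab, hab, v, hv, habv⟩ := Language.mem_mul.mp hcon
      obtain ⟨u, hu, b, hb, hub⟩ := Language.mem_mul.mp hab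
      obtain ⟨lu, hflatu, hlu⟩ := Language.mem_kstar.mp hu
      obtain ⟨lv, hflatv, hlv⟩ := Language.mem_kstar.mp hv
      have hb : b = w := hb
      subst hb
      have hfac : IsFactorization L x (lu ++ b :: lv) := by
        constructor
        · intro z hz
          rcases List.mem_append.mp hz with hh | hh
          · exact hlu z hh
          · rcases List.mem_cons.mp hh with hh | hh
            · exact hh ▸ hw.1
            · exact hlv z hh
        · rw [List.flatten_append, List.flatten_cons, ← hflatu, ← hflatv, ← habv, ← hub,
            List.append_assoc]
      have hwS : b ∈ S₀ := by
        have h := hall _ hfac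
        rw [← h]
        exact List.mem_append.mpr (Or.inr (List.mem_cons_self))
      exact hw.2 hwS
  · intro hmem
    obtain ⟨S, hSL, hmem⟩ := Set.mem_iUnion₂.mp hmem
    obtain ⟨⟨hx, h1⟩, h2⟩ := hmem
    refine ⟨hx, S, hSL, fun l hfac => ?_⟩
    apply Set.Subset.antisymm
    · intro w hw
      by_contra hwS
      have hw' : w ∈ ((L : Set (List α)) \ S : Set (List α)) := ⟨hfac.1 w hw, hwS⟩
      have hnot := Set.mem_iInter₂.mp h2 w hw'
      apply hnot
      obtain ⟨l₁, l₂, hl⟩ := List.append_of_mem hw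
      have hx1 : l₁.flatten ∈ L∗ :=
        Language.join_mem_kstar fun v hv => hfac.1 v (hl ▸ List.mem_append.mpr (Or.inl hv))
      have hx2 : l₂.flatten ∈ L∗ :=
        Language.join_mem_kstar fun v hv => hfac.1 v
          (hl ▸ List.mem_append.mpr (Or.inr (List.mem_cons_of_mem w hv)))
      have hxeq : x = (l₁.flatten ++ w) ++ l₂.flatten := by
        rw [← hfac.2, hl, List.flatten_append, List.flatten_cons, List.append_assoc]
      show x ∈ (L∗ * ({w} : Language α)) * L∗
      rw [hxeq]
      exact Language.append_mem_mul (Language.append_mem_mul hx1 rfl) hx2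
    · intro w hw
      by_contra hwl
      have hnot := Set.mem_iInter₂.mp h1 w hw
      apply hnot
      show x ∈ (minus L w)∗
      rw [← hfac.2]
      refine Language.join_mem_kstar fun v hv => ?_
      exact ⟨hfac.1 v hv, fun hvw => hwl (hvw ▸ hv)⟩

end Stmt15Aux

open Stmt15Aux in
/-- If `L` is finite, then `ufs L` is a regular language. -/
theorem stmt15 {α : Type*} (L : Language α) (h : Set.Finite (L : Set (List α))) :
    (ufs L).IsRegular := by
  apply isRegular_of_qf
  rw [ufs_eq]
  have hqL : QF L := qf_of_finite h
  have hqLs : QF (L∗) := qf_kstar hqL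
  refine qf_biUnion h.finite_subsets fun S hS => ?_
  refine qf_inter (qf_inter hqLs ?_) ?_
  · refine qf_biInter (h.subset hS) fun w _ => ?_
    refine qf_compl (qf_kstar (qf_of_finite (h.subset ?_)))
    intro v hv
    exact hv.1
  · refine qf_biInter (h.subset Set.diff_subset) fun w _ => ?_
    exact qf_compl (qf_mul (qf_mul hqLs (qf_of_finite (Set.finite_singleton w))) hqLs)
end

section
/- Suppose L is a finite language with |L| = n whose longest word has length m. If some word of L* fails to have subset-invariant factorization, then there is such a word of length at most 2m²n². -/
open Computability

namespace Stmt16Aux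

variable {α : Type*}

/-- split a flatten equation at index k -/
lemma flatten_split {l : List (List α)} {x : List α} (h : l.flatten = x) (k : ℕ) :
    (l.take k).flatten = x.take ((l.take k).flatten.length) ∧
    (l.drop k).flatten = x.drop ((l.take k).flatten.length) := by
  have hx : (l.take k).flatten ++ (l.drop k).flatten = x := by
    rw [← List.flatten_append, List.take_append_drop, h]
  constructor
  · rw [← hx, List.take_left]
  · rw [← hx, List.drop_left]

lemma sum_take_lt {l : List ℕ} (hpos : ∀ v ∈ l, 0 < v) {i j : ℕ} (hij : i < j)
    (hj : j ≤ l.length) : (l.take i).sum < (l.take j).sum := by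
  have hjj : j = i + (j - i) := by omega
  rw [hjj, List.take_add, List.sum_append]
  have hne : (List.take (j - i) (List.drop i l)) ≠ [] := by
    have : (List.take (j - i) (List.drop i l)).length = min (j - i) (l.length - i) := by
      simp [List.length_take, List.length_drop]
    intro h
    rw [h] at this
    simp at this
    omega
  have hpos' : 0 < (List.take (j - i) (List.drop i l)).sum :=
    List.sum_pos _ (fun v hv => hpos v (List.mem_of_mem_drop (List.mem_of_mem_take hv))) hne
  omega

lemma core (Lset : Set (List α)) (hfin : Lset.Finite) (n m : ℕ) (hn : Lset.ncard ≤ n)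
    (hm : ∀ w ∈ Lset, w.length ≤ m) (hnil : [] ∉ Lset)
    (x : List α) (l₂ a : List (List α))
    (h₂L : ∀ w ∈ l₂, w ∈ Lset) (h₂f : l₂.flatten = x)
    (haL : ∀ w ∈ a, w ∈ Lset) (hpre : a.flatten <+: x)
    (hlen : n * m < a.length) :
    ∃ a' l₂' : List (List α),
      (∀ w ∈ a', w ∈ a) ∧ (∀ w ∈ l₂', w ∈ l₂) ∧
      a'.flatten.length < a.flatten.length ∧
      l₂'.flatten = a'.flatten ++ x.drop a.flatten.length := by
  classical
  set p : ℕ → ℕ := fun i => ((a.take i).flatten).length with hp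
  set q : ℕ → ℕ := fun k => ((l₂.take k).flatten).length with hq
  have hq0 : q 0 = 0 := by simp [hq]
  have hqlen : q l₂.length = x.length := by
    show (l₂.take l₂.length).flatten.length = x.length
    rw [List.take_length, h₂f]
  -- strict monotonicity of p
  have hpmono : ∀ i j, i < j → j ≤ a.length → p i < p j := by
    intro i j hij hj
    simp only [hp, List.length_flatten, List.map_take]
    exact sum_take_lt (fun v hv => by
      simp only [List.mem_map] at hv
      obtain ⟨w, hw, rfl⟩ := hv
      have := haL w hw
      have : w ≠ [] := fun h => hnil (h ▸ this)
      exact List.length_pos_iff.mpr this) hij (by simpa using hj)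
  have hqsucc : ∀ k (hk : k < l₂.length), q (k + 1) = q k + (l₂[k]).length := by
    intro k hk
    have h5 : l₂.take (k+1) = l₂.take k ++ [l₂[k]] := by
      rw [List.take_succ, List.getElem?_eq_getElem hk]; rfl
    show (l₂.take (k+1)).flatten.length = (l₂.take k).flatten.length + (l₂[k]).length
    rw [h5, List.flatten_append]
    simp
  obtain ⟨f, hf⟩ : ∃ f : ℕ → ℕ, ∀ t, t < x.length →
      q (f t) ≤ t ∧ f t < l₂.length ∧ t < q (f t + 1) := by
    refine ⟨fun t => Nat.findGreatest (fun k => q k ≤ t) l₂.length, fun t ht => ?_⟩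
    have h0 : q 0 ≤ t := by rw [hq0]; exact Nat.zero_le _
    have h1 : q (Nat.findGreatest (fun k => q k ≤ t) l₂.length) ≤ t :=
      Nat.findGreatest_spec (P := fun k => q k ≤ t) (m := 0) (n := l₂.length)
        (Nat.zero_le _) h0
    have h2 : Nat.findGreatest (fun k => q k ≤ t) l₂.length < l₂.length := by
      rcases lt_or_eq_of_le (Nat.findGreatest_le (P := fun k => q k ≤ t) l₂.length) with h | h
      · exact h
      · exfalso; rw [h, hqlen] at h1; omega
    refine ⟨h1, h2, ?_⟩
    by_contra hcon
    push_neg at hcon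
    exact Nat.findGreatest_is_greatest (P := fun k => q k ≤ t) (n := l₂.length) (Nat.lt_succ_self _) (by omega) hcon
  have hf1 : ∀ t, t < x.length → q (f t) ≤ t := fun t ht => (hf t ht).1
  have hf2 : ∀ t, t < x.length → f t < l₂.length := fun t ht => (hf t ht).2.1
  have hf3 : ∀ t, t < x.length → t < q (f t + 1) := fun t ht => (hf t ht).2.2
  have hPx : a.flatten.length ≤ x.length := hpre.length_le
  have hpax : ∀ i, i < a.length → p i < x.length := by
    intro i hi
    have h1 : p i < p a.length := hpmono i a.length hi le_rfl
    have h2 : p a.length = a.flatten.length := by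
      show (a.take a.length).flatten.length = a.flatten.length
      rw [List.take_length]
    omega
  -- pigeonhole
  set φ : ℕ → List α × ℕ := fun i => (l₂.getD (f (p i)) [], p i - q (f (p i))) with hφ
  have hmaps : ∀ i ∈ Finset.range a.length, φ i ∈ hfin.toFinset ×ˢ Finset.range m := by
    intro i hi
    simp only [Finset.mem_range] at hi
    have hpi := hpax i hi
    have hki := hf2 _ hpi
    have hgd : l₂.getD (f (p i)) [] = l₂[f (p i)] := List.getD_eq_getElem l₂ [] hki
    have hmem : l₂[f (p i)] ∈ Lset := h₂L _ (List.getElem_mem hki)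
    simp only [Finset.mem_product, Finset.mem_range, hφ]
    constructor
    · rw [hgd]; exact hfin.mem_toFinset.mpr hmem
    · have h3 := hf3 _ hpi
      have h1 := hf1 _ hpi
      rw [hqsucc _ hki] at h3
      have := hm _ hmem
      omega
  have hcard : (hfin.toFinset ×ˢ Finset.range m).card < (Finset.range a.length).card := by
    rw [Finset.card_product, Finset.card_range, Finset.card_range]
    calc hfin.toFinset.card * m = Lset.ncard * m := by rw [Set.ncard_eq_toFinset_card Lset hfin]
    _ ≤ n * m := Nat.mul_le_mul_right m hn
    _ < a.length := hlen
  obtain ⟨i, hi, j, hj, hlt, hφeq⟩ : ∃ i, i < a.length ∧ ∃ j, j < a.length ∧ i < j ∧ φ i = φ j := by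
    obtain ⟨i, hi, j, hj, hij, hφeq⟩ :=
      Finset.exists_ne_map_eq_of_card_lt_of_maps_to hcard hmaps
    simp only [Finset.mem_range] at hi hj
    rcases lt_or_gt_of_ne hij with h | h
    · exact ⟨i, hi, j, hj, h, hφeq⟩
    · exact ⟨j, hj, i, hi, h, hφeq.symm⟩
  have hpi := hpax i hi
  have hpj := hpax j hj
  have hocc : ∀ k (hk : k < l₂.length), x.drop (q k) = l₂[k] ++ x.drop (q (k + 1)) := by
    intro k hk
    have hd := (flatten_split h₂f k).2
    have hd1 := (flatten_split h₂f (k + 1)).2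
    rw [List.drop_eq_getElem_cons hk, List.flatten_cons] at hd
    show x.drop ((l₂.take k).flatten.length) = l₂[k] ++ x.drop ((l₂.take (k + 1)).flatten.length)
    rw [← hd1, ← hd]
  obtain ⟨ki, kj, v, c, hpieq, hpjeq, hclt, hocci, hoccj⟩ :
      ∃ (ki kj : ℕ) (v : List α) (c : ℕ),
        p i = q ki + c ∧ p j = q kj + c ∧ c < v.length ∧
        x.drop (q ki) = v ++ x.drop (q ki + v.length) ∧
        x.drop (q kj) = v ++ x.drop (q kj + v.length) := by
    have hkil := hf2 _ hpi
    have hkjl := hf2 _ hpj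
    have hqi1 := hf1 _ hpi
    have hqj1 := hf1 _ hpj
    have h3i := hf3 _ hpi
    have h3j := hf3 _ hpj
    have hsucci := hqsucc _ hkil
    have hsuccj := hqsucc _ hkjl
    have hveq : l₂.getD (f (p i)) [] = l₂.getD (f (p j)) [] := congrArg Prod.fst hφeq
    have hceq : p i - q (f (p i)) = p j - q (f (p j)) := congrArg Prod.snd hφeq
    rw [List.getD_eq_getElem l₂ [] hkil, List.getD_eq_getElem l₂ [] hkjl] at hveq
    refine ⟨f (p i), f (p j), l₂[f (p i)], p i - q (f (p i)),
      by omega, by omega, by omega, ?_, ?_⟩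
    · have h5 := hocc _ hkil
      rwa [hsucci] at h5
    · have h5 := hocc _ hkjl
      rw [hsuccj] at h5
      rw [← hveq] at h5
      exact h5
  refine ⟨a.take i ++ a.drop j, l₂.take ki ++ l₂.drop kj,
    fun w hw => ?_, fun w hw => ?_, ?_, ?_⟩
  · rcases List.mem_append.mp hw with h | h
    · exact List.mem_of_mem_take h
    · exact List.mem_of_mem_drop h
  · rcases List.mem_append.mp hw with h | h
    · exact List.mem_of_mem_take h
    · exact List.mem_of_mem_drop h
  · -- length decrease
    have h1 : a.flatten.length = p j + (a.drop j).flatten.length := by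
      conv_lhs => rw [← List.take_append_drop j a]
      rw [List.flatten_append, List.length_append]
    have h2 : ((a.take i ++ a.drop j).flatten).length = p i + (a.drop j).flatten.length := by
      rw [List.flatten_append, List.length_append]
    have h3 := hpmono i j hlt (le_of_lt hj)
    omega
  · -- the flatten identity
    have hxP : a.flatten = x.take a.flatten.length := List.prefix_iff_eq_take.mp hpre
    have htakei : (a.take i).flatten = x.take (p i) := by
      have hpre' : (a.take i).flatten <+: x := by
        refine List.IsPrefix.trans ?_ hpre
        exact ⟨(a.drop i).flatten, by rw [← List.flatten_append, List.take_append_drop]⟩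
      exact List.prefix_iff_eq_take.mp hpre'
    have hpjle : p j ≤ a.flatten.length := by
      have h1 : a.flatten.length = p j + (a.drop j).flatten.length := by
        conv_lhs => rw [← List.take_append_drop j a]
        rw [List.flatten_append, List.length_append]
      omega
    have hdropj : (a.drop j).flatten ++ x.drop a.flatten.length = x.drop (p j) := by
      have hx2 : x = a.flatten ++ x.drop a.flatten.length := by
        conv_lhs => rw [← List.take_append_drop a.flatten.length x]
        rw [← hxP]
      conv_rhs => rw [hx2]
      rw [List.drop_append_of_le_length hpjle]
      congr 1
      conv_rhs => rw [← List.take_append_drop j a]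
      rw [List.flatten_append]
      exact List.drop_left.symm
    have hq_take : ∀ k, (l₂.take k).flatten = x.take (q k) := fun k => (flatten_split h₂f k).1
    have hq_drop : ∀ k, (l₂.drop k).flatten = x.drop (q k) := fun k => (flatten_split h₂f k).2
    rw [List.flatten_append, List.flatten_append, hq_take, hq_drop, htakei,
      List.append_assoc, hdropj, hpieq, hpjeq, List.take_add, ← List.drop_drop,
      hocci, hoccj, List.take_append_of_le_length (le_of_lt hclt),
      List.drop_append_of_le_length (le_of_lt hclt)]
    simp only [List.append_assoc]
    rw [← List.append_assoc (v.take c) (v.drop c), List.take_append_drop]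

/-- A failing triple: two factorizations of `x` over `Lset` with different factor sets. -/
def FailsOn (Lset : Set (List α)) (x : List α) (l₁ l₂ : List (List α)) : Prop :=
  (∀ w ∈ l₁, w ∈ Lset) ∧ l₁.flatten = x ∧ (∀ w ∈ l₂, w ∈ Lset) ∧ l₂.flatten = x ∧
    {w | w ∈ l₁} ≠ {w | w ∈ l₂}

lemma lenB (Lset : Set (List α)) (hfin : Lset.Finite) (n m : ℕ) (hn : Lset.ncard ≤ n)
    (hm : ∀ w ∈ Lset, w.length ≤ m) (hnil : [] ∉ Lset)
    (x : List α) (l₁ l₂ : List (List α)) (u : List α) (a b : List (List α))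
    (hF : FailsOn Lset x l₁ l₂)
    (hmin : ∀ y m₁ m₂, FailsOn Lset y m₁ m₂ → x.length ≤ y.length)
    (hdec : l₁ = a ++ u :: b) (hu2 : u ∉ l₂) : a.length ≤ n * m := by
  obtain ⟨h1L, h1f, h2L, h2f, hne⟩ := hF
  by_contra hcon
  push_neg at hcon
  have haL : ∀ w ∈ a, w ∈ Lset := fun w hw => h1L w (by rw [hdec]; exact List.mem_append_left _ hw)
  have hxeq : x = a.flatten ++ (u :: b).flatten := by
    rw [← h1f, hdec, List.flatten_append]
  have hpre : a.flatten <+: x := ⟨(u :: b).flatten, hxeq.symm⟩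
  obtain ⟨a', l₂', hmema, hmem2, hflt, hfl⟩ :=
    core Lset hfin n m hn hm hnil x l₂ a h2L h2f haL hpre hcon
  have hdropP : x.drop a.flatten.length = u ++ b.flatten := by
    rw [hxeq, List.drop_left, List.flatten_cons]
  have hF' : FailsOn Lset (a'.flatten ++ x.drop a.flatten.length) (a' ++ u :: b) l₂' := by
    refine ⟨?_, ?_, fun w hw => h2L w (hmem2 w hw), hfl, ?_⟩
    · intro w hw
      rcases List.mem_append.mp hw with h | h
      · exact haL w (hmema w h)
      · exact h1L w (by rw [hdec]; exact List.mem_append_right _ h)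
    · rw [List.flatten_append, List.flatten_cons, hdropP]
    · intro heq
      have hu1 : u ∈ {w | w ∈ a' ++ u :: b} := by
        simp only [Set.mem_setOf_eq, List.mem_append, List.mem_cons]
        tauto
      rw [heq] at hu1
      exact hu2 (hmem2 u hu1)
  have hlen := hmin _ _ _ hF'
  rw [List.length_append, List.length_drop] at hlen
  have hPx : a.flatten.length ≤ x.length := hpre.length_le
  omega

lemma mem_revmap (l : List (List α)) (w : List α) :
    w ∈ (l.map List.reverse).reverse ↔ w.reverse ∈ l := by
  rw [List.mem_reverse, List.mem_map]
  constructor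
  · rintro ⟨t, ht, rfl⟩
    simpa using ht
  · intro h
    exact ⟨w.reverse, h, by simp⟩

lemma fails_reverse (Lset : Set (List α)) (x : List α) (l₁ l₂ : List (List α))
    (h : FailsOn Lset x l₁ l₂) :
    FailsOn (List.reverse '' Lset) x.reverse
      ((l₁.map List.reverse).reverse) ((l₂.map List.reverse).reverse) := by
  obtain ⟨h1L, h1f, h2L, h2f, hne⟩ := h
  refine ⟨?_, ?_, ?_, ?_, ?_⟩
  · intro w hw
    exact ⟨w.reverse, h1L _ ((mem_revmap l₁ w).mp hw), by simp⟩
  · rw [← List.reverse_flatten, h1f]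
  · intro w hw
    exact ⟨w.reverse, h2L _ ((mem_revmap l₂ w).mp hw), by simp⟩
  · rw [← List.reverse_flatten, h2f]
  · intro heq
    apply hne
    ext w
    have h1 : w ∈ l₁ ↔ w.reverse ∈ (l₁.map List.reverse).reverse := by
      rw [mem_revmap]; simp
    have h2 : w ∈ l₂ ↔ w.reverse ∈ (l₂.map List.reverse).reverse := by
      rw [mem_revmap]; simp
    simp only [Set.mem_setOf_eq]
    rw [h1, h2]
    have h3 := Set.ext_iff.mp heq w.reverse
    simpa using h3

lemma flatten_len_le (l : List (List α)) (m : ℕ) (h : ∀ w ∈ l, w.length ≤ m) :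
    l.flatten.length ≤ l.length * m := by
  rw [List.length_flatten]
  have := List.sum_le_card_nsmul (l.map List.length) m (by
    intro v hv
    simp only [List.mem_map] at hv
    obtain ⟨w, hw, rfl⟩ := hv
    exact h w hw)
  simpa [smul_eq_mul] using this

lemma final_bound (Lset : Set (List α)) (hfin : Lset.Finite) (n m : ℕ)
    (hn : Lset.ncard = n) (hm : ∀ w ∈ Lset, w.length ≤ m) (hnil : [] ∉ Lset)
    (hm1 : 1 ≤ m)
    (x : List α) (l₁ l₂ : List (List α)) (u : List α)
    (hF : FailsOn Lset x l₁ l₂)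
    (hmin : ∀ y m₁ m₂, FailsOn Lset y m₁ m₂ → x.length ≤ y.length)
    (hu1 : u ∈ l₁) (hu2 : u ∉ l₂) : x.length ≤ 2 * m ^ 2 * n ^ 2 := by
  obtain ⟨a, b, hdec⟩ := List.append_of_mem hu1
  have huL : u ∈ Lset := hF.1 u hu1
  -- n ≥ 2
  have hn2 : 2 ≤ n := by
    by_contra hcon
    push_neg at hcon
    interval_cases n
    · have h4 : Lset.Nonempty := ⟨u, huL⟩
      have h5 := (Set.ncard_pos hfin).mpr h4
      omega
    · obtain ⟨w, hw⟩ := Set.ncard_eq_one.mp hn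
      have huw : u = w := by have := huL; rw [hw] at this; exact this
      rcases List.eq_nil_or_concat l₂ with h | _
      · -- l₂ = [], so x = []
        have hx0 : x = [] := by rw [← hF.2.2.2.1, h]; rfl
        have : u = [] := by
          have h1f := hF.2.1
          rw [hx0] at h1f
          exact List.flatten_eq_nil_iff.mp h1f u hu1
        exact hnil (this ▸ huL)
      · obtain ⟨l₂', w', rfl⟩ := ‹∃ _, _›
        have : w' ∈ Lset := hF.2.2.1 w' (by simp)
        rw [hw] at this
        apply hu2
        rw [huw, ← Set.mem_singleton_iff.mp this]
        simp
  -- prefix bound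
  have ha : a.length ≤ n * m :=
    lenB Lset hfin n m (le_of_eq hn) hm hnil x l₁ l₂ u a b hF hmin hdec hu2
  -- suffix bound via reversal
  have hb : b.length ≤ n * m := by
    set Lset' := List.reverse '' Lset with hL'
    have hfin' : Lset'.Finite := hfin.image _
    have hn' : Lset'.ncard ≤ n := le_of_eq_of_le (by rfl) (hn ▸ Set.ncard_image_le hfin)
    have hm' : ∀ w ∈ Lset', w.length ≤ m := by
      rintro w ⟨t, ht, rfl⟩
      simpa using hm t ht
    have hnil' : [] ∉ Lset' := by
      rintro ⟨t, ht, hte⟩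
      have : t = [] := by simpa using hte
      exact hnil (this ▸ ht)
    have hF' := fails_reverse Lset x l₁ l₂ hF
    have hLrr : List.reverse '' Lset' = Lset := by
      rw [hL', Set.image_image]
      simp
    have hmin' : ∀ y m₁ m₂, FailsOn Lset' y m₁ m₂ → x.reverse.length ≤ y.length := by
      intro y m₁ m₂ h
      have := fails_reverse Lset' y m₁ m₂ h
      rw [hLrr] at this
      have := hmin _ _ _ this
      simpa using this
    have hdec' : (l₁.map List.reverse).reverse =
        (b.map List.reverse).reverse ++ u.reverse :: (a.map List.reverse).reverse := by
      rw [hdec]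
      simp
    have hu2' : u.reverse ∉ (l₂.map List.reverse).reverse := by
      rw [mem_revmap]
      simpa using hu2
    have := lenB Lset' hfin' n m hn' hm' hnil' x.reverse
      ((l₁.map List.reverse).reverse) ((l₂.map List.reverse).reverse) u.reverse
      ((b.map List.reverse).reverse) ((a.map List.reverse).reverse)
      hF' hmin' hdec' hu2'
    simpa using this
  -- assemble
  have hxlen : x.length = a.flatten.length + u.length + b.flatten.length := by
    rw [← hF.2.1, hdec, List.flatten_append, List.flatten_cons]
    simp only [List.length_append]
    omega
  have hau : a.flatten.length ≤ a.length * m :=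
    flatten_len_le a m (fun w hw => hm w (hF.1 w (by rw [hdec]; exact List.mem_append_left _ hw)))
  have hbu : b.flatten.length ≤ b.length * m :=
    flatten_len_le b m (fun w hw => hm w (hF.1 w (by rw [hdec]; simp [hw])))
  have hum : u.length ≤ m := hm u huL
  have : x.length ≤ n * m * m + m + n * m * m := by
    have h1 : a.flatten.length ≤ n * m * m := le_trans hau (Nat.mul_le_mul_right m ha)
    have h2 : b.flatten.length ≤ n * m * m := le_trans hbu (Nat.mul_le_mul_right m hb)
    omega
  nlinarith [hn2, hm1]

end Stmt16Aux

open Stmt16Aux in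
/-- If `L` is a finite language with `n` words whose longest word has length `m`, and
some word of `L∗` fails to have subset-invariant factorization (i.e., has two
factorizations into elements of `L` using different sets of distinct factors), then
there is such a word of length at most `2m²n²`. -/
theorem stmt16 {α : Type*} (L : Language α) (n m : ℕ)
    (hfin : Set.Finite (L : Set (List α))) (hn : Set.ncard (L : Set (List α)) = n)
    (hm : ∀ w ∈ L, w.length ≤ m) (hm' : ∃ w ∈ L, w.length = m)
    (hx : ∃ x l₁ l₂, IsFactorization L x l₁ ∧ IsFactorization L x l₂ ∧
      {w | w ∈ l₁} ≠ {w | w ∈ l₂}) :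
    ∃ x l₁ l₂, IsFactorization L x l₁ ∧ IsFactorization L x l₂ ∧
      {w | w ∈ l₁} ≠ {w | w ∈ l₂} ∧ x.length ≤ 2 * m ^ 2 * n ^ 2 := by
  classical
  by_cases hnil : ([] : List α) ∈ L
  · refine ⟨[], [], [[]], ⟨by simp, rfl⟩, ⟨by simpa using hnil, rfl⟩, ?_, by simp⟩
    intro h
    have : ([] : List α) ∈ {w : List α | w ∈ [[]]} := by simp
    rw [← h] at this
    simp at this
  · set Lset : Set (List α) := (L : Set (List α)) with hLs
    have hm1 : 1 ≤ m := by
      obtain ⟨w, hw, hwm⟩ := hm'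
      rcases Nat.eq_zero_or_pos m with h | h
      · exfalso
        apply hnil
        have : w = [] := List.length_eq_zero_iff.mp (by omega)
        exact this ▸ hw
      · exact h
    obtain ⟨x₀, l₁₀, l₂₀, h₁₀, h₂₀, hne₀⟩ := hx
    have hSne : ∃ k, ∃ y m₁ m₂, FailsOn Lset y m₁ m₂ ∧ y.length = k :=
      ⟨x₀.length, x₀, l₁₀, l₂₀, ⟨h₁₀.1, h₁₀.2, h₂₀.1, h₂₀.2, hne₀⟩, rfl⟩
    obtain ⟨x, l₁, l₂, hF, hk⟩ := Nat.sInf_mem hSne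
    have hmin : ∀ y m₁ m₂, FailsOn Lset y m₁ m₂ → x.length ≤ y.length := by
      intro y m₁ m₂ h
      rw [hk]
      exact Nat.sInf_le ⟨y, m₁, m₂, h, rfl⟩
    have hbound : x.length ≤ 2 * m ^ 2 * n ^ 2 := by
      have hneS := hF.2.2.2.2
      have : ∃ u, ¬ (u ∈ l₁ ↔ u ∈ l₂) := by
        by_contra hcon
        push_neg at hcon
        exact hneS (Set.ext fun w => by
          simp only [Set.mem_setOf_eq]
          have := hcon w
          tauto)
      obtain ⟨u, hu⟩ := this
      by_cases hu1 : u ∈ l₁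
      · have hu2 : u ∉ l₂ := fun h => hu ⟨fun _ => h, fun _ => hu1⟩
        exact final_bound Lset hfin n m hn hm hnil hm1 x l₁ l₂ u hF hmin hu1 hu2
      · have hu2 : u ∈ l₂ := by tauto
        have hFswap : FailsOn Lset x l₂ l₁ :=
          ⟨hF.2.2.1, hF.2.2.2.1, hF.1, hF.2.1, Ne.symm hF.2.2.2.2⟩
        exact final_bound Lset hfin n m hn hm hnil hm1 x l₂ l₁ u hFswap hmin hu2 hu1
    exact ⟨x, l₁, l₂, ⟨hF.1, hF.2.1⟩, ⟨hF.2.2.1, hF.2.2.2.1⟩, hF.2.2.2.2, hbound⟩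
end
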